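/- arXiv:2402.00506 — 6 statements merged into one kernel-verified Lean document; each statement's English description precedes it below -/
import Mathlib

section
/- Let $\mathscr{D}$ be a dyadic lattice and $\mathcal{S} \subset \mathscr{D}$ a $\frac{7}{8}$-sparse family of cubes. Let $\varphi$ be a non-negative locally integrable function on $\mathbb{R}^d$ and $\gamma > 0$. Define $F := \{Q \in \mathcal{S} : \gamma \le \frac{1}{|Q|}\int_Q \varphi \le 4\gamma\}$. Then there exist pairwise disjoint subsets $G_Q \subset Q$ for $Q \in F$ such that for all $Q \in F$, $\int_Q \varphi \le 8 \int_{G_Q} \varphi$. -/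
open MeasureTheory ENNReal Set

noncomputable section

/-- Euclidean space `ℝ^d` as a pi type (with Lebesgue measure `volume`). -/
abbrev Rd (d : ℕ) := Fin d → ℝ

/-- A (half-open, axis-parallel) cube in `ℝ^d`. -/
def IsCube {d : ℕ} (Q : Set (Rd d)) : Prop :=
  ∃ (a : Rd d) (l : ℝ), 0 < l ∧ Q = Set.univ.pi fun i => Set.Ico (a i) (a i + l)

/-- The dyadic subcubes of the cube with lower-left corner `a` and sidelength `l`
(obtained by repeated subdivision into `2^d` congruent subcubes). -/
def dyadicSubcubesOf {d : ℕ} (a : Rd d) (l : ℝ) : Set (Set (Rd d)) :=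
  {R | ∃ (k : ℕ) (m : Fin d → ℕ), (∀ i, m i < 2 ^ k) ∧
    R = Set.univ.pi fun i => Set.Ico (a i + l * m i / 2 ^ k) (a i + l * (m i + 1) / 2 ^ k)}

/-- An `η`-sparse family of cubes: for each `Q` in the family, the union of its proper
subcubes belonging to the family has measure at most `(1 - η)|Q|`. -/
def IsSparse {d : ℕ} (η : ℝ) (S : Set (Set (Rd d))) : Prop :=
  ∀ Q ∈ S, volume (⋃ Q' ∈ {Q' ∈ S | Q' ⊂ Q}, Q') ≤ ENNReal.ofReal (1 - η) * volume Q

/-- A dyadic lattice in `ℝ^d`. -/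
structure DyadicLattice (d : ℕ) where
  cubes : Set (Set (Rd d))
  isCube : ∀ Q ∈ cubes, IsCube Q
  descendants_mem : ∀ (a : Rd d) (l : ℝ), 0 < l →
    (Set.univ.pi fun i => Set.Ico (a i) (a i + l)) ∈ cubes →
    dyadicSubcubesOf a l ⊆ cubes
  common_ancestor : ∀ Q ∈ cubes, ∀ Q' ∈ cubes, ∃ (a : Rd d) (l : ℝ), 0 < l ∧
    (Set.univ.pi fun i => Set.Ico (a i) (a i + l)) ∈ cubes ∧
    Q ∈ dyadicSubcubesOf a l ∧ Q' ∈ dyadicSubcubesOf a l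
  covers_compact : ∀ K : Set (Rd d), IsCompact K → ∃ Q ∈ cubes, K ⊆ Q

/-- A weight: a measurable, (a.e.) positive function. -/
def IsWeightOn {X : Type*} [MeasurableSpace X] (w : X → ℝ) : Prop :=
  Measurable w ∧ ∀ x, 0 < w x

/-- `A ≥ [w]_{A_p}`: the Muckenhoupt `A_p` characteristic of `w` is at most `A`. -/
def ApBound {d : ℕ} (p : ℝ) (w : Rd d → ℝ) (A : ℝ) : Prop :=
  ∀ Q : Set (Rd d), IsCube Q →
    (⨍ x in Q, w x) * (⨍ x in Q, w x ^ (-(1 / (p - 1)))) ^ (p - 1) ≤ A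

/-- The weak `L^p` quasinorm of a real-valued function w.r.t. a measure `μ`. -/
def weakNorm {X : Type*} [MeasurableSpace X] (μ : Measure X) (p : ℝ) (f : X → ℝ) : ℝ≥0∞ :=
  ⨆ (α : ℝ) (_ : 0 < α), ENNReal.ofReal α * μ {x | α < |f x|} ^ (1 / p)

/-- The weak `L^p` quasinorm of an `ℝ≥0∞`-valued function w.r.t. a measure `μ`. -/
def weakNormE {X : Type*} [MeasurableSpace X] (μ : Measure X) (p : ℝ) (g : X → ℝ≥0∞) : ℝ≥0∞ :=
  ⨆ (α : ℝ) (_ : 0 < α), ENNReal.ofReal α * μ {x | ENNReal.ofReal α < g x} ^ (1 / p)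

section auxLemmas

variable {d : ℕ}

lemma mem_dyadic_iff (a : Rd d) {l : ℝ} (hl : 0 < l) (k : ℕ) (m : Fin d → ℕ) (x : Rd d) :
    x ∈ (Set.univ.pi fun i => Set.Ico (a i + l * m i / 2 ^ k) (a i + l * (m i + 1) / 2 ^ k)) ↔
    ∀ i, l * m i ≤ (x i - a i) * 2 ^ k ∧ (x i - a i) * 2 ^ k < l * (m i + 1) := by
  have h2k : (0:ℝ) < 2 ^ k := by positivity
  simp only [Set.mem_pi, Set.mem_univ, forall_true_left, Set.mem_Ico]
  refine forall_congr' fun i => ?_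
  constructor
  · rintro ⟨h1, h2⟩
    refine ⟨(div_le_iff₀ h2k).mp (by linarith), (lt_div_iff₀ h2k).mp (by linarith)⟩
  · rintro ⟨h1, h2⟩
    have e1 := (div_le_iff₀ h2k).mpr h1
    have e2 := (lt_div_iff₀ h2k).mpr h2
    exact ⟨by linarith, by linarith⟩

lemma dyadic_step {l : ℝ} (hl : 0 < l) {k k' : ℕ} (hkk : k ≤ k') {m m' : ℕ} {s : ℝ}
    (h1 : l * m ≤ s * 2 ^ k) (h2 : s * 2 ^ k < l * (m + 1))
    (h3 : l * m' ≤ s * 2 ^ k') (h4 : s * 2 ^ k' < l * (m' + 1)) :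
    ∀ u : ℝ, l * m' ≤ u * 2 ^ k' → u * 2 ^ k' < l * (m' + 1) →
      l * m ≤ u * 2 ^ k ∧ u * 2 ^ k < l * (m + 1) := by
  intro u hu1 hu2
  set j := k' - k with hj
  have hkj : k' = k + j := by omega
  have h2j : (0:ℝ) < 2 ^ j := by positivity
  have hs' : s * 2 ^ k' = s * 2 ^ k * 2 ^ j := by rw [hkj, pow_add]; ring
  have hu' : u * 2 ^ k' = u * 2 ^ k * 2 ^ j := by rw [hkj, pow_add]; ring
  have hA : l * ((m:ℝ) * 2 ^ j) < l * (m' + 1) := by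
    have h := mul_le_mul_of_nonneg_right h1 h2j.le
    calc l * ((m:ℝ) * 2 ^ j) = l * m * 2 ^ j := by ring
      _ ≤ s * 2 ^ k * 2 ^ j := h
      _ = s * 2 ^ k' := hs'.symm
      _ < l * (m' + 1) := h4
  have hrA : (m:ℝ) * 2 ^ j < (m':ℝ) + 1 := lt_of_mul_lt_mul_left hA hl.le
  have hn1 : m * 2 ^ j ≤ m' := by
    have h' : ((m * 2 ^ j : ℕ) : ℝ) < ((m' + 1 : ℕ) : ℝ) := by push_cast; linarith
    have := Nat.cast_lt.mp h'
    omega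
  have hB : l * (m':ℝ) < l * ((m + 1) * 2 ^ j) := by
    have h := mul_lt_mul_of_pos_right h2 h2j
    calc l * (m':ℝ) ≤ s * 2 ^ k' := h3
      _ = s * 2 ^ k * 2 ^ j := hs'
      _ < l * (m + 1) * 2 ^ j := h
      _ = l * ((m + 1) * 2 ^ j) := by ring
  have hrB : (m':ℝ) < ((m:ℝ) + 1) * 2 ^ j := lt_of_mul_lt_mul_left hB hl.le
  have hn2 : m' + 1 ≤ (m + 1) * 2 ^ j := by
    have h' : ((m' : ℕ) : ℝ) < (((m + 1) * 2 ^ j : ℕ) : ℝ) := by push_cast; linarith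
    have := Nat.cast_lt.mp h'
    omega
  have hr1 : (m:ℝ) * 2 ^ j ≤ (m':ℝ) := by exact_mod_cast Nat.cast_le.mpr hn1
  have hr2 : (m':ℝ) + 1 ≤ ((m:ℝ) + 1) * 2 ^ j := by
    have h' := (Nat.cast_le (α := ℝ)).mpr hn2
    push_cast at h'
    linarith
  constructor
  · have c1 : l * (m:ℝ) * 2 ^ j ≤ u * 2 ^ k * 2 ^ j := by
      calc l * (m:ℝ) * 2 ^ j = l * ((m:ℝ) * 2 ^ j) := by ring
        _ ≤ l * (m':ℝ) := mul_le_mul_of_nonneg_left hr1 hl.le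
        _ ≤ u * 2 ^ k' := hu1
        _ = u * 2 ^ k * 2 ^ j := hu'
    exact le_of_mul_le_mul_right c1 h2j
  · have c2 : u * 2 ^ k * 2 ^ j < l * ((m:ℝ) + 1) * 2 ^ j := by
      calc u * 2 ^ k * 2 ^ j = u * 2 ^ k' := hu'.symm
        _ < l * ((m':ℝ) + 1) := hu2
        _ ≤ l * (((m:ℝ) + 1) * 2 ^ j) := mul_le_mul_of_nonneg_left hr2 hl.le
        _ = l * ((m:ℝ) + 1) * 2 ^ j := by ring
    exact lt_of_mul_lt_mul_right c2 h2j.le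

lemma dyadic_nonempty (a : Rd d) {l : ℝ} (hl : 0 < l) {R : Set (Rd d)}
    (hR : R ∈ dyadicSubcubesOf a l) : R.Nonempty := by
  obtain ⟨k, m, -, rfl⟩ := hR
  have h2k : (0:ℝ) < 2 ^ k := by positivity
  refine ⟨fun i => a i + l * m i / 2 ^ k, fun i _ => ⟨le_refl _, ?_⟩⟩
  have h : l * (m i : ℝ) / 2 ^ k < l * ((m i : ℝ) + 1) / 2 ^ k := by
    apply div_lt_div_of_pos_right ?_ h2k
    nlinarith
  linarith

lemma dyadic_subset_of_le_of_mem (a : Rd d) {l : ℝ} (hl : 0 < l) {k k' : ℕ} (hkk : k ≤ k')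
    {m : Fin d → ℕ} {m' : Fin d → ℕ} {x : Rd d}
    (hx1 : x ∈ (Set.univ.pi fun i => Set.Ico (a i + l * m i / 2 ^ k) (a i + l * (m i + 1) / 2 ^ k)))
    (hx2 : x ∈ (Set.univ.pi fun i => Set.Ico (a i + l * m' i / 2 ^ k') (a i + l * (m' i + 1) / 2 ^ k'))) :
    (Set.univ.pi fun i => Set.Ico (a i + l * m' i / 2 ^ k') (a i + l * (m' i + 1) / 2 ^ k')) ⊆
      (Set.univ.pi fun i => Set.Ico (a i + l * m i / 2 ^ k) (a i + l * (m i + 1) / 2 ^ k)) := by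
  rw [mem_dyadic_iff a hl] at hx1 hx2
  intro y hy
  rw [mem_dyadic_iff a hl] at hy ⊢
  intro i
  exact dyadic_step hl hkk (hx1 i).1 (hx1 i).2 (hx2 i).1 (hx2 i).2 _ (hy i).1 (hy i).2

lemma dyadic_nested_or_disjoint (a : Rd d) {l : ℝ} (hl : 0 < l)
    {R R' : Set (Rd d)} (hR : R ∈ dyadicSubcubesOf a l) (hR' : R' ∈ dyadicSubcubesOf a l) :
    R ⊆ R' ∨ R' ⊆ R ∨ Disjoint R R' := by
  obtain ⟨k, m, -, rfl⟩ := hR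
  obtain ⟨k', m', -, rfl⟩ := hR'
  by_cases hdis : Disjoint (Set.univ.pi fun i => Set.Ico (a i + l * m i / 2 ^ k) (a i + l * (m i + 1) / 2 ^ k))
      (Set.univ.pi fun i => Set.Ico (a i + l * m' i / 2 ^ k') (a i + l * (m' i + 1) / 2 ^ k'))
  · exact Or.inr (Or.inr hdis)
  obtain ⟨x, hx1, hx2⟩ := Set.not_disjoint_iff.mp hdis
  rw [mem_dyadic_iff a hl] at hx1 hx2
  rcases le_total k k' with hkk | hkk
  · refine Or.inr (Or.inl ?_)
    intro y hy
    rw [mem_dyadic_iff a hl] at hy ⊢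
    intro i
    exact dyadic_step hl hkk (hx1 i).1 (hx1 i).2 (hx2 i).1 (hx2 i).2 _ (hy i).1 (hy i).2
  · refine Or.inl ?_
    intro y hy
    rw [mem_dyadic_iff a hl] at hy ⊢
    intro i
    exact dyadic_step hl hkk (hx2 i).1 (hx2 i).2 (hx1 i).1 (hx1 i).2 _ (hy i).1 (hy i).2

lemma dyadic_volume (a : Rd d) {l : ℝ} (hl : 0 < l) (k : ℕ) (m : Fin d → ℕ) :
    volume (Set.univ.pi fun i => Set.Ico (a i + l * m i / 2 ^ k) (a i + l * (m i + 1) / 2 ^ k)) =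
      ENNReal.ofReal ((l / 2 ^ k) ^ d) := by
  have h2k : (0:ℝ) < 2 ^ k := by positivity
  rw [volume_pi_pi]
  have : ∀ i : Fin d, volume (Set.Ico (a i + l * m i / 2 ^ k) (a i + l * (m i + 1) / 2 ^ k))
      = ENNReal.ofReal (l / 2 ^ k) := by
    intro i
    rw [Real.volume_Ico]
    congr 1
    field_simp
    ring
  simp only [this, Finset.prod_const, Finset.card_univ, Fintype.card_fin]
  rw [← ENNReal.ofReal_pow (by positivity)]

lemma cube_volume (a : Rd d) {l : ℝ} (hl : 0 < l) :
    volume (Set.univ.pi fun i => Set.Ico (a i) (a i + l)) = ENNReal.ofReal (l ^ d) := by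
  rw [volume_pi_pi]
  have : ∀ i : Fin d, volume (Set.Ico (a i) (a i + l)) = ENNReal.ofReal l := by
    intro i; rw [Real.volume_Ico]; congr 1; ring
  simp only [this, Finset.prod_const, Finset.card_univ, Fintype.card_fin]
  rw [← ENNReal.ofReal_pow hl.le]

lemma isCube_volume_pos {Q : Set (Rd d)} (hQ : IsCube Q) : 0 < volume Q := by
  obtain ⟨a, l, hl, rfl⟩ := hQ
  rw [cube_volume a hl]
  exact ENNReal.ofReal_pos.mpr (by positivity)

lemma isCube_volume_lt_top {Q : Set (Rd d)} (hQ : IsCube Q) : volume Q < ⊤ := by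
  obtain ⟨a, l, hl, rfl⟩ := hQ
  rw [cube_volume a hl]
  exact ENNReal.ofReal_lt_top

lemma isCube_measurableSet {Q : Set (Rd d)} (hQ : IsCube Q) : MeasurableSet Q := by
  obtain ⟨a, l, hl, rfl⟩ := hQ
  exact MeasurableSet.univ_pi fun i => measurableSet_Ico

lemma dyadic_ssubset_volume (a : Rd d) {l : ℝ} (hl : 0 < l)
    {R R' : Set (Rd d)} (hR : R ∈ dyadicSubcubesOf a l) (hR' : R' ∈ dyadicSubcubesOf a l)
    (hss : R' ⊂ R) : volume R' ≤ volume R / 2 := by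
  obtain ⟨k, m, hm, rfl⟩ := hR
  obtain ⟨k', m', hm', rfl⟩ := hR'
  -- d ≥ 1
  obtain ⟨y, hy⟩ := dyadic_nonempty a hl ⟨k', m', hm', rfl⟩
  obtain ⟨x, hxR, hxR'⟩ := Set.exists_of_ssubset hss
  have hd : d ≠ 0 := by
    rintro rfl
    exact hxR' (by have : x = y := Subsingleton.elim x y; rw [this] at hxR ⊢; exact hy)
  -- k < k'
  have hkk : k < k' := by
    by_contra hc
    push_neg at hc
    have hsub := dyadic_subset_of_le_of_mem a hl hc hy (hss.1 hy)
    exact hss.ne (hss.1.antisymm hsub)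
  have h2k : (0:ℝ) < 2 ^ k := by positivity
  have h2k' : (0:ℝ) < 2 ^ k' := by positivity
  rw [dyadic_volume a hl, dyadic_volume a hl]
  have hle : (l / 2 ^ k') ^ d ≤ (l / 2 ^ k) ^ d / 2 := by
    have h1 : l / 2 ^ k' ≤ (l / 2 ^ k) / 2 := by
      rw [div_div, ← pow_succ]
      apply div_le_div_of_nonneg_left hl.le (by positivity)
      exact pow_le_pow_right₀ (by norm_num) hkk
    calc (l / 2 ^ k') ^ d ≤ ((l / 2 ^ k) / 2) ^ d := by
          apply pow_le_pow_left₀ (by positivity) h1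
      _ = (l / 2 ^ k) ^ d / 2 ^ d := by rw [div_pow]
      _ ≤ (l / 2 ^ k) ^ d / 2 := by
          apply div_le_div_of_nonneg_left (by positivity) (by norm_num)
          calc (2:ℝ) = 2 ^ 1 := (pow_one 2).symm
            _ ≤ 2 ^ d := pow_le_pow_right₀ (by norm_num) (by omega)
  calc ENNReal.ofReal ((l / 2 ^ k') ^ d) ≤ ENNReal.ofReal ((l / 2 ^ k) ^ d / 2) :=
        ENNReal.ofReal_le_ofReal hle
    _ = ENNReal.ofReal ((l / 2 ^ k) ^ d) / 2 := by
        rw [ENNReal.ofReal_div_of_pos (by norm_num)]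
        norm_num

variable {𝒟 : DyadicLattice d}

lemma lattice_nested_or_disjoint {Q Q' : Set (Rd d)} (hQ : Q ∈ 𝒟.cubes) (hQ' : Q' ∈ 𝒟.cubes) :
    Q ⊆ Q' ∨ Q' ⊆ Q ∨ Disjoint Q Q' := by
  obtain ⟨a, l, hl, -, h1, h2⟩ := 𝒟.common_ancestor Q hQ Q' hQ'
  exact dyadic_nested_or_disjoint a hl h1 h2

lemma lattice_ssubset_volume {Q Q' : Set (Rd d)} (hQ : Q ∈ 𝒟.cubes) (hQ' : Q' ∈ 𝒟.cubes)
    (hss : Q' ⊂ Q) : volume Q' ≤ volume Q / 2 := by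
  obtain ⟨a, l, hl, -, h1, h2⟩ := 𝒟.common_ancestor Q hQ Q' hQ'
  exact dyadic_ssubset_volume a hl h1 h2 hss

/-- Maximal proper subcubes of `Q` belonging to `F`. -/
def maxSub (F : Set (Set (Rd d))) (Q : Set (Rd d)) : Set (Set (Rd d)) :=
  {R | (R ∈ F ∧ R ⊂ Q) ∧ ∀ R' ∈ F, R' ⊂ Q → R ⊆ R' → R = R'}

lemma exists_maximal (𝒟 : DyadicLattice d) {F : Set (Set (Rd d))} (hF : F ⊆ 𝒟.cubes)
    {Q Q' : Set (Rd d)} (hQcube : IsCube Q) (hQ' : Q' ∈ F) (hss : Q' ⊂ Q) :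
    ∃ R ∈ maxSub F Q, Q' ⊆ R := by
  set C : Set (Set (Rd d)) := {R | R ∈ F ∧ R ⊂ Q ∧ Q' ⊆ R} with hC
  have hQ'C : Q' ∈ C := ⟨hQ', hss, subset_rfl⟩
  set v : ℝ≥0∞ := ⨆ R : C, volume (R : Set (Rd d)) with hv
  have hvQ : v ≤ volume Q := iSup_le fun R => measure_mono R.2.2.1.1
  have hvt : v ≠ ⊤ := (lt_of_le_of_lt hvQ (isCube_volume_lt_top hQcube)).ne
  have hv0 : v ≠ 0 := by
    have h1 : 0 < volume Q' := isCube_volume_pos (𝒟.isCube _ (hF hQ'))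
    have h2 : volume Q' ≤ v := le_iSup (fun R : C => volume (R : Set (Rd d))) ⟨Q', hQ'C⟩
    exact (lt_of_lt_of_le h1 h2).ne'
  have hhalf : v / 2 < v := ENNReal.half_lt_self hv0 hvt
  rw [hv, lt_iSup_iff] at hhalf
  obtain ⟨⟨R, hRF, hRQ, hQ'R⟩, hvR⟩ := hhalf
  refine ⟨R, ⟨⟨hRF, hRQ⟩, ?_⟩, hQ'R⟩
  intro R' hR'F hR'Q hsub
  by_contra hne
  have hRR' : R ⊂ R' := ssubset_of_subset_of_ne hsub hne
  have h1 : volume R ≤ volume R' / 2 := lattice_ssubset_volume (hF hR'F) (hF hRF) hRR'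
  have hR'C : R' ∈ C := ⟨hR'F, hR'Q, hQ'R.trans hsub⟩
  have h2 : volume R' ≤ v := le_iSup (fun R : C => volume (R : Set (Rd d))) ⟨R', hR'C⟩
  have h3 : volume R' / 2 ≤ v / 2 := ENNReal.div_le_div_right h2 2
  exact absurd (h1.trans h3) (not_le.mpr hvR)

lemma maxSub_pairwiseDisjoint {F : Set (Set (Rd d))} (hF : F ⊆ 𝒟.cubes) (Q : Set (Rd d)) :
    (maxSub F Q).PairwiseDisjoint id := by
  intro R1 h1 R2 h2 hne
  rcases lattice_nested_or_disjoint (hF h1.1.1) (hF h2.1.1) with h | h | h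
  · exact absurd (h1.2 R2 h2.1.1 h2.1.2 h) hne
  · exact absurd (h2.2 R1 h1.1.1 h1.1.2 h).symm hne
  · exact h

lemma maxSub_countable {F : Set (Set (Rd d))} (hF : F ⊆ 𝒟.cubes) (Q : Set (Rd d)) :
    (maxSub F Q).Countable := by
  have hd : Pairwise (Function.onFun Disjoint fun R : maxSub F Q => (R : Set (Rd d))) := by
    intro i j hij
    exact maxSub_pairwiseDisjoint hF Q i.2 j.2 (fun h => hij (Subtype.ext h))
  have hm : ∀ R : maxSub F Q, MeasurableSet (R : Set (Rd d)) :=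
    fun R => isCube_measurableSet (𝒟.isCube _ (hF R.2.1.1))
  have hcnt := MeasureTheory.Measure.countable_meas_pos_of_disjoint_iUnion
    (μ := volume) hm hd
  have huniv : {i : maxSub F Q | 0 < volume (i : Set (Rd d))} = Set.univ := by
    apply Set.eq_univ_of_forall
    intro R
    exact isCube_volume_pos (𝒟.isCube _ (hF R.2.1.1))
  rw [huniv, Set.countable_univ_iff] at hcnt
  exact Set.countable_coe_iff.mp hcnt

lemma biUnion_maxSub (𝒟 : DyadicLattice d) {F : Set (Set (Rd d))} (hF : F ⊆ 𝒟.cubes)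
    {Q : Set (Rd d)} (hQcube : IsCube Q) :
    (⋃ Q' ∈ {Q' | Q' ∈ F ∧ Q' ⊂ Q}, Q') = ⋃ R ∈ maxSub F Q, R := by
  apply Set.Subset.antisymm
  · intro x hx
    simp only [Set.mem_iUnion, Set.mem_setOf_eq] at hx ⊢
    obtain ⟨Q', ⟨hQ'F, hQ'ss⟩, hxQ'⟩ := hx
    obtain ⟨R, hR, hsub⟩ := exists_maximal 𝒟 hF hQcube hQ'F hQ'ss
    exact ⟨R, hR, hsub hxQ'⟩
  · refine Set.iUnion₂_mono' fun R hR => ⟨R, hR.1, subset_rfl⟩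

lemma cube_integrableOn {Q : Set (Rd d)} (hQ : IsCube Q) {φ : Rd d → ℝ}
    (hφ : LocallyIntegrable φ volume) : IntegrableOn φ Q := by
  obtain ⟨a, l, hl, rfl⟩ := hQ
  have hcomp : IsCompact (Set.univ.pi fun i => Set.Icc (a i) (a i + l)) :=
    isCompact_univ_pi fun i => isCompact_Icc
  exact (hφ.integrableOn_isCompact hcomp).mono_set
    (Set.pi_mono fun i _ => Set.Ico_subset_Icc_self)

lemma integral_le_of_avg_le {Q : Set (Rd d)} (hQ : IsCube Q) {φ : Rd d → ℝ} {c : ℝ}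
    (hc : 0 ≤ c) (havg : (⨍ x in Q, φ x) ≤ c) :
    (∫ x in Q, φ x) ≤ c * (volume Q).toReal := by
  have h0 : 0 < (volume Q).toReal :=
    ENNReal.toReal_pos (isCube_volume_pos hQ).ne' (isCube_volume_lt_top hQ).ne
  rw [setAverage_eq, smul_eq_mul] at havg
  calc (∫ x in Q, φ x) = (volume Q).toReal * ((volume Q).toReal⁻¹ * ∫ x in Q, φ x) := by
        field_simp
    _ ≤ (volume Q).toReal * c := by
        exact mul_le_mul_of_nonneg_left havg h0.le
    _ = c * (volume Q).toReal := mul_comm _ _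

lemma le_integral_of_le_avg {Q : Set (Rd d)} (hQ : IsCube Q) {φ : Rd d → ℝ} {c : ℝ}
    (havg : c ≤ (⨍ x in Q, φ x)) :
    c * (volume Q).toReal ≤ ∫ x in Q, φ x := by
  have h0 : 0 < (volume Q).toReal :=
    ENNReal.toReal_pos (isCube_volume_pos hQ).ne' (isCube_volume_lt_top hQ).ne
  rw [setAverage_eq, smul_eq_mul] at havg
  have := mul_le_mul_of_nonneg_left havg h0.le
  calc c * (volume Q).toReal = (volume Q).toReal * c := mul_comm _ _
    _ ≤ (volume Q).toReal * ((volume Q).toReal⁻¹ * ∫ x in Q, φ x) := this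
    _ = ∫ x in Q, φ x := by field_simp

end auxLemmas

/-- Lemma 2.3: selection of disjoint major subsets for cubes with comparable averages. -/
theorem stmt0 (d : ℕ) (𝒟 : DyadicLattice d) (S : Set (Set (Rd d)))
    (hS𝒟 : S ⊆ 𝒟.cubes) (hS : IsSparse (7/8) S)
    (φ : Rd d → ℝ) (hφ0 : ∀ x, 0 ≤ φ x) (hφ : LocallyIntegrable φ volume)
    (γ : ℝ) (hγ : 0 < γ)
    (F : Set (Set (Rd d)))
    (hF : F = {Q ∈ S | γ ≤ (⨍ x in Q, φ x) ∧ (⨍ x in Q, φ x) ≤ 4 * γ}) :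
    ∃ G : Set (Rd d) → Set (Rd d),
      (∀ Q ∈ F, G Q ⊆ Q ∧ MeasurableSet (G Q)) ∧
      F.PairwiseDisjoint G ∧
      ∀ Q ∈ F, (∫ x in Q, φ x) ≤ 8 * ∫ x in G Q, φ x := by
  have hFS : F ⊆ S := by rw [hF]; exact fun Q hQ => hQ.1
  have hF𝒟 : F ⊆ 𝒟.cubes := hFS.trans hS𝒟
  have hcube : ∀ Q ∈ F, IsCube Q := fun Q hQ => 𝒟.isCube Q (hF𝒟 hQ)
  refine ⟨fun Q => Q \ ⋃ R ∈ maxSub F Q, R, ?_, ?_, ?_⟩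
  · -- subsets and measurability
    intro Q hQ
    refine ⟨Set.diff_subset, ?_⟩
    refine (isCube_measurableSet (hcube Q hQ)).diff ?_
    exact MeasurableSet.biUnion (maxSub_countable hF𝒟 Q)
      (fun R hR => isCube_measurableSet (𝒟.isCube _ (hF𝒟 hR.1.1)))
  · -- pairwise disjoint
    intro Q hQ Q' hQ' hne
    have hkey : ∀ A B : Set (Rd d), A ∈ F → B ∈ F → A ⊂ B →
        Disjoint (A \ ⋃ R ∈ maxSub F A, R) (B \ ⋃ R ∈ maxSub F B, R) := by
      intro A B hA hB hAB
      obtain ⟨R, hR, hsub⟩ := exists_maximal 𝒟 hF𝒟 (𝒟.isCube _ (hF𝒟 hB)) hA hAB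
      rw [Set.disjoint_left]
      intro x hx hx'
      exact hx'.2 (Set.mem_biUnion hR (hsub (hx.1)))
    rcases lattice_nested_or_disjoint (hF𝒟 hQ) (hF𝒟 hQ') with h | h | h
    · exact hkey Q Q' hQ hQ' (ssubset_of_subset_of_ne h hne)
    · exact (hkey Q' Q hQ' hQ (ssubset_of_subset_of_ne h hne.symm)).symm
    · exact h.mono Set.diff_subset Set.diff_subset
  · -- the integral estimate
    intro Q hQF
    have hQS : Q ∈ S := hFS hQF
    have hQcube : IsCube Q := hcube Q hQF
    have havg : γ ≤ (⨍ x in Q, φ x) ∧ (⨍ x in Q, φ x) ≤ 4 * γ := by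
      rw [hF] at hQF; exact hQF.2
    have hQpos : 0 < (volume Q).toReal :=
      ENNReal.toReal_pos (isCube_volume_pos hQcube).ne' (isCube_volume_lt_top hQcube).ne
    set M := maxSub F Q with hM
    set U : Set (Rd d) := ⋃ R ∈ M, R with hU
    have hUQ : U ⊆ Q := Set.iUnion₂_subset fun R hR => hR.1.2.1
    have hMcnt : M.Countable := maxSub_countable hF𝒟 Q
    have hMmeas : ∀ R ∈ M, MeasurableSet R :=
      fun R hR => isCube_measurableSet (𝒟.isCube _ (hF𝒟 hR.1.1))
    have hUmeas : MeasurableSet U := MeasurableSet.biUnion hMcnt hMmeas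
    have hintQ : IntegrableOn φ Q := cube_integrableOn hQcube hφ
    -- volume bound on U
    have hvolU : volume U ≤ ENNReal.ofReal (1/8) * volume Q := by
      have h1 : U ⊆ ⋃ Q' ∈ {Q' ∈ S | Q' ⊂ Q}, Q' := by
        apply Set.iUnion₂_subset
        intro R hR
        exact Set.subset_biUnion_of_mem (u := id) ⟨hFS hR.1.1, hR.1.2⟩
      have h2 := hS Q hQS
      have h3 : ENNReal.ofReal (1 - 7/8 : ℝ) = ENNReal.ofReal (1/8) := by norm_num
      calc volume U ≤ volume (⋃ Q' ∈ {Q' ∈ S | Q' ⊂ Q}, Q') := measure_mono h1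
        _ ≤ ENNReal.ofReal (1 - 7/8) * volume Q := h2
        _ = ENNReal.ofReal (1/8) * volume Q := by rw [h3]
    -- integral over U
    haveI : Countable ↥M := hMcnt.to_subtype
    have hUiU : U = ⋃ R : M, (R : Set (Rd d)) := by
      rw [hU]; exact Set.biUnion_eq_iUnion M _
    have hdisj : Pairwise (Function.onFun Disjoint fun R : M => (R : Set (Rd d))) := by
      intro i j hij
      exact maxSub_pairwiseDisjoint hF𝒟 Q i.2 j.2 (fun h => hij (Subtype.ext h))
    have hintU : IntegrableOn φ U := hintQ.mono_set hUQ
    have hsum : HasSum (fun R : M => ∫ x in (R : Set (Rd d)), φ x) (∫ x in U, φ x) := by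
      rw [hUiU]
      exact hasSum_integral_iUnion (fun R : M => hMmeas R R.2) hdisj (hUiU ▸ hintU)
    have hterm : ∀ R : M, (∫ x in (R : Set (Rd d)), φ x) ≤ 4 * γ * (volume (R : Set (Rd d))).toReal := by
      intro R
      have hRF : (R : Set (Rd d)) ∈ F := R.2.1.1
      have hRavg : (⨍ x in (R : Set (Rd d)), φ x) ≤ 4 * γ := by
        rw [hF] at hRF; exact hRF.2.2
      exact integral_le_of_avg_le (𝒟.isCube _ (hF𝒟 R.2.1.1)) (by positivity) hRavg
    have hvolsum : HasSum (fun R : M => (volume (R : Set (Rd d))).toReal) (volume U).toReal := by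
      have h1 : volume U = ∑' R : M, volume (R : Set (Rd d)) := by
        rw [hUiU]
        exact measure_iUnion hdisj (fun R : M => hMmeas R R.2)
      have hfin : volume U ≠ ⊤ :=
        (lt_of_le_of_lt (measure_mono hUQ) (isCube_volume_lt_top hQcube)).ne
      rw [h1] at hfin ⊢
      rw [ENNReal.tsum_toReal_eq
        (fun R : M => (isCube_volume_lt_top (𝒟.isCube _ (hF𝒟 R.2.1.1))).ne)]
      exact ENNReal.hasSum_toReal hfin
    have hintUle : (∫ x in U, φ x) ≤ 4 * γ * (volume U).toReal := by
      have := hasSum_le hterm hsum (hvolsum.mul_left (4 * γ))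
      simpa using this
    -- conclude
    have hvolUr : (volume U).toReal ≤ (1/8) * (volume Q).toReal := by
      have hne : ENNReal.ofReal (1/8) * volume Q ≠ ⊤ :=
        ENNReal.mul_ne_top ENNReal.ofReal_ne_top (isCube_volume_lt_top hQcube).ne
      have := ENNReal.toReal_mono hne hvolU
      rwa [ENNReal.toReal_mul, ENNReal.toReal_ofReal (by norm_num)] at this
    have hlow : γ * (volume Q).toReal ≤ ∫ x in Q, φ x :=
      le_integral_of_le_avg hQcube havg.1
    have hGeq : (∫ x in Q \ U, φ x) = (∫ x in Q, φ x) - ∫ x in U, φ x :=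
      integral_diff hUmeas hintQ hUQ
    have hQnn : 0 ≤ ∫ x in Q, φ x := setIntegral_nonneg (isCube_measurableSet hQcube)
      (fun x _ => hφ0 x)
    have : (∫ x in U, φ x) ≤ (1/2) * ∫ x in Q, φ x := by
      calc (∫ x in U, φ x) ≤ 4 * γ * (volume U).toReal := hintUle
        _ ≤ 4 * γ * ((1/8) * (volume Q).toReal) := by
            apply mul_le_mul_of_nonneg_left hvolUr (by positivity)
        _ = (1/2) * (γ * (volume Q).toReal) := by ring
        _ ≤ (1/2) * ∫ x in Q, φ x := by linarith
    rw [hGeq]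
    linarith
end
end

section
/- Let $1 < p < \infty$, let $W$ be an $n \times n$ matrix weight on $\mathbb{R}^d$, and let $Q$ be a cube. There exists a $\frac{1}{2}$-sparse family $\mathcal{S} \subset \mathcal{D}(Q)$ such that for every $r > 0$ and a.e. $x \in Q$, $M^d_{Q,W,p}f(x)^r \le 2^r \sum_{R \in \mathcal{S}} (\|W^{1/p}(x) V_{R,p}\| \cdot \frac{1}{|R|}\int_R |V_{R,p}^{-1} W^{-1/p}(y) f(y)| \, dy)^r \chi_R(x)$, where $M^d_{Q,W,p}f(x) := \sup_{R \in \mathcal{D}(Q), R \ni x} \frac{1}{|R|}\int_R |W^{1/p}(x) W^{-1/p}(y) f(y)| \, dy$. -/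
open MeasureTheory ENNReal Set
open scoped ComplexOrder

noncomputable section

/-- `n × n` complex matrices. -/
abbrev Mat (n : ℕ) := Matrix (Fin n) (Fin n) ℂ

/-- The operator (spectral) norm of a matrix, acting on `ℓ²`. -/
def matOpNorm {n : ℕ} (M : Mat n) : ℝ := ‖Matrix.toEuclideanCLM (𝕜 := ℂ) M‖

/-- Action of a matrix on a vector of `ℂ^n` (with the Euclidean norm). -/
def mvec {n : ℕ} (M : Mat n) (v : EuclideanSpace ℂ (Fin n)) : EuclideanSpace ℂ (Fin n) :=
  (WithLp.equiv 2 _).symm (M.mulVec ((WithLp.equiv 2 _) v))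

/-- `Wp` and `Wpinv` represent `W^{1/p}` and `W^{-1/p}` for a matrix weight `W`:
they are measurable, pointwise self-adjoint, positive definite and mutually inverse. -/
def IsMatrixWeightPair {d n : ℕ} (Wp Wpinv : Rd d → Mat n) : Prop :=
  (∀ x, (Wp x).IsHermitian) ∧ (∀ x, (Wp x).PosDef) ∧
  (∀ x, (Wpinv x).IsHermitian) ∧ (∀ x, (Wpinv x).PosDef) ∧
  (∀ x, Wp x * Wpinv x = 1) ∧
  (∀ i j, Measurable fun x => Wp x i j) ∧ (∀ i j, Measurable fun x => Wpinv x i j)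

/-- `A ≥ [W]_{A_p}` for the matrix weight `W` (given via `W^{1/p}` and `W^{-1/p}`):
`⨍_Q (⨍_Q ‖W^{1/p}(x) W^{-1/p}(y)‖^{p'} dy)^{p/p'} dx ≤ A` for every cube `Q`. -/
def MatrixApBound {d n : ℕ} (p : ℝ) (Wp Wpinv : Rd d → Mat n) (A : ℝ) : Prop :=
  ∀ Q : Set (Rd d), IsCube Q →
    (⨍ x in Q, (⨍ y in Q, matOpNorm (Wp x * Wpinv y) ^ (p / (p - 1))) ^ (p - 1)) ≤ A

/-- `V` is a reducing operator for the cube `Q` and the matrix weight `W` (given via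
`W^{-1/p}`), with equivalence constants `c₁, c₂`:
`|V u| ≃ (⨍_Q |W^{-1/p}(y) u|^{p'} dy)^{1/p'}` for all `u ∈ ℂ^n`. -/
def IsReducingOp {d n : ℕ} (p c₁ c₂ : ℝ) (Wpinv : Rd d → Mat n)
    (Q : Set (Rd d)) (V : Mat n) : Prop :=
  V.IsHermitian ∧ V.PosDef ∧
  ∀ u : EuclideanSpace ℂ (Fin n),
    c₁ * (⨍ y in Q, ‖mvec (Wpinv y) u‖ ^ (p / (p - 1))) ^ ((p - 1) / p) ≤ ‖mvec V u‖ ∧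
    ‖mvec V u‖ ≤ c₂ * (⨍ y in Q, ‖mvec (Wpinv y) u‖ ^ (p / (p - 1))) ^ ((p - 1) / p)

/-- The Christ–Goldberg maximal operator `M_{W,p}` (valued in `ℝ≥0∞`). -/
def MCG {d n : ℕ} (Wp Wpinv : Rd d → Mat n) (f : Rd d → EuclideanSpace ℂ (Fin n))
    (x : Rd d) : ℝ≥0∞ :=
  ⨆ (Q : Set (Rd d)) (_ : IsCube Q) (_ : x ∈ Q),
    ENNReal.ofReal (⨍ y in Q, ‖mvec (Wp x) (mvec (Wpinv y) (f y))‖)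

/-- The local dyadic Christ–Goldberg maximal operator on the cube with corner `a`
and sidelength `l`. -/
def MCGloc {d n : ℕ} (a : Rd d) (l : ℝ) (Wp Wpinv : Rd d → Mat n)
    (f : Rd d → EuclideanSpace ℂ (Fin n)) (x : Rd d) : ℝ≥0∞ :=
  ⨆ (R : Set (Rd d)) (_ : R ∈ dyadicSubcubesOf a l) (_ : x ∈ R),
    ENNReal.ofReal (⨍ y in R, ‖mvec (Wp x) (mvec (Wpinv y) (f y))‖)

namespace Sparse31

variable {d : ℕ}

/-- The dyadic subcube with parameters `(k, m)`. -/
def dyC (a : Rd d) (l : ℝ) (k : ℕ) (m : Fin d → ℕ) : Set (Rd d) :=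
  Set.univ.pi fun i => Set.Ico (a i + l * m i / 2 ^ k) (a i + l * (m i + 1) / 2 ^ k)

lemma mem_dyadic_iff {a : Rd d} {l : ℝ} {R : Set (Rd d)} :
    R ∈ dyadicSubcubesOf a l ↔ ∃ k m, (∀ i, m i < 2 ^ k) ∧ R = dyC a l k m := Iff.rfl

/-- 1-d core lemma: intersecting dyadic intervals are nested. -/
lemma Ico_nested {s t : ℝ} (ht : 0 < t) {k e m m' : ℕ}
    (hne : (Set.Ico (s + t * m / 2 ^ k) (s + t * (m + 1) / 2 ^ k) ∩
      Set.Ico (s + t * m' / 2 ^ (k + e)) (s + t * (m' + 1) / 2 ^ (k + e))).Nonempty) :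
    Set.Ico (s + t * m' / 2 ^ (k + e)) (s + t * (m' + 1) / 2 ^ (k + e)) ⊆
      Set.Ico (s + t * m / 2 ^ k) (s + t * (m + 1) / 2 ^ k) := by
  obtain ⟨x, ⟨h1, h2⟩, h3, h4⟩ := hne
  have h2k : (0:ℝ) < 2 ^ k := by positivity
  have h2e : (0:ℝ) < 2 ^ e := by positivity
  have h2ke : (0:ℝ) < 2 ^ (k + e) := by positivity
  have hke : (2:ℝ) ^ (k + e) = 2 ^ k * 2 ^ e := pow_add 2 k e
  have key1 : m * 2 ^ e ≤ m' := by
    have hr : t * (m / 2 ^ k) < t * ((m' + 1) / 2 ^ (k + e)) := by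
      rw [← mul_div_assoc, ← mul_div_assoc]; linarith
    have hr2 : (m : ℝ) / 2 ^ k < ((m' : ℝ) + 1) / 2 ^ (k + e) :=
      lt_of_mul_lt_mul_left hr ht.le
    rw [div_lt_div_iff₀ h2k h2ke] at hr2
    have hr3 : (m : ℝ) * 2 ^ e * 2 ^ k < ((m' : ℝ) + 1) * 2 ^ k := by
      rw [hke] at hr2; nlinarith
    have hr4 : (m : ℝ) * 2 ^ e < (m' : ℝ) + 1 := lt_of_mul_lt_mul_right hr3 h2k.le
    have : ((m * 2 ^ e : ℕ) : ℝ) < ((m' + 1 : ℕ) : ℝ) := by push_cast; linarith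
    have := Nat.cast_lt.mp this
    omega
  have key2 : m' + 1 ≤ (m + 1) * 2 ^ e := by
    have hr : t * (m' / 2 ^ (k + e)) < t * ((m + 1) / 2 ^ k) := by
      rw [← mul_div_assoc, ← mul_div_assoc]; linarith
    have hr2 : (m' : ℝ) / 2 ^ (k + e) < ((m : ℝ) + 1) / 2 ^ k :=
      lt_of_mul_lt_mul_left hr ht.le
    rw [div_lt_div_iff₀ h2ke h2k] at hr2
    have hr3 : (m' : ℝ) * 2 ^ k < ((m : ℝ) + 1) * 2 ^ e * 2 ^ k := by
      rw [hke] at hr2; nlinarith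
    have hr4 : (m' : ℝ) < ((m : ℝ) + 1) * 2 ^ e := lt_of_mul_lt_mul_right hr3 h2k.le
    have : ((m' : ℕ) : ℝ) < (((m + 1) * 2 ^ e : ℕ) : ℝ) := by push_cast; linarith
    have := Nat.cast_lt.mp this
    omega
  apply Set.Ico_subset_Ico
  · have hcast : (m : ℝ) * 2 ^ e ≤ (m' : ℝ) := by exact_mod_cast Nat.cast_le.mpr key1
    have : (m : ℝ) / 2 ^ k ≤ (m' : ℝ) / 2 ^ (k + e) := by
      rw [div_le_div_iff₀ h2k h2ke, hke]; nlinarith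
    have := mul_le_mul_of_nonneg_left this ht.le
    rw [mul_div_assoc, mul_div_assoc]
    linarith
  · have hcast : (m' : ℝ) + 1 ≤ ((m : ℝ) + 1) * 2 ^ e := by
      have : ((m' + 1 : ℕ) : ℝ) ≤ (((m + 1) * 2 ^ e : ℕ) : ℝ) := Nat.cast_le.mpr key2
      push_cast at this; linarith
    have : ((m' : ℝ) + 1) / 2 ^ (k + e) ≤ ((m : ℝ) + 1) / 2 ^ k := by
      rw [div_le_div_iff₀ h2ke h2k, hke]; nlinarith
    have := mul_le_mul_of_nonneg_left this ht.le
    rw [mul_div_assoc, mul_div_assoc]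
    linarith

end Sparse31
namespace Sparse31

variable {d : ℕ} {a : Rd d} {l : ℝ}

/-- The top cube. -/
def topC (a : Rd d) (l : ℝ) : Set (Rd d) :=
  Set.univ.pi fun i => Set.Ico (a i) (a i + l)

lemma topC_mem : topC a l ∈ dyadicSubcubesOf a l := by
  refine ⟨0, fun _ => 0, fun i => by norm_num, ?_⟩
  unfold topC
  congr 1
  funext i
  norm_num

lemma dyC_measurableSet (k : ℕ) (m : Fin d → ℕ) : MeasurableSet (dyC a l k m) :=
  MeasurableSet.univ_pi fun i => measurableSet_Ico

lemma mem_dyadic_measurableSet {R : Set (Rd d)} (hR : R ∈ dyadicSubcubesOf a l) :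
    MeasurableSet R := by
  obtain ⟨k, m, _, rfl⟩ := hR; exact dyC_measurableSet k m

lemma volume_dyC (hl : 0 < l) (k : ℕ) (m : Fin d → ℕ) :
    volume (dyC a l k m) = ENNReal.ofReal (l / 2 ^ k) ^ d := by
  rw [dyC, volume_pi_pi]
  have : ∀ i : Fin d, volume (Set.Ico (a i + l * m i / 2 ^ k) (a i + l * (m i + 1) / 2 ^ k))
      = ENNReal.ofReal (l / 2 ^ k) := by
    intro i
    rw [Real.volume_Ico]
    congr 1
    field_simp
    ring
  simp only [this, Finset.prod_const, Finset.card_univ, Fintype.card_fin]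

lemma volume_dyadic_pos (hl : 0 < l) {R : Set (Rd d)} (hR : R ∈ dyadicSubcubesOf a l) :
    0 < volume R := by
  obtain ⟨k, m, _, rfl⟩ := hR
  show 0 < volume (dyC a l k m)
  rw [volume_dyC hl]
  have : (0:ℝ) < l / 2 ^ k := by positivity
  exact ENNReal.pow_pos (ENNReal.ofReal_pos.mpr this) d

lemma volume_dyadic_lt_top (hl : 0 < l) {R : Set (Rd d)} (hR : R ∈ dyadicSubcubesOf a l) :
    volume R < ⊤ := by
  obtain ⟨k, m, _, rfl⟩ := hR
  show volume (dyC a l k m) < ⊤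
  rw [volume_dyC hl]
  exact ENNReal.pow_lt_top ENNReal.ofReal_lt_top

lemma dyadic_nonempty (hl : 0 < l) {R : Set (Rd d)} (hR : R ∈ dyadicSubcubesOf a l) :
    R.Nonempty := by
  obtain ⟨k, m, _, rfl⟩ := hR
  refine ⟨fun i => a i + l * m i / 2 ^ k, fun i _ => ?_⟩
  refine ⟨le_refl _, ?_⟩
  have h2k : (0:ℝ) < 2 ^ k := by positivity
  have : l * m i / 2 ^ k < l * (m i + 1) / 2 ^ k := by
    rw [div_lt_div_iff₀ h2k h2k]
    nlinarith
  linarith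

lemma dyadic_subset_top (hl : 0 < l) {R : Set (Rd d)} (hR : R ∈ dyadicSubcubesOf a l) :
    R ⊆ topC a l := by
  obtain ⟨k, m, hm, rfl⟩ := hR
  apply Set.pi_mono
  intro i _
  have h2k : (0:ℝ) < 2 ^ k := by positivity
  apply Set.Ico_subset_Ico
  · have : 0 ≤ l * m i / 2 ^ k := by positivity
    linarith
  · have hmi : (m i : ℝ) + 1 ≤ 2 ^ k := by
      have : (m i : ℕ) + 1 ≤ 2 ^ k := hm i
      exact_mod_cast this
    have : l * (m i + 1) / 2 ^ k ≤ l := by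
      rw [div_le_iff₀ h2k]
      nlinarith
    linarith

/-- Intersecting dyadic cubes are nested. -/
lemma dyadic_nested_or_disjoint (hl : 0 < l) {R R' : Set (Rd d)}
    (hR : R ∈ dyadicSubcubesOf a l) (hR' : R' ∈ dyadicSubcubesOf a l)
    (hne : (R ∩ R').Nonempty) : R ⊆ R' ∨ R' ⊆ R := by
  obtain ⟨k, m, hm, rfl⟩ := hR
  obtain ⟨k', m', hm', rfl⟩ := hR'
  obtain ⟨z, hz1, hz2⟩ := hne
  rcases le_total k k' with hkk | hkk
  · right
    obtain ⟨e, rfl⟩ : ∃ e, k' = k + e := ⟨k' - k, by omega⟩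
    intro x hx i _
    have hsub := Ico_nested (s := a i) hl (k := k) (e := e) (m := m i) (m' := m' i)
      ⟨z i, hz1 i trivial, hz2 i trivial⟩
    exact hsub (hx i trivial)
  · left
    obtain ⟨e, rfl⟩ : ∃ e, k = k' + e := ⟨k - k', by omega⟩
    intro x hx i _
    have hsub := Ico_nested (s := a i) hl (k := k') (e := e) (m := m' i) (m' := m i)
      ⟨z i, hz2 i trivial, hz1 i trivial⟩
    exact hsub (hx i trivial)

lemma dyadic_countable : (dyadicSubcubesOf a l).Countable := by
  have : dyadicSubcubesOf a l ⊆ Set.range (fun p : ℕ × (Fin d → ℕ) => dyC a l p.1 p.2) := by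
    rintro R ⟨k, m, _, rfl⟩; exact ⟨(k, m), rfl⟩
  exact (Set.countable_range _).mono this

end Sparse31
namespace Sparse31

variable {d : ℕ} {a : Rd d} {l : ℝ}

lemma ancestors_finite (hl : 0 < l) {R : Set (Rd d)} (hR : R ∈ dyadicSubcubesOf a l) :
    {R' ∈ dyadicSubcubesOf a l | R ⊆ R'}.Finite := by
  rcases Nat.eq_zero_or_pos d with hd | hd
  · apply Set.Finite.subset (Set.finite_singleton (Set.univ : Set (Rd d)))
    rintro R' ⟨⟨k', m', _, rfl⟩, -⟩
    have : dyC a l k' m' = Set.univ := by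
      ext x
      simp only [dyC, Set.mem_pi, Set.mem_univ, true_implies, iff_true]
      intro i
      exact absurd i.isLt (by omega)
    exact this
  · obtain ⟨k, m, hm, rfl⟩ := hR
    apply Set.Finite.subset (Set.Finite.image (fun p : ℕ × (Fin d → ℕ) => dyC a l p.1 p.2)
      (Set.Finite.prod (Set.finite_Iic k) (Set.Finite.pi fun _ => Set.finite_Iio (2 ^ k))))
    rintro R' ⟨⟨k', m', hm', rfl⟩, hsub⟩
    have hk'k : k' ≤ k := by
      by_contra hlt
      push_neg at hlt
      have hlen : l / 2 ^ k' < l / 2 ^ k := by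
        apply div_lt_div_of_pos_left hl (by positivity)
        exact pow_lt_pow_right₀ (by norm_num) hlt
      have hvol : volume (dyC a l k' m') < volume (dyC a l k m) := by
        rw [volume_dyC hl, volume_dyC hl]
        exact ENNReal.pow_lt_pow_left (by omega) (ENNReal.ofReal_lt_ofReal_iff_of_nonneg (by positivity)
          |>.mpr hlen)
      exact absurd (measure_mono hsub) (not_le.mpr hvol)
    refine ⟨(k', m'), ⟨Set.mem_Iic.mpr hk'k, fun i _ => ?_⟩, rfl⟩
    exact Set.mem_Iio.mpr (lt_of_lt_of_le (hm' i) (pow_le_pow_right₀ (by norm_num) hk'k))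

end Sparse31
namespace Sparse31

variable {n : ℕ}

lemma mvec_eq_clm (M : Mat n) (v : EuclideanSpace ℂ (Fin n)) :
    mvec M v = Matrix.toEuclideanCLM (𝕜 := ℂ) M v := by
  conv_rhs => rw [← (WithLp.equiv 2 _).symm_apply_apply v]
  rw [WithLp.equiv_symm_apply, Matrix.toEuclideanCLM_toLp, mvec]
  congr 1

lemma mvec_norm_le (M : Mat n) (v : EuclideanSpace ℂ (Fin n)) :
    ‖mvec M v‖ ≤ matOpNorm M * ‖v‖ := by
  rw [mvec_eq_clm]
  exact (Matrix.toEuclideanCLM (𝕜 := ℂ) M).le_opNorm v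

lemma mvec_mul (M N : Mat n) (v : EuclideanSpace ℂ (Fin n)) :
    mvec (M * N) v = mvec M (mvec N v) := by
  simp [mvec, Matrix.mulVec_mulVec]

lemma mvec_one (v : EuclideanSpace ℂ (Fin n)) : mvec 1 v = v := by
  simp [mvec]

lemma matOpNorm_nonneg (M : Mat n) : 0 ≤ matOpNorm M := norm_nonneg _

lemma norm_le_of_left_inv {A B : Mat n} (h : A * B = 1) (v : EuclideanSpace ℂ (Fin n)) :
    ‖v‖ ≤ matOpNorm A * ‖mvec B v‖ := by
  calc ‖v‖ = ‖mvec (A * B) v‖ := by rw [h, mvec_one]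
  _ = ‖mvec A (mvec B v)‖ := by rw [mvec_mul]
  _ ≤ _ := mvec_norm_le _ _

lemma measurable_mvec_norm {d : ℕ} (M : Mat n) (Wpinv : Rd d → Mat n)
    (hWm : ∀ i j, Measurable fun x => Wpinv x i j)
    (f : Rd d → EuclideanSpace ℂ (Fin n)) (hf : ∀ i, Measurable fun x => f x i) :
    Measurable fun y => ‖mvec M (mvec (Wpinv y) (f y))‖ := by
  have hinner : ∀ i, Measurable fun y => (Wpinv y).mulVec (fun j => f y j) i := by
    intro i
    have h1 : (fun y => (Wpinv y).mulVec (fun j => f y j) i) =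
        fun y => ∑ j, Wpinv y i j * f y j := by
      funext y; simp [Matrix.mulVec, dotProduct]
    rw [h1]
    exact Finset.measurable_sum _ fun j _ => (hWm i j).mul (hf j)
  have houter : ∀ i, Measurable fun y => M.mulVec ((Wpinv y).mulVec (fun j => f y j)) i := by
    intro i
    have h1 : (fun y => M.mulVec ((Wpinv y).mulVec (fun j => f y j)) i) =
        fun y => ∑ j, M i j * (Wpinv y).mulVec (fun j => f y j) j := by
      funext y; simp [Matrix.mulVec, dotProduct]
    rw [h1]
    exact Finset.measurable_sum _ fun j _ => (hinner j).const_mul (M i j)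
  have heq : (fun y => ‖mvec M (mvec (Wpinv y) (f y))‖) =
      fun y => Real.sqrt (∑ i, ‖M.mulVec ((Wpinv y).mulVec (fun j => f y j)) i‖ ^ 2) := by
    funext y
    rw [EuclideanSpace.norm_eq]
    rfl
  rw [heq]
  apply Measurable.sqrt
  apply Finset.measurable_sum
  intro i _
  exact ((houter i).norm).pow_const 2

lemma measurable_g_norm {d : ℕ} (Wpinv : Rd d → Mat n)
    (hWm : ∀ i j, Measurable fun x => Wpinv x i j)
    (f : Rd d → EuclideanSpace ℂ (Fin n)) (hf : ∀ i, Measurable fun x => f x i) :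
    Measurable fun y => ‖mvec (Wpinv y) (f y)‖ := by
  have := measurable_mvec_norm 1 Wpinv hWm f hf
  simpa [mvec_one] using this

end Sparse31
namespace Sparse31

section Avg
variable {α : Type*} [MeasurableSpace α] {μ : Measure α} {P : Set α} {h h' : α → ℝ} {c : ℝ}

lemma setAvg_nonneg (h0 : ∀ y, 0 ≤ h y) : 0 ≤ ⨍ y in P, h y ∂μ := by
  rw [setAverage_eq]
  exact smul_nonneg (inv_nonneg.mpr ENNReal.toReal_nonneg) (integral_nonneg h0)

lemma setAvg_zero_of_not_integrable (hni : ¬ IntegrableOn h P μ) : ⨍ y in P, h y ∂μ = 0 := by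
  rw [setAverage_eq, integral_undef hni, smul_zero]

lemma setIntegral_eq_vol_mul_avg (hP0 : μ P ≠ 0) (hPt : μ P ≠ ⊤) :
    ∫ y in P, h y ∂μ = (μ P).toReal * ⨍ y in P, h y ∂μ := by
  rw [setAverage_eq, smul_eq_mul, measureReal_def, ← mul_assoc, mul_inv_cancel₀ (by
    simp [ENNReal.toReal_ne_zero, hP0, hPt]), one_mul]

lemma setAvg_le_mul_avg (hint : IntegrableOn h' P μ) (hc : 0 ≤ c)
    (hle : ∀ y, h y ≤ c * h' y) (h0 : ∀ y, 0 ≤ h y) :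
    ⨍ y in P, h y ∂μ ≤ c * ⨍ y in P, h' y ∂μ := by
  rw [setAverage_eq, setAverage_eq, smul_eq_mul, smul_eq_mul, mul_left_comm]
  apply mul_le_mul_of_nonneg_left ?_ (inv_nonneg.mpr ENNReal.toReal_nonneg)
  calc ∫ y in P, h y ∂μ ≤ ∫ y in P, c * h' y ∂μ := by
        apply integral_mono_of_nonneg (Filter.Eventually.of_forall h0)
          (hint.const_mul c) (Filter.Eventually.of_forall hle)
  _ = c * ∫ y in P, h' y ∂μ := by rw [integral_const_mul]

end Avg

section Stopping

variable {d n : ℕ} (a : Rd d) (l : ℝ) (Wpinv : Rd d → Mat n)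
  (Vinv : Set (Rd d) → Mat n) (f : Rd d → EuclideanSpace ℂ (Fin n))

/-- The scalar density `|W^{-1/p}(y) f(y)|`. -/
def gfn : Rd d → ℝ := fun y => ‖mvec (Wpinv y) (f y)‖

/-- The scalar density `|V_R^{-1} W^{-1/p}(y) f(y)|` adapted to the cube `R`. -/
def gRfn (R : Set (Rd d)) : Rd d → ℝ := fun y => ‖mvec (Vinv R) (mvec (Wpinv y) (f y))‖

/-- A cube is good if the density is integrable on it. -/
def Good (R : Set (Rd d)) : Prop := IntegrableOn (gfn Wpinv f) R volume

/-- Cubes violating the stopping condition inside `R`. -/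
def Bset (R : Set (Rd d)) : Set (Set (Rd d)) :=
  {P | P ∈ dyadicSubcubesOf a l ∧ P ⊂ R ∧
    2 * ⨍ y in R, gRfn Wpinv Vinv f R y < ⨍ y in P, gRfn Wpinv Vinv f R y}

/-- Stopping children of `R`: maximal violating subcubes. -/
def children (R : Set (Rd d)) : Set (Set (Rd d)) :=
  {P ∈ Bset a l Wpinv Vinv f R | ∀ P' ∈ Bset a l Wpinv Vinv f R, P ⊆ P' → P = P'}

/-- Generations of the sparse family. -/
def gen : ℕ → Set (Set (Rd d))
  | 0 => {R ∈ dyadicSubcubesOf a l | Good Wpinv f R ∧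
      ∀ R' ∈ dyadicSubcubesOf a l, Good Wpinv f R' → R ⊆ R' → R = R'}
  | (k+1) => ⋃ R ∈ gen k, children a l Wpinv Vinv f R

/-- The sparse family. -/
def Sfam : Set (Set (Rd d)) := ⋃ k, gen a l Wpinv Vinv f k

variable {a l Wpinv Vinv f}

lemma children_subset_Bset {R} : children a l Wpinv Vinv f R ⊆ Bset a l Wpinv Vinv f R :=
  fun _ hP => hP.1

lemma Bset_mem_dyadic {R P} (hP : P ∈ Bset a l Wpinv Vinv f R) : P ∈ dyadicSubcubesOf a l :=
  hP.1

lemma Bset_ssubset {R P} (hP : P ∈ Bset a l Wpinv Vinv f R) : P ⊂ R := hP.2.1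

lemma gen_subset_dyadic : ∀ k, gen a l Wpinv Vinv f k ⊆ dyadicSubcubesOf a l
  | 0 => fun R hR => hR.1
  | (k+1) => by
      intro R hR
      simp only [gen, Set.mem_iUnion] at hR
      obtain ⟨R', _, hR⟩ := hR
      exact Bset_mem_dyadic (children_subset_Bset hR)

lemma Sfam_subset_dyadic : Sfam a l Wpinv Vinv f ⊆ dyadicSubcubesOf a l := by
  intro R hR
  obtain ⟨_, ⟨k, rfl⟩, hk⟩ := hR
  exact gen_subset_dyadic k hk

lemma Good.mono {R P : Set (Rd d)} (hG : Good Wpinv f R) (hPR : P ⊆ R) : Good Wpinv f P :=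
  hG.mono_set hPR

lemma gen_good : ∀ k, ∀ R ∈ gen a l Wpinv Vinv f k, Good Wpinv f R
  | 0 => fun R hR => hR.2.1
  | (k+1) => by
      intro R hR
      simp only [gen, Set.mem_iUnion] at hR
      obtain ⟨R', hR', hR⟩ := hR
      exact (gen_good k R' hR').mono (Bset_ssubset (children_subset_Bset hR)).subset

lemma children_subset_Sfam {R k} (hR : R ∈ gen a l Wpinv Vinv f k) :
    children a l Wpinv Vinv f R ⊆ Sfam a l Wpinv Vinv f := by
  intro P hP
  exact Set.mem_iUnion.mpr ⟨k+1, by simp only [gen, Set.mem_iUnion]; exact ⟨R, hR, hP⟩⟩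

/-- Every good cube is contained in a maximal good cube. -/
lemma exists_maximal_good (hl : 0 < l) {P : Set (Rd d)} (hP : P ∈ dyadicSubcubesOf a l)
    (hG : Good Wpinv f P) : ∃ Q₁ ∈ gen a l Wpinv Vinv f 0, P ⊆ Q₁ := by
  have hfin : {R' ∈ dyadicSubcubesOf a l | Good Wpinv f R' ∧ P ⊆ R'}.Finite := by
    apply (ancestors_finite hl hP).subset
    rintro R' ⟨h1, _, h3⟩; exact ⟨h1, h3⟩
  obtain ⟨Q₁, hQ₁, hmax'⟩ := Set.Finite.exists_maximalFor id _ hfin ⟨P, hP, hG, subset_rfl⟩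
  have hmax := fun R' hR' (hs : Q₁ ⊆ R') => le_antisymm hs (hmax' hR' hs)
  refine ⟨Q₁, ⟨hQ₁.1, hQ₁.2.1, ?_⟩, hQ₁.2.2⟩
  intro R' hR' hGR' hsub
  exact hmax R' ⟨hR', hGR', hQ₁.2.2.trans hsub⟩ hsub

end Stopping
end Sparse31
namespace Sparse31
section Stopping2

variable {d n : ℕ} {a : Rd d} {l : ℝ} {Wpinv : Rd d → Mat n}
  {Vinv : Set (Rd d) → Mat n} {f : Rd d → EuclideanSpace ℂ (Fin n)}

lemma children_disjoint (hl : 0 < l) {R C C' : Set (Rd d)}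
    (hC : C ∈ children a l Wpinv Vinv f R) (hC' : C' ∈ children a l Wpinv Vinv f R)
    (hne : C ≠ C') : Disjoint C C' := by
  rw [Set.disjoint_iff_inter_eq_empty]
  by_contra hne2
  have hnested := dyadic_nested_or_disjoint hl (Bset_mem_dyadic hC.1) (Bset_mem_dyadic hC'.1)
    (Set.nonempty_iff_ne_empty.mpr hne2)
  rcases hnested with hsub | hsub
  · exact hne (hC.2 C' hC'.1 hsub)
  · exact hne (hC'.2 C hC.1 hsub).symm

lemma gen_disjoint (hl : 0 < l) : ∀ k, ∀ R ∈ gen a l Wpinv Vinv f k,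
    ∀ R' ∈ gen a l Wpinv Vinv f k, R ≠ R' → Disjoint R R'
  | 0 => by
      intro R hR R' hR' hne
      rw [Set.disjoint_iff_inter_eq_empty]
      by_contra hne2
      have hnested := dyadic_nested_or_disjoint hl hR.1 hR'.1
        (Set.nonempty_iff_ne_empty.mpr hne2)
      rcases hnested with hsub | hsub
      · exact hne (hR.2.2 R' hR'.1 hR'.2.1 hsub)
      · exact hne (hR'.2.2 R hR.1 hR.2.1 hsub).symm
  | (k+1) => by
      intro R hR R' hR' hne
      simp only [gen, Set.mem_iUnion] at hR hR'
      obtain ⟨R₀, hR₀, hRc⟩ := hR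
      obtain ⟨R₀', hR₀', hRc'⟩ := hR'
      rcases eq_or_ne R₀ R₀' with rfl | hne0
      · exact children_disjoint hl hRc hRc' hne
      · exact Set.disjoint_of_subset (Bset_ssubset hRc.1).subset
          (Bset_ssubset hRc'.1).subset (gen_disjoint hl k R₀ hR₀ R₀' hR₀' hne0)

lemma gen_ancestor : ∀ k j, j ≤ k → ∀ R ∈ gen a l Wpinv Vinv f k,
    ∃ A ∈ gen a l Wpinv Vinv f j, R ⊆ A ∧ (j < k → R ⊂ A)
  | 0 => by
      intro j hj R hR
      interval_cases j
      exact ⟨R, hR, subset_rfl, by omega⟩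
  | (k+1) => by
      intro j hj R hR
      simp only [gen, Set.mem_iUnion] at hR
      obtain ⟨R₀, hR₀, hRc⟩ := hR
      rcases Nat.lt_or_ge j (k+1) with hlt | hge
      · have hjk : j ≤ k := by omega
        obtain ⟨A, hA, hsub, _⟩ := gen_ancestor k j hjk R₀ hR₀
        exact ⟨A, hA, ((Bset_ssubset hRc.1).subset).trans hsub,
          fun _ => lt_of_lt_of_le (Bset_ssubset hRc.1) hsub⟩
      · have : j = k + 1 := by omega
        subst this
        refine ⟨R, ?_, subset_rfl, by omega⟩
        simp only [gen, Set.mem_iUnion]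
        exact ⟨R₀, hR₀, hRc⟩

lemma gen_unique (hl : 0 < l) {k j : ℕ} {R : Set (Rd d)}
    (hk : R ∈ gen a l Wpinv Vinv f k) (hj : R ∈ gen a l Wpinv Vinv f j) : k = j := by
  have hne : R.Nonempty := dyadic_nonempty hl (gen_subset_dyadic k hk)
  rcases lt_trichotomy k j with h | h | h
  · obtain ⟨A, hA, _, hstrict⟩ := gen_ancestor j k h.le R hj
    have hss := hstrict h
    have := gen_disjoint hl k R hk A hA (ne_of_ssubset hss)
    exact absurd (Set.disjoint_left.mp this) (by
      obtain ⟨x, hx⟩ := hne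
      intro h2
      exact h2 hx (hss.subset hx))
  · exact h
  · obtain ⟨A, hA, _, hstrict⟩ := gen_ancestor k j h.le R hk
    have hss := hstrict h
    have := gen_disjoint hl j R hj A hA (ne_of_ssubset hss)
    exact absurd (Set.disjoint_left.mp this) (by
      obtain ⟨x, hx⟩ := hne
      intro h2
      exact h2 hx (hss.subset hx))

lemma gen_lt_of_ssubset (hl : 0 < l) {k j : ℕ} {R R' : Set (Rd d)}
    (hk : R ∈ gen a l Wpinv Vinv f k) (hj : R' ∈ gen a l Wpinv Vinv f j)
    (hss : R ⊂ R') : j < k := by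
  have hne : R.Nonempty := dyadic_nonempty hl (gen_subset_dyadic k hk)
  rcases lt_trichotomy j k with h | h | h
  · exact h
  · subst h
    have := gen_disjoint hl j R hk R' hj (ne_of_ssubset hss)
    obtain ⟨x, hx⟩ := hne
    exact absurd (hss.subset hx) (Set.disjoint_left.mp this hx)
  · obtain ⟨A, hA, hsub, _⟩ := gen_ancestor j k h.le R' hj
    have hRA : R ⊆ A := hss.subset.trans hsub
    have hne2 : R ≠ A := by
      rintro rfl
      exact hss.not_subset hsub
    have hdis := gen_disjoint hl k R hk A hA hne2
    obtain ⟨x, hx⟩ := hne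
    exact absurd (hRA hx) (Set.disjoint_left.mp hdis hx)

end Stopping2
end Sparse31
namespace Sparse31
section Stopping3

variable {d n : ℕ} {a : Rd d} {l : ℝ} {Wpinv : Rd d → Mat n}
  {Vinv : Set (Rd d) → Mat n} {f : Rd d → EuclideanSpace ℂ (Fin n)}

lemma gen_subset_Sfam (k : ℕ) : gen a l Wpinv Vinv f k ⊆ Sfam a l Wpinv Vinv f :=
  Set.subset_iUnion (gen a l Wpinv Vinv f) k

lemma mem_Sfam_iff {R : Set (Rd d)} :
    R ∈ Sfam a l Wpinv Vinv f ↔ ∃ k, R ∈ gen a l Wpinv Vinv f k := Set.mem_iUnion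

/-- Structural lemma: a proper `S`-subcube of an `S`-cube `R` lies in a stopping child
of `R`. -/
lemma ssubset_subset_child (hl : 0 < l) {Q' R : Set (Rd d)}
    (hQ' : Q' ∈ Sfam a l Wpinv Vinv f) (hR : R ∈ Sfam a l Wpinv Vinv f) (hss : Q' ⊂ R) :
    ∃ C ∈ children a l Wpinv Vinv f R, Q' ⊆ C := by
  obtain ⟨k, hRk⟩ := mem_Sfam_iff.mp hR
  set A := {P | P ∈ Sfam a l Wpinv Vinv f ∧ Q' ⊆ P ∧ P ⊂ R} with hAdef
  have hAfin : A.Finite :=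
    (ancestors_finite hl (Sfam_subset_dyadic hQ')).subset
      (fun P hP => ⟨Sfam_subset_dyadic hP.1, hP.2.1⟩)
  have hAne : A.Nonempty := ⟨Q', hQ', subset_rfl, hss⟩
  obtain ⟨P', hP'A, hmax'⟩ := Set.Finite.exists_maximalFor id _ hAfin hAne
  have hmax := fun R' hR' (hs : P' ⊆ R') => le_antisymm hs (hmax' hR' hs)
  obtain ⟨hP'S, hQP', hP'R⟩ := hP'A
  have hP'ne : P'.Nonempty := dyadic_nonempty hl (Sfam_subset_dyadic hP'S)
  obtain ⟨m, hPm⟩ := mem_Sfam_iff.mp hP'S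
  match m with
  | 0 =>
    obtain ⟨A₀, hA₀, hRA₀, _⟩ := gen_ancestor k 0 (Nat.zero_le k) R hRk
    have hP'A₀ : P' ⊆ A₀ := hP'R.subset.trans hRA₀
    have hne2 : P' ≠ A₀ := by
      rintro rfl
      exact hP'R.not_subset hRA₀
    have hdis := gen_disjoint hl 0 P' hPm A₀ hA₀ hne2
    obtain ⟨x, hx⟩ := hP'ne
    exact absurd (hP'A₀ hx) (Set.disjoint_left.mp hdis hx)
  | (m+1) =>
    have hPm' := hPm
    simp only [gen, Set.mem_iUnion] at hPm'
    obtain ⟨R₁, hR₁, hc⟩ := hPm'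
    have hP'R₁ : P' ⊂ R₁ := Bset_ssubset hc.1
    rcases eq_or_ne R₁ R with rfl | hne1
    · exact ⟨P', hc, hQP'⟩
    · have hnested := dyadic_nested_or_disjoint hl
        (gen_subset_dyadic m hR₁) (Sfam_subset_dyadic hR)
        (hP'ne.mono (Set.subset_inter hP'R₁.subset hP'R.subset))
      rcases hnested with hsub | hsub
      · -- R₁ ⊆ R, R₁ ≠ R
        have hR₁R : R₁ ⊂ R := Set.ssubset_iff_subset_ne.mpr ⟨hsub, hne1⟩
        have hR₁A : R₁ ∈ A := ⟨gen_subset_Sfam m hR₁, hQP'.trans hP'R₁.subset, hR₁R⟩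
        have := hmax R₁ hR₁A hP'R₁.subset
        exact absurd this hP'R₁.ne
      · -- R ⊆ R₁, R ≠ R₁
        have hRR₁ : R ⊂ R₁ := Set.ssubset_iff_subset_ne.mpr ⟨hsub, fun h => hne1 h.symm⟩
        have h1 : m < k := gen_lt_of_ssubset hl hRk hR₁ hRR₁
        have h2 : k < m + 1 := gen_lt_of_ssubset hl hPm hRk hP'R
        omega

end Stopping3
end Sparse31
namespace Sparse31
section Stopping4

variable {d n : ℕ} {a : Rd d} {l : ℝ} {Wpinv : Rd d → Mat n}
  {Vinv : Set (Rd d) → Mat n} {f : Rd d → EuclideanSpace ℂ (Fin n)}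

lemma good_int_mvec (hWm : ∀ i j, Measurable fun x => Wpinv x i j)
    (hf : ∀ i, Measurable fun x => f x i) {P : Set (Rd d)} (hG : Good Wpinv f P)
    (M : Mat n) :
    IntegrableOn (fun y => ‖mvec M (mvec (Wpinv y) (f y))‖) P volume := by
  apply Integrable.mono' (hG.const_mul (matOpNorm M))
    ((measurable_mvec_norm M Wpinv hWm f hf).aestronglyMeasurable)
  apply Filter.Eventually.of_forall
  intro y
  rw [Real.norm_of_nonneg (norm_nonneg _)]
  exact mvec_norm_le _ _

lemma good_of_int (hWm : ∀ i j, Measurable fun x => Wpinv x i j)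
    (hf : ∀ i, Measurable fun x => f x i) {P : Set (Rd d)} {A B : Mat n} (hAB : A * B = 1)
    (hint : IntegrableOn (fun y => ‖mvec B (mvec (Wpinv y) (f y))‖) P volume) :
    Good Wpinv f P := by
  apply Integrable.mono' (hint.const_mul (matOpNorm A))
    ((measurable_g_norm Wpinv hWm f hf).aestronglyMeasurable)
  apply Filter.Eventually.of_forall
  intro y
  rw [Real.norm_of_nonneg (norm_nonneg (mvec (Wpinv y) (f y)))]
  exact norm_le_of_left_inv hAB _

lemma children_volume_le (hl : 0 < l) (hWm : ∀ i j, Measurable fun x => Wpinv x i j)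
    (hf : ∀ i, Measurable fun x => f x i) {R : Set (Rd d)}
    (hRD : R ∈ dyadicSubcubesOf a l) (hG : Good Wpinv f R) :
    volume (⋃₀ children a l Wpinv Vinv f R) ≤ volume R / 2 := by
  classical
  set g : Rd d → ℝ := gRfn Wpinv Vinv f R with hgdef
  have hgmeas : Measurable g := measurable_mvec_norm (Vinv R) Wpinv hWm f hf
  have hgnn : ∀ y, 0 ≤ g y := fun y => norm_nonneg _
  have hgint : IntegrableOn g R volume := good_int_mvec hWm hf hG (Vinv R)
  set av := ⨍ y in R, g y with havdef
  have hav0 : 0 ≤ av := setAvg_nonneg hgnn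
  have hcnt : (children a l Wpinv Vinv f R).Countable :=
    dyadic_countable.mono (fun P hP => Bset_mem_dyadic hP.1)
  have hdisjfam : (children a l Wpinv Vinv f R).Pairwise Disjoint :=
    fun C hC C' hC' hne => children_disjoint hl hC hC' hne
  have hmeasfam : ∀ s ∈ children a l Wpinv Vinv f R, MeasurableSet s :=
    fun s hs => mem_dyadic_measurableSet (Bset_mem_dyadic hs.1)
  have hsub_R : ⋃₀ children a l Wpinv Vinv f R ⊆ R :=
    Set.sUnion_subset fun C hC => (Bset_ssubset hC.1).subset
  have hvolR0 := (volume_dyadic_pos hl hRD).ne'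
  have hvolRt := (volume_dyadic_lt_top hl hRD).ne
  rcases eq_or_lt_of_le hav0 with heq | hpos
  · have hchempty : children a l Wpinv Vinv f R = ∅ := by
      rw [Set.eq_empty_iff_forall_notMem]
      intro P hP
      have hcond : 2 * av < ⨍ y in P, g y := hP.1.2.2
      have hPR : P ⊆ R := (Bset_ssubset hP.1).subset
      have hintR0 : ∫ y in R, g y = 0 := by
        rw [setIntegral_eq_vol_mul_avg hvolR0 hvolRt, ← havdef, ← heq, mul_zero]
      have hPle : ∫ y in P, g y ≤ ∫ y in R, g y :=
        setIntegral_mono_set hgint (Filter.Eventually.of_forall hgnn)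
          (HasSubset.Subset.eventuallyLE hPR)
      have havP : ⨍ y in P, g y ≤ 0 := by
        rw [setAverage_eq, smul_eq_mul, measureReal_def]
        have h1 : ∫ y in P, g y ≤ 0 := by rw [hintR0] at hPle; exact hPle
        have := mul_le_mul_of_nonneg_left h1
          (inv_nonneg.mpr (ENNReal.toReal_nonneg (a := volume P)))
        simpa using this
      linarith
    rw [hchempty]
    simp
  · set ν := volume.withDensity (fun y => ENNReal.ofReal (g y)) with hν
    have hνapp : ∀ (P : Set (Rd d)), MeasurableSet P → IntegrableOn g P volume →
        ν P = ENNReal.ofReal (∫ y in P, g y) := by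
      intro P hPm hPint
      rw [hν, withDensity_apply _ hPm,
        ← ofReal_integral_eq_lintegral_ofReal hPint (Filter.Eventually.of_forall hgnn)]
    have key : ∀ P ∈ children a l Wpinv Vinv f R,
        volume P * ENNReal.ofReal (2 * av) ≤ ν P := by
      intro P hP
      have hPD := Bset_mem_dyadic hP.1
      have hPR : P ⊆ R := (Bset_ssubset hP.1).subset
      have hPint := hgint.mono_set hPR
      have hvolPt := (volume_dyadic_lt_top hl hPD).ne
      have hcond : 2 * av < ⨍ y in P, g y := hP.1.2.2
      have h1 : (volume P).toReal * (2 * av) ≤ ∫ y in P, g y := by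
        rw [setIntegral_eq_vol_mul_avg (volume_dyadic_pos hl hPD).ne' hvolPt]
        exact mul_le_mul_of_nonneg_left hcond.le ENNReal.toReal_nonneg
      rw [hνapp P (mem_dyadic_measurableSet hPD) hPint]
      calc volume P * ENNReal.ofReal (2 * av)
          = ENNReal.ofReal ((volume P).toReal * (2 * av)) := by
            rw [ENNReal.ofReal_mul ENNReal.toReal_nonneg, ENNReal.ofReal_toReal hvolPt]
      _ ≤ _ := ENNReal.ofReal_le_ofReal h1
    have hsum : (∑' P : children a l Wpinv Vinv f R, volume (P : Set (Rd d))) *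
        ENNReal.ofReal (2 * av) ≤ ν R := by
      rw [← ENNReal.tsum_mul_right]
      calc ∑' P : children a l Wpinv Vinv f R, volume (P : Set (Rd d)) * ENNReal.ofReal (2 * av)
          ≤ ∑' P : children a l Wpinv Vinv f R, ν (P : Set (Rd d)) :=
            ENNReal.tsum_le_tsum (fun P => key P P.2)
      _ = ν (⋃₀ children a l Wpinv Vinv f R) := (measure_sUnion hcnt hdisjfam hmeasfam).symm
      _ ≤ ν R := measure_mono hsub_R
    have hνR : ν R = volume R * ENNReal.ofReal av := by
      rw [hνapp R (mem_dyadic_measurableSet hRD) hgint,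
        setIntegral_eq_vol_mul_avg hvolR0 hvolRt, ← havdef,
        ENNReal.ofReal_mul ENNReal.toReal_nonneg, ENNReal.ofReal_toReal hvolRt]
    have hof2 : ENNReal.ofReal (2 * av) = 2 * ENNReal.ofReal av := by
      rw [ENNReal.ofReal_mul (by norm_num)]
      norm_num
    set t := ENNReal.ofReal av with htdef
    have ht0 : t ≠ 0 := (ENNReal.ofReal_pos.mpr hpos).ne'
    have htop : t ≠ ⊤ := ENNReal.ofReal_ne_top
    have h2 : (∑' P : children a l Wpinv Vinv f R, volume (P : Set (Rd d))) * 2 * t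
        ≤ volume R * t := by
      rw [mul_assoc, ← hof2]
      rw [hνR] at hsum
      exact hsum
    have h3 : (∑' P : children a l Wpinv Vinv f R, volume (P : Set (Rd d))) * 2 ≤ volume R :=
      (ENNReal.mul_le_mul_iff_left ht0 htop).mp h2
    rw [measure_sUnion hcnt hdisjfam hmeasfam]
    rw [ENNReal.le_div_iff_mul_le (Or.inl two_ne_zero) (Or.inl ENNReal.ofNat_ne_top)]
    exact h3

lemma Sfam_sparse (hl : 0 < l) (hWm : ∀ i j, Measurable fun x => Wpinv x i j)
    (hf : ∀ i, Measurable fun x => f x i) :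
    IsSparse (1/2) (Sfam a l Wpinv Vinv f) := by
  intro R hR
  have hRD := Sfam_subset_dyadic hR
  have hG : Good Wpinv f R := by
    obtain ⟨k, hk⟩ := mem_Sfam_iff.mp hR
    exact gen_good k R hk
  have hsub : (⋃ Q' ∈ {Q' ∈ Sfam a l Wpinv Vinv f | Q' ⊂ R}, Q')
      ⊆ ⋃₀ children a l Wpinv Vinv f R := by
    intro x hx
    simp only [Set.mem_iUnion, Set.mem_setOf_eq, exists_prop] at hx
    obtain ⟨Q', ⟨hQ'S, hQ'ss⟩, hxQ⟩ := hx
    obtain ⟨C, hC, hCsub⟩ := ssubset_subset_child hl hQ'S hR hQ'ss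
    exact ⟨C, hC, hCsub hxQ⟩
  calc volume (⋃ Q' ∈ {Q' ∈ Sfam a l Wpinv Vinv f | Q' ⊂ R}, Q')
      ≤ volume (⋃₀ children a l Wpinv Vinv f R) := measure_mono hsub
  _ ≤ volume R / 2 := children_volume_le hl hWm hf hRD hG
  _ = ENNReal.ofReal (1 - 1/2) * volume R := by
      have h12 : (1 - 1/2 : ℝ) = (2:ℝ)⁻¹ := by norm_num
      rw [h12, ENNReal.ofReal_inv_of_pos (by norm_num), ENNReal.ofReal_ofNat,
        ENNReal.div_eq_inv_mul]

end Stopping4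
end Sparse31
namespace Sparse31
section Pointwise

variable {d n : ℕ} {a : Rd d} {l : ℝ} {Wpinv : Rd d → Mat n}
  {Vinv : Set (Rd d) → Mat n} {f : Rd d → EuclideanSpace ℂ (Fin n)}

lemma pointwise_core (hl : 0 < l) (hWm : ∀ i j, Measurable fun x => Wpinv x i j)
    (hf : ∀ i, Measurable fun x => f x i) (Wp : Rd d → Mat n)
    (hWinv : ∀ x, Wp x * Wpinv x = 1) (V : Set (Rd d) → Mat n)
    (hVinv : ∀ R ∈ dyadicSubcubesOf a l, V R * Vinv R = 1)
    (x : Rd d) {P : Set (Rd d)} (hP : P ∈ dyadicSubcubesOf a l) :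
    (⨍ y in P, ‖mvec (Wp x) (mvec (Wpinv y) (f y))‖) = 0 ∨
    ∃ R ∈ Sfam a l Wpinv Vinv f, P ⊆ R ∧
      ⨍ y in P, ‖mvec (Wp x) (mvec (Wpinv y) (f y))‖ ≤
        2 * (matOpNorm (Wp x * V R) * ⨍ y in R, ‖mvec (Vinv R) (mvec (Wpinv y) (f y))‖) := by
  by_cases hGP : Good Wpinv f P
  · right
    obtain ⟨Q₁, hQ₁, hPQ₁⟩ := exists_maximal_good (Vinv := Vinv) hl hP hGP
    set M := {R | R ∈ Sfam a l Wpinv Vinv f ∧ P ⊆ R} with hMdef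
    have hMfin : M.Finite := (ancestors_finite hl hP).subset
      (fun R hR => ⟨Sfam_subset_dyadic hR.1, hR.2⟩)
    have hMne : M.Nonempty := ⟨Q₁, gen_subset_Sfam 0 hQ₁, hPQ₁⟩
    obtain ⟨R, hRM, hmin'⟩ := Set.Finite.exists_minimalFor id _ hMfin hMne
    have hmin := fun R' hR' (hs : R' ⊆ R) => le_antisymm (hmin' hR' hs) hs
    obtain ⟨hRS, hPR⟩ := hRM
    have hRD := Sfam_subset_dyadic hRS
    have hGR : Good Wpinv f R := by
      obtain ⟨k, hk⟩ := mem_Sfam_iff.mp hRS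
      exact gen_good k R hk
    set g := gRfn Wpinv Vinv f R with hgdef
    have hgnn : ∀ y, 0 ≤ g y := fun y => norm_nonneg _
    have hgintP : IntegrableOn g P volume := good_int_mvec hWm hf hGP (Vinv R)
    have havR0 : 0 ≤ ⨍ y in R, g y := setAvg_nonneg hgnn
    have hstop : ⨍ y in P, g y ≤ 2 * ⨍ y in R, g y := by
      by_contra hcon
      push_neg at hcon
      have hPssR : P ⊂ R := by
        refine Set.ssubset_iff_subset_ne.mpr ⟨hPR, ?_⟩
        rintro rfl
        linarith
      have hPB : P ∈ Bset a l Wpinv Vinv f R := ⟨hP, hPssR, hcon⟩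
      set A2 := {P' | P' ∈ Bset a l Wpinv Vinv f R ∧ P ⊆ P'} with hA2def
      have hA2fin : A2.Finite := (ancestors_finite hl hP).subset
        (fun P' hP' => ⟨Bset_mem_dyadic hP'.1, hP'.2⟩)
      obtain ⟨Pm, hPmA, hPmmax⟩ :=
        Set.Finite.exists_maximalFor id _ hA2fin ⟨P, hPB, subset_rfl⟩
      have hPmC : Pm ∈ children a l Wpinv Vinv f R := by
        refine ⟨hPmA.1, ?_⟩
        intro P' hP'B hsub
        exact le_antisymm hsub (hPmmax ⟨hP'B, hPmA.2.trans hsub⟩ hsub)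
      obtain ⟨k, hk⟩ := mem_Sfam_iff.mp hRS
      have hPmS : Pm ∈ Sfam a l Wpinv Vinv f := children_subset_Sfam hk hPmC
      have hReq := hmin Pm ⟨hPmS, hPmA.2⟩ (Bset_ssubset hPmA.1).subset
      exact (Bset_ssubset hPmA.1).ne hReq.symm
    refine ⟨R, hRS, hPR, ?_⟩
    have hnorm0 : 0 ≤ matOpNorm (Wp x * V R) := matOpNorm_nonneg _
    have step1 : ⨍ y in P, ‖mvec (Wp x) (mvec (Wpinv y) (f y))‖ ≤
        matOpNorm (Wp x * V R) * ⨍ y in P, g y := by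
      apply setAvg_le_mul_avg hgintP hnorm0 ?_ (fun y => norm_nonneg _)
      intro y
      have hmat : (Wp x * V R) * (Vinv R * Wpinv y) = Wp x * Wpinv y := by
        rw [mul_assoc, ← mul_assoc (V R), hVinv R hRD, one_mul]
      have h1 : mvec (Wp x * V R) (mvec (Vinv R) (mvec (Wpinv y) (f y)))
          = mvec (Wp x) (mvec (Wpinv y) (f y)) := by
        rw [← mvec_mul (Vinv R) (Wpinv y), ← mvec_mul (Wp x * V R), hmat, mvec_mul]
      calc ‖mvec (Wp x) (mvec (Wpinv y) (f y))‖
          = ‖mvec (Wp x * V R) (mvec (Vinv R) (mvec (Wpinv y) (f y)))‖ :=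
            (congrArg norm h1).symm
      _ ≤ matOpNorm (Wp x * V R) * ‖mvec (Vinv R) (mvec (Wpinv y) (f y))‖ := mvec_norm_le _ _
    calc ⨍ y in P, ‖mvec (Wp x) (mvec (Wpinv y) (f y))‖
        ≤ matOpNorm (Wp x * V R) * ⨍ y in P, g y := step1
    _ ≤ matOpNorm (Wp x * V R) * (2 * ⨍ y in R, g y) :=
        mul_le_mul_of_nonneg_left hstop hnorm0
    _ = 2 * (matOpNorm (Wp x * V R) * ⨍ y in R, g y) := by ring
  · left
    apply setAvg_zero_of_not_integrable
    intro hint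
    exact hGP (good_of_int hWm hf (mul_eq_one_comm.mp (hWinv x)) hint)

end Pointwise
end Sparse31
open Sparse31 in
/-- Lemma 3.1: pointwise sparse domination of the local dyadic Christ–Goldberg
maximal operator. -/
theorem stmt3 (d n : ℕ) (p : ℝ) (hp : 1 < p) (c₁ c₂ : ℝ) (hc₁ : 0 < c₁) (hc₂ : 0 < c₂)
    (Wp Wpinv : Rd d → Mat n) (hW : IsMatrixWeightPair Wp Wpinv)
    (a : Rd d) (l : ℝ) (hl : 0 < l)
    (V Vinv : Set (Rd d) → Mat n)
    (hV : ∀ R ∈ dyadicSubcubesOf a l,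
      IsReducingOp p c₁ c₂ Wpinv R (V R) ∧ V R * Vinv R = 1)
    (f : Rd d → EuclideanSpace ℂ (Fin n)) (hf : ∀ i, Measurable fun x => f x i) :
    ∃ S ⊆ dyadicSubcubesOf a l, IsSparse (1/2) S ∧
      ∀ᵐ x ∂(volume.restrict (Set.univ.pi fun i => Set.Ico (a i) (a i + l))),
        ∀ r : ℝ, 0 < r →
          (MCGloc a l Wp Wpinv f x) ^ r ≤ (2 : ℝ≥0∞) ^ r *
            ∑' R : S, (R : Set (Rd d)).indicator
              (fun _ => (ENNReal.ofReal (matOpNorm (Wp x * V R) *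
                (⨍ y in (R : Set (Rd d)), ‖mvec (Vinv R) (mvec (Wpinv y) (f y))‖))) ^ r) x := by
  classical
  have hWinv : ∀ x, Wp x * Wpinv x = 1 := hW.2.2.2.2.1
  have hWm : ∀ i j, Measurable fun x => Wpinv x i j := hW.2.2.2.2.2.2
  have hVinv : ∀ R ∈ dyadicSubcubesOf a l, V R * Vinv R = 1 := fun R hR => (hV R hR).2
  refine ⟨Sfam a l Wpinv Vinv f, Sfam_subset_dyadic, Sfam_sparse hl hWm hf, ?_⟩
  apply Filter.Eventually.of_forall
  intro x r hr
  set T := ∑' R : (Sfam a l Wpinv Vinv f), (R : Set (Rd d)).indicator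
      (fun _ => (ENNReal.ofReal (matOpNorm (Wp x * V R) *
        (⨍ y in (R : Set (Rd d)), ‖mvec (Vinv R) (mvec (Wpinv y) (f y))‖))) ^ r) x with hTdef
  have hmain : ∀ P ∈ dyadicSubcubesOf a l, x ∈ P →
      (ENNReal.ofReal (⨍ y in P, ‖mvec (Wp x) (mvec (Wpinv y) (f y))‖)) ^ r
        ≤ (2 : ℝ≥0∞) ^ r * T := by
    intro P hP hxP
    rcases pointwise_core hl hWm hf Wp hWinv V hVinv x hP with h0 | ⟨R, hRS, hPR, hle⟩
    · rw [h0]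
      simp only [ENNReal.ofReal_zero, ENNReal.zero_rpow_of_pos hr]
      exact zero_le
    · set c := matOpNorm (Wp x * V R) *
        ⨍ y in R, ‖mvec (Vinv R) (mvec (Wpinv y) (f y))‖ with hcdef
      have hterm : ENNReal.ofReal (⨍ y in P, ‖mvec (Wp x) (mvec (Wpinv y) (f y))‖)
          ≤ 2 * ENNReal.ofReal c := by
        calc ENNReal.ofReal (⨍ y in P, ‖mvec (Wp x) (mvec (Wpinv y) (f y))‖)
            ≤ ENNReal.ofReal (2 * c) := ENNReal.ofReal_le_ofReal hle
        _ = 2 * ENNReal.ofReal c := by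
            rw [ENNReal.ofReal_mul (by norm_num)]
            norm_num
      calc (ENNReal.ofReal (⨍ y in P, ‖mvec (Wp x) (mvec (Wpinv y) (f y))‖)) ^ r
          ≤ (2 * ENNReal.ofReal c) ^ r := ENNReal.rpow_le_rpow hterm hr.le
      _ = 2 ^ r * (ENNReal.ofReal c) ^ r := ENNReal.mul_rpow_of_nonneg _ _ hr.le
      _ ≤ 2 ^ r * T := by
          apply mul_le_mul_right
          have hxR : x ∈ R := hPR hxP
          have hind : (R : Set (Rd d)).indicator
              (fun _ => (ENNReal.ofReal c) ^ r) x = (ENNReal.ofReal c) ^ r :=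
            Set.indicator_of_mem hxR _
          rw [hTdef, ← hind]
          exact ENNReal.le_tsum (⟨R, hRS⟩ : (Sfam a l Wpinv Vinv f))
  have hT : (2 : ℝ≥0∞) ^ r * T = (((2 : ℝ≥0∞) ^ r * T) ^ (1/r)) ^ r := by
    rw [← ENNReal.rpow_mul, one_div, inv_mul_cancel₀ (ne_of_gt hr), ENNReal.rpow_one]
  rw [hT, MCGloc]
  rw [ENNReal.rpow_le_rpow_iff hr]
  apply iSup_le
  intro P
  apply iSup_le
  intro hP
  apply iSup_le
  intro hxP
  rw [← ENNReal.rpow_le_rpow_iff hr, ← hT]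
  exact hmain P hP hxP
end
end

section
/- Let $1 < p < \infty$ and $0 < \epsilon \le 1$. Define the weight $w_\epsilon$ on $\mathbb{R}$ by $w_\epsilon(x) = \epsilon^{-1}$ for $|x| \le 1$ and $w_\epsilon(x) = |x|^{-(1-\epsilon)}$ for $|x| > 1$. Then $[w_\epsilon]_{A_p} \le C_p \, \epsilon^{-1}$ for a constant $C_p$ depending only on $p$. -/
open MeasureTheory ENNReal Set

noncomputable section

/-- `A ≥ [w]_{A_p}` for a weight on `ℝ`, with the supremum over intervals. -/
def ApBound1 (p : ℝ) (w : ℝ → ℝ) (A : ℝ) : Prop :=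
  ∀ a b : ℝ, a < b →
    (⨍ x in Set.Ioo a b, w x) * (⨍ x in Set.Ioo a b, w x ^ (-(1 / (p - 1)))) ^ (p - 1) ≤ A

/-- The (uncentered) Hardy–Littlewood maximal operator on `ℝ` (valued in `ℝ≥0∞`). -/
def maxOp1 (g : ℝ → ℝ) (x : ℝ) : ℝ≥0∞ :=
  ⨆ (a : ℝ) (b : ℝ) (_ : a < b) (_ : x ∈ Set.Icc a b),
    ENNReal.ofReal ((b - a)⁻¹ * ∫ y in a..b, |g y|)

/-- The operator `M_{w,p} f = w^{1/p} M(f w^{-1/p})`. -/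
def Mwp1 (p : ℝ) (w f : ℝ → ℝ) (x : ℝ) : ℝ≥0∞ :=
  ENNReal.ofReal (w x ^ (1 / p)) * maxOp1 (fun y => f y * w y ^ (-(1 / p))) x

/-- The weight `w_ε`: `ε⁻¹` on `[-1,1]` and `|x|^{-(1-ε)}` outside. -/
def weps (ε : ℝ) (x : ℝ) : ℝ := if |x| ≤ 1 then ε⁻¹ else |x| ^ (-(1 - ε))


namespace WepsAux

open Real

variable {ε p : ℝ}

lemma weps_pos (hε : 0 < ε) (x : ℝ) : 0 < weps ε x := by
  unfold weps
  split_ifs with h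
  · exact inv_pos.mpr hε
  · exact Real.rpow_pos_of_pos (lt_trans one_pos (not_le.mp h)) _

lemma weps_measurable (ε : ℝ) : Measurable (weps ε) := by
  unfold weps
  exact Measurable.ite (measurableSet_le (by fun_prop) measurable_const)
    measurable_const (by fun_prop)

lemma weps_le (hε : 0 < ε) (hε1 : ε ≤ 1) (x : ℝ) : weps ε x ≤ ε⁻¹ := by
  have h1ε : (1:ℝ) ≤ ε⁻¹ := by
    nlinarith [inv_pos.mpr hε, mul_inv_cancel₀ (ne_of_gt hε)]
  unfold weps
  split_ifs with h
  · exact le_refl _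
  · exact le_trans (Real.rpow_le_one_of_one_le_of_nonpos (not_le.mp h).le (by linarith)) h1ε

lemma weps_le_far (hε : 0 < ε) (hε1 : ε ≤ 1) {m x : ℝ} (hm : 0 < m) (hx : m ≤ |x|) :
    weps ε x ≤ ε⁻¹ * m ^ (-(1 - ε)) := by
  have h1ε : (1:ℝ) ≤ ε⁻¹ := by
    nlinarith [inv_pos.mpr hε, mul_inv_cancel₀ (ne_of_gt hε)]
  unfold weps
  split_ifs with h
  · have hm1 : m ≤ 1 := hx.trans h
    have h2 : 1 ≤ m ^ (-(1 - ε)) :=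
      Real.one_le_rpow_of_pos_of_le_one_of_nonpos hm hm1 (by linarith)
    calc ε⁻¹ = ε⁻¹ * 1 := (mul_one _).symm
    _ ≤ ε⁻¹ * m ^ (-(1 - ε)) := by
        exact mul_le_mul_of_nonneg_left h2 (inv_nonneg.mpr hε.le)
  · calc |x| ^ (-(1 - ε)) ≤ m ^ (-(1 - ε)) :=
        Real.rpow_le_rpow_of_nonpos hm hx (by linarith)
    _ = 1 * m ^ (-(1 - ε)) := (one_mul _).symm
    _ ≤ ε⁻¹ * m ^ (-(1 - ε)) :=
        mul_le_mul_of_nonneg_right h1ε (Real.rpow_nonneg hm.le _)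

lemma sigma_le (hp : 1 < p) (hε : 0 < ε) (hε1 : ε ≤ 1) {T x : ℝ} (hT : 1 ≤ T)
    (hx : |x| ≤ T) : weps ε x ^ (-(1 / (p - 1))) ≤ T ^ ((1 - ε) / (p - 1)) := by
  have hp1 : (0:ℝ) < p - 1 := by linarith
  have hq : (0:ℝ) ≤ 1 / (p - 1) := by positivity
  have hβ : (0:ℝ) ≤ (1 - ε) / (p - 1) := div_nonneg (by linarith) hp1.le
  unfold weps
  split_ifs with h
  · have h1 : (ε⁻¹ : ℝ) ^ (-(1 / (p - 1))) = ε ^ (1 / (p - 1)) := by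
      rw [Real.rpow_neg (inv_nonneg.mpr hε.le), Real.inv_rpow hε.le, inv_inv]
    rw [h1]
    calc ε ^ (1 / (p - 1)) ≤ 1 := Real.rpow_le_one hε.le hε1 hq
    _ ≤ T ^ ((1 - ε) / (p - 1)) := Real.one_le_rpow hT hβ
  · have habs : (0:ℝ) ≤ |x| := abs_nonneg x
    rw [← Real.rpow_mul habs]
    have he : -(1 - ε) * -(1 / (p - 1)) = (1 - ε) / (p - 1) := by ring
    rw [he]
    exact Real.rpow_le_rpow habs hx hβ

lemma avg_Ioo_nonneg {a b : ℝ} {f : ℝ → ℝ} (h0 : ∀ x, 0 ≤ f x) :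
    0 ≤ ⨍ x in Set.Ioo a b, f x := by
  rw [setAverage_eq, smul_eq_mul]
  exact mul_nonneg (by positivity)
    (setIntegral_nonneg measurableSet_Ioo fun x _ => h0 x)

lemma integrableOn_of_bdd {f : ℝ → ℝ} (hm : Measurable f) {K : ℝ}
    (hb : ∀ x, |f x| ≤ K) {s : Set ℝ} (hs : volume s ≠ ⊤) :
    MeasureTheory.IntegrableOn f s := by
  exact Measure.integrableOn_of_bounded hs hm.aestronglyMeasurable
    (Filter.Eventually.of_forall fun x => by simpa [Real.norm_eq_abs] using hb x)

lemma avg_Ioo_le {a b : ℝ} (hab : a < b) {f : ℝ → ℝ} (hm : Measurable f)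
    (h0 : ∀ x, 0 ≤ f x) {K : ℝ}
    (hK : ∀ x ∈ Set.Ioo a b, f x ≤ K) :
    ⨍ x in Set.Ioo a b, f x ≤ K := by
  have hvol : volume (Set.Ioo a b) = ENNReal.ofReal (b - a) := Real.volume_Ioo
  have hne : volume (Set.Ioo a b) ≠ ⊤ := by simp [hvol]
  have hint : MeasureTheory.IntegrableOn f (Set.Ioo a b) := by
    apply Measure.integrableOn_of_bounded hne hm.aestronglyMeasurable (M := K)
    filter_upwards [ae_restrict_mem measurableSet_Ioo] with x hx
    rw [Real.norm_eq_abs, abs_of_nonneg (h0 x)]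
    exact hK x hx
  have hKint : MeasureTheory.IntegrableOn (fun _ => K) (Set.Ioo a b) := by
    exact integrableOn_const (by rw [hvol]; exact ENNReal.ofReal_lt_top.ne)
  have h1 : ∫ x in Set.Ioo a b, f x ≤ K * (volume (Set.Ioo a b)).toReal := by
    calc ∫ x in Set.Ioo a b, f x ≤ ∫ _x in Set.Ioo a b, K :=
        setIntegral_mono_on hint hKint measurableSet_Ioo hK
    _ = (volume (Set.Ioo a b)).toReal • K := setIntegral_const K
    _ = K * (volume (Set.Ioo a b)).toReal := by rw [smul_eq_mul]; ring
  rw [setAverage_eq, smul_eq_mul]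
  have htpos : 0 < (volume (Set.Ioo a b)).toReal := by
    rw [hvol, ENNReal.toReal_ofReal (by linarith)]; linarith
  calc (volume (Set.Ioo a b)).toReal⁻¹ * ∫ x in Set.Ioo a b, f x
      ≤ (volume (Set.Ioo a b)).toReal⁻¹ * (K * (volume (Set.Ioo a b)).toReal) :=
        mul_le_mul_of_nonneg_left h1 (inv_nonneg.mpr htpos.le)
  _ = K := by
      rw [mul_comm K, ← mul_assoc, inv_mul_cancel₀ (ne_of_gt htpos), one_mul]

lemma int_weps_le (hε : 0 < ε) (hε1 : ε ≤ 1) {T : ℝ} (hT : 1 ≤ T) :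
    ∫ x in Set.Ioc (-T) T, weps ε x ≤ 2 * T ^ ε / ε := by
  have hb : ∀ x, |weps ε x| ≤ ε⁻¹ := fun x => by
    rw [abs_of_pos (weps_pos hε x)]; exact weps_le hε hε1 x
  have hint : ∀ u v : ℝ, MeasureTheory.IntegrableOn (weps ε) (Set.Ioc u v) :=
    fun u v => integrableOn_of_bdd (weps_measurable ε) hb (by simp)
  have e1 : Set.Ioc (-T) T = (Set.Ioc (-T) (-1) ∪ Set.Ioc (-1) 1) ∪ Set.Ioc 1 T := by
    rw [Set.Ioc_union_Ioc_eq_Ioc (by linarith) (by linarith),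
      Set.Ioc_union_Ioc_eq_Ioc (by linarith) (by linarith)]
  have hdisj1 : Disjoint (Set.Ioc (-T:ℝ) (-1)) (Set.Ioc (-1:ℝ) 1) :=
    Set.Ioc_disjoint_Ioc_of_le le_rfl
  have hdisj2 : Disjoint (Set.Ioc (-T:ℝ) (-1) ∪ Set.Ioc (-1:ℝ) 1) (Set.Ioc (1:ℝ) T) := by
    rw [Set.Ioc_union_Ioc_eq_Ioc (by linarith) (by linarith)]
    exact Set.Ioc_disjoint_Ioc_of_le le_rfl
  rw [e1, setIntegral_union hdisj2 measurableSet_Ioc ((hint _ _).union (hint _ _)) (hint _ _),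
    setIntegral_union hdisj1 measurableSet_Ioc (hint _ _) (hint _ _)]
  -- middle piece
  have t2 : ∫ x in Set.Ioc (-1:ℝ) 1, weps ε x = 2 * ε⁻¹ := by
    rw [setIntegral_congr_fun measurableSet_Ioc
      (fun x hx => by
        show weps ε x = ε⁻¹
        unfold weps
        rw [if_pos (abs_le.mpr ⟨hx.1.le, hx.2⟩)])]
    rw [setIntegral_const, Real.volume_real_Ioc_of_le (by norm_num),
      smul_eq_mul]
    norm_num
  -- right piece
  have t3 : ∫ x in Set.Ioc (1:ℝ) T, weps ε x = (T ^ ε - 1) / ε := by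
    rw [setIntegral_congr_fun measurableSet_Ioc
      (fun x hx => by
        show weps ε x = x ^ (ε - 1)
        have hx1 : (1:ℝ) < x := hx.1
        unfold weps
        rw [if_neg (by rw [abs_of_pos (by linarith)]; linarith),
          abs_of_pos (by linarith : (0:ℝ) < x)]
        norm_num)]
    rw [← intervalIntegral.integral_of_le (by linarith),
      integral_rpow (Or.inl (by linarith))]
    have he : ε - 1 + 1 = ε := by ring
    rw [he, Real.one_rpow]
  -- left piece
  have t1 : ∫ x in Set.Ioc (-T) (-1:ℝ), weps ε x = (T ^ ε - 1) / ε := by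
    rw [integral_Ioc_eq_integral_Ioo]
    rw [setIntegral_congr_fun measurableSet_Ioo
      (fun x hx => by
        show weps ε x = (-x) ^ (ε - 1)
        have hx1 : x < -1 := hx.2
        have hx0 : x < 0 := by linarith
        unfold weps
        rw [if_neg (by rw [abs_of_neg hx0]; linarith), abs_of_neg hx0]
        congr 1
        ring)]
    rw [← integral_Ioc_eq_integral_Ioo, ← intervalIntegral.integral_of_le (by linarith),
      intervalIntegral.integral_comp_neg (fun y => y ^ (ε - 1))]
    simp only [neg_neg]
    rw [integral_rpow (Or.inl (by linarith))]
    have he : ε - 1 + 1 = ε := by ring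
    rw [he, Real.one_rpow]
  rw [t1, t2, t3]
  apply le_of_eq
  field_simp
  ring

end WepsAux

/-- The `A_p` characteristic of the weight `w_ε` is at most `C_p / ε`. -/
theorem stmt11 (p : ℝ) (hp : 1 < p) :
    ∃ C > 0, ∀ ε : ℝ, 0 < ε → ε ≤ 1 → ApBound1 p (weps ε) (C / ε) := by
  refine ⟨8, by norm_num, fun ε hε hε1 a b hab => ?_⟩
  have hp1 : (0:ℝ) < p - 1 := by linarith
  set β : ℝ := (1 - ε) / (p - 1) with hβdef
  have hβ0 : 0 ≤ β := div_nonneg (by linarith) hp1.le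
  have hβp : β * (p - 1) = 1 - ε := div_mul_cancel₀ _ (ne_of_gt hp1)
  set L : ℝ := b - a with hLdef
  have hL0 : 0 < L := by rw [hLdef]; linarith
  set M : ℝ := max |a| |b| with hMdef
  set m : ℝ := min |a| |b| with hmdef
  have hm0 : 0 ≤ m := le_min (abs_nonneg a) (abs_nonneg b)
  have hMm : M ≤ m + L := by
    have h1 : |a| - |b| ≤ |a - b| := abs_sub_abs_le_abs_sub a b
    have h2 : |b| - |a| ≤ |b - a| := abs_sub_abs_le_abs_sub b a
    have h4 : |b - a| = L := by
      rw [abs_of_pos (by linarith : (0:ℝ) < b - a)]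
    have h3 : |a - b| = L := by rw [abs_sub_comm]; exact h4
    rcases le_total |a| |b| with h | h
    · rw [hMdef, hmdef, max_eq_right h, min_eq_left h]; linarith
    · rw [hMdef, hmdef, max_eq_left h, min_eq_right h]; linarith
  have hxM : ∀ x ∈ Set.Ioo a b, |x| ≤ M := fun x hx =>
    abs_le_max_abs_abs hx.1.le hx.2.le
  have hσm : Measurable (fun x => weps ε x ^ (-(1 / (p - 1)))) := by
    have := WepsAux.weps_measurable ε
    fun_prop
  have hσ0 : ∀ x, 0 ≤ weps ε x ^ (-(1 / (p - 1))) := fun x =>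
    Real.rpow_nonneg (WepsAux.weps_pos hε x).le _
  have hw0 : ∀ x, 0 ≤ weps ε x := fun x => (WepsAux.weps_pos hε x).le
  have hwle : ∀ x, weps ε x ≤ ε⁻¹ := WepsAux.weps_le hε hε1
  have hB0 : 0 ≤ ⨍ x in Set.Ioo a b, weps ε x ^ (-(1 / (p - 1))) :=
    WepsAux.avg_Ioo_nonneg hσ0
  have hA0 : 0 ≤ ⨍ x in Set.Ioo a b, weps ε x := WepsAux.avg_Ioo_nonneg hw0
  have hεinv0 : (0:ℝ) ≤ ε⁻¹ := inv_nonneg.mpr hε.le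
  have htwo : ∀ c : ℝ, 0 < c → c ≤ 8 → c / ε ≤ 8 / ε := fun c hc hc8 => by gcongr
  have hinvdiv : ε⁻¹ * 2 = 2 / ε := by rw [mul_comm, div_eq_mul_inv]
  have key : ∀ Kw Kσ : ℝ, 0 ≤ Kw →
      (∀ x ∈ Set.Ioo a b, weps ε x ≤ Kw) →
      (∀ x ∈ Set.Ioo a b, weps ε x ^ (-(1 / (p - 1))) ≤ Kσ) →
      (⨍ x in Set.Ioo a b, weps ε x) *
        (⨍ x in Set.Ioo a b, weps ε x ^ (-(1 / (p - 1)))) ^ (p - 1)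
        ≤ Kw * Kσ ^ (p - 1) := by
    intro Kw Kσ hKw0 hKw hKσ
    have hA : ⨍ x in Set.Ioo a b, weps ε x ≤ Kw :=
      WepsAux.avg_Ioo_le hab (WepsAux.weps_measurable ε) hw0 hKw
    have hB : ⨍ x in Set.Ioo a b, weps ε x ^ (-(1 / (p - 1))) ≤ Kσ :=
      WepsAux.avg_Ioo_le hab hσm hσ0 hKσ
    have hBp : (⨍ x in Set.Ioo a b, weps ε x ^ (-(1 / (p - 1)))) ^ (p - 1)
        ≤ Kσ ^ (p - 1) := Real.rpow_le_rpow hB0 hB (by linarith)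
    exact mul_le_mul hA hBp (Real.rpow_nonneg hB0 _) hKw0
  have h2le : ∀ δ : ℝ, δ ≤ 1 → (2:ℝ) ^ δ ≤ 2 := fun δ hδ => by
    calc (2:ℝ) ^ δ ≤ (2:ℝ) ^ (1:ℝ) := Real.rpow_le_rpow_of_exponent_le one_le_two hδ
    _ = 2 := Real.rpow_one 2
  rcases le_or_gt M 1 with hM1 | hM1
  · -- Case 0 : the interval is inside [-1,1]
    have h := key ε⁻¹ ((1:ℝ) ^ β) hεinv0 (fun x _ => hwle x)
      (fun x hx => WepsAux.sigma_le hp hε hε1 le_rfl ((hxM x hx).trans hM1))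
    refine le_trans h ?_
    rw [Real.one_rpow, Real.one_rpow, mul_one, inv_eq_one_div]
    exact htwo 1 one_pos (by norm_num)
  · rcases lt_or_ge L m with hfar | hnear
    · -- Case 2b : interval far from the origin
      have hmpos : 0 < m := hL0.trans hfar
      have hM0 : (0:ℝ) < M := by linarith
      have hmx : ∀ x ∈ Set.Ioo a b, m ≤ |x| := by
        intro x hx
        by_cases ha0 : 0 < a
        · have h1 : m ≤ a := by
            rw [hmdef]
            exact le_trans (min_le_left _ _) (le_of_eq (abs_of_pos ha0))
          rw [abs_of_pos (lt_trans ha0 hx.1)]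
          linarith [hx.1]
        · have hb0 : b < 0 := by
            by_contra hb0'
            push_neg at hb0'
            have h1 : |a| ≤ L := by
              rw [abs_of_nonpos (not_lt.mp ha0), hLdef]; linarith
            have h2 : m ≤ L := le_trans (min_le_left _ _) h1
            linarith
          have hx0 : x < 0 := lt_trans hx.2 hb0
          rw [abs_of_neg hx0]
          have h1 : m ≤ |b| := min_le_right _ _
          rw [abs_of_neg hb0] at h1
          linarith [hx.2]
      have h := key (ε⁻¹ * m ^ (-(1 - ε))) (M ^ β) (by positivity)
        (fun x hx => WepsAux.weps_le_far hε hε1 hmpos (hmx x hx))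
        (fun x hx => WepsAux.sigma_le hp hε hε1 hM1.le (hxM x hx))
      refine le_trans h ?_
      have e1 : (M ^ β) ^ (p - 1) = M ^ (1 - ε) := by
        rw [← Real.rpow_mul hM0.le, hβp]
      rw [e1]
      have em : ε⁻¹ * m ^ (-(1 - ε)) * M ^ (1 - ε) = ε⁻¹ * (M / m) ^ (1 - ε) := by
        rw [Real.rpow_neg hmpos.le, Real.div_rpow hM0.le hmpos.le]
        field_simp
      rw [em]
      have h2 : (M / m) ^ (1 - ε) ≤ 2 := by
        calc (M / m) ^ (1 - ε) ≤ (2:ℝ) ^ (1 - ε) :=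
            Real.rpow_le_rpow (by positivity)
              ((div_le_iff₀ hmpos).mpr (by linarith)) (by linarith)
        _ ≤ 2 := h2le _ (by linarith)
      calc ε⁻¹ * (M / m) ^ (1 - ε) ≤ ε⁻¹ * 2 :=
          mul_le_mul_of_nonneg_left h2 hεinv0
      _ = 2 / ε := hinvdiv
      _ ≤ 8 / ε := htwo 2 two_pos (by norm_num)
    · rcases le_or_gt L 1 with hL1 | hL1
      · -- Case 1a : short interval near the origin
        have hM2 : M ≤ 2 := by linarith
        have h := key ε⁻¹ ((2:ℝ) ^ β) hεinv0 (fun x _ => hwle x)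
          (fun x hx => WepsAux.sigma_le hp hε hε1 one_le_two ((hxM x hx).trans hM2))
        refine le_trans h ?_
        have e1 : ((2:ℝ) ^ β) ^ (p - 1) = 2 ^ (1 - ε) := by
          rw [← Real.rpow_mul (by norm_num), hβp]
        rw [e1]
        calc ε⁻¹ * (2:ℝ) ^ (1 - ε) ≤ ε⁻¹ * 2 :=
            mul_le_mul_of_nonneg_left (h2le _ (by linarith)) hεinv0
        _ = 2 / ε := hinvdiv
        _ ≤ 8 / ε := htwo 2 two_pos (by norm_num)
      · -- Case 1b : long interval near the origin
        have hM2L : M ≤ 2 * L := by linarith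
        have h2L1 : (1:ℝ) ≤ 2 * L := by linarith
        have h2L0 : (0:ℝ) < 2 * L := by linarith
        have hA : ⨍ x in Set.Ioo a b, weps ε x ≤ L⁻¹ * (2 * (2 * L) ^ ε / ε) := by
          have hsub : Set.Ioo a b ⊆ Set.Ioc (-(2 * L)) (2 * L) := by
            intro x hx
            have hxa : -(2 * L) ≤ a := by
              have : |a| ≤ 2 * L := le_trans (le_max_left _ _) hM2L
              have := neg_abs_le a
              linarith
            have hxb : b ≤ 2 * L := by
              have : |b| ≤ 2 * L := le_trans (le_max_right _ _) hM2L
              linarith [le_abs_self b]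
            exact ⟨lt_of_le_of_lt hxa hx.1, le_trans hx.2.le hxb⟩
          have hbd : ∀ x, |weps ε x| ≤ ε⁻¹ := fun x => by
            rw [abs_of_pos (WepsAux.weps_pos hε x)]; exact hwle x
          have hintbig : MeasureTheory.IntegrableOn (weps ε)
              (Set.Ioc (-(2 * L)) (2 * L)) :=
            WepsAux.integrableOn_of_bdd (WepsAux.weps_measurable ε) hbd (by simp)
          have hmono : ∫ x in Set.Ioo a b, weps ε x
              ≤ ∫ x in Set.Ioc (-(2 * L)) (2 * L), weps ε x :=
            setIntegral_mono_set hintbig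
              (Filter.Eventually.of_forall fun x => hw0 x)
              (HasSubset.Subset.eventuallyLE hsub)
          have hIT : ∫ x in Set.Ioc (-(2 * L)) (2 * L), weps ε x
              ≤ 2 * (2 * L) ^ ε / ε := WepsAux.int_weps_le hε hε1 h2L1
          rw [setAverage_eq, Real.volume_real_Ioo_of_le hab.le, ← hLdef,
            smul_eq_mul]
          exact mul_le_mul_of_nonneg_left (le_trans hmono hIT)
            (inv_nonneg.mpr hL0.le)
        have hBavg : ⨍ x in Set.Ioo a b, weps ε x ^ (-(1 / (p - 1))) ≤ (2 * L) ^ β :=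
          WepsAux.avg_Ioo_le hab hσm hσ0 (fun x hx =>
            WepsAux.sigma_le hp hε hε1 h2L1 (le_trans (hxM x hx) hM2L))
        have hBp : (⨍ x in Set.Ioo a b, weps ε x ^ (-(1 / (p - 1)))) ^ (p - 1)
            ≤ ((2 * L) ^ β) ^ (p - 1) := Real.rpow_le_rpow hB0 hBavg (by linarith)
        have step : (⨍ x in Set.Ioo a b, weps ε x) *
            (⨍ x in Set.Ioo a b, weps ε x ^ (-(1 / (p - 1)))) ^ (p - 1)
            ≤ (L⁻¹ * (2 * (2 * L) ^ ε / ε)) * ((2 * L) ^ β) ^ (p - 1) :=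
          mul_le_mul hA hBp (Real.rpow_nonneg hB0 _) (by positivity)
        refine le_trans step ?_
        have e1 : ((2 * L) ^ β) ^ (p - 1) = (2 * L) ^ (1 - ε) := by
          rw [← Real.rpow_mul h2L0.le, hβp]
        rw [e1]
        have e2 : (2 * L) ^ ε * (2 * L) ^ (1 - ε) = 2 * L := by
          rw [← Real.rpow_add h2L0]
          have : ε + (1 - ε) = 1 := by ring
          rw [this, Real.rpow_one]
        calc (L⁻¹ * (2 * (2 * L) ^ ε / ε)) * (2 * L) ^ (1 - ε)
            = 2 * ((2 * L) ^ ε * (2 * L) ^ (1 - ε)) * (L⁻¹ / ε) := by ring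
          _ = 2 * (2 * L) * (L⁻¹ / ε) := by rw [e2]
          _ = 4 * (L * L⁻¹) / ε := by ring
          _ = 4 / ε := by rw [mul_inv_cancel₀ (ne_of_gt hL0), mul_one]
          _ ≤ 8 / ε := htwo 4 (by norm_num) (by norm_num)
end
end

section
/- Let $1 < p < \infty$, $0 < \epsilon \le 1$, and let $w_\epsilon(x) = \epsilon^{-1}$ for $|x| \le 1$, $w_\epsilon(x) = |x|^{-(1-\epsilon)}$ for $|x| > 1$. If $\mathcal{N}$ is a constant such that $\|w_\epsilon^{1/p} H(f w_\epsilon^{-1/p})\|_{L^{p,\infty}} \le \mathcal{N}\|f\|_{L^p}$ for all $f \in L^p(\mathbb{R})$, where $H$ is the Hilbert transform and $p \ge 2$, then $\mathcal{N} \ge c_p \epsilon^{-1}$; in particular, by duality one has $(\int_0^1 w_\epsilon^{1/p} dx)(\int_2^\infty \frac{w_\epsilon^{-1/(p-1)}(x)}{x^{p'}} dx)^{1/p'} \le C \mathcal{N}$ and the left-hand side is comparable to $\epsilon^{-1}$. -/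
open MeasureTheory ENNReal Set

noncomputable section

/-- The Hilbert transform, as a principal value. -/
def hilbertT (f : ℝ → ℝ) (x : ℝ) : ℝ :=
  Filter.limUnder (nhdsWithin 0 (Set.Ioi 0)) fun ε : ℝ => ∫ t in {t | ε < |x - t|}, f t / (x - t)

section AuxStmt12


private lemma measurable_rpow_const_aux (c : ℝ) : Measurable fun x : ℝ => x ^ c := by
  have h : (fun x : ℝ => x ^ c) = fun x =>
      if x = 0 then (0:ℝ) ^ c
      else if 0 < x then Real.exp (Real.log x * c)
      else Real.exp (Real.log x * c) * Real.cos (c * Real.pi) := by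
    funext x
    rcases lt_trichotomy x 0 with hx | hx | hx
    · rw [if_neg (ne_of_lt hx), if_neg (not_lt.mpr hx.le), Real.rpow_def_of_neg hx,
        mul_comm c Real.pi]
    · rw [hx, if_pos rfl]
    · rw [if_neg (ne_of_gt hx), if_pos hx, Real.rpow_def_of_pos hx]
  rw [h]
  exact Measurable.ite measurableSet_eq measurable_const
    (Measurable.ite (measurableSet_lt measurable_const measurable_id)
      ((measurable_id.log.mul_const c).exp)
      (((measurable_id.log.mul_const c).exp).mul_const _))

private lemma weps_pos' {e : ℝ} (he : 0 < e) (x : ℝ) : 0 < weps e x := by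
  unfold weps
  split
  · positivity
  · next h =>
    push_neg at h
    exact Real.rpow_pos_of_pos (lt_trans one_pos h) _

private lemma weps_of_abs_le' {e x : ℝ} (hx : |x| ≤ 1) : weps e x = e⁻¹ := if_pos hx

private lemma weps_of_gt' {e x : ℝ} (hx : 1 < x) : weps e x = x ^ (-(1 - e)) := by
  have hx0 : (0:ℝ) < x := lt_trans one_pos hx
  rw [weps, if_neg (by rw [abs_of_pos hx0]; linarith), abs_of_pos hx0]

private lemma weps_meas' (e : ℝ) : Measurable (weps e) := by
  unfold weps
  exact Measurable.ite (measurableSet_le measurable_id.abs measurable_const)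
    measurable_const ((measurable_rpow_const_aux _).comp measurable_id.abs)

private lemma int_Ioi_two' {a : ℝ} (ha : a < -1) :
    ∫ t : ℝ in Set.Ioi (2:ℝ), t ^ a = (2:ℝ) ^ (a + 1) / (-(a + 1)) := by
  rw [integral_Ioi_rpow_of_lt ha (by norm_num), neg_div, div_neg]

end AuxStmt12

set_option maxHeartbeats 1000000 in
/-- Proof of Theorem 1.4 via the weight `w_ε`: any weak-type constant `𝒩` for
`H_{w_ε,p}` satisfies `𝒩 ≳ ε⁻¹`; by duality the quantity
`(∫_0^1 w_ε^{1/p})(∫_2^∞ w_ε^{-1/(p-1)}(x) x^{-p'} dx)^{1/p'}` is `≲ 𝒩` and is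
comparable to `ε⁻¹`. -/


theorem stmt12 (p : ℝ) (hp : 2 ≤ p) :
    ∃ c C : ℝ, 0 < c ∧ 0 < C ∧
      ∀ ε : ℝ, 0 < ε → ε ≤ 1 →
      ∀ L : ℝ, L = (∫ x in Set.Ioc (0 : ℝ) 1, weps ε x ^ (1 / p)) *
          (∫ x in Set.Ioi (2 : ℝ), weps ε x ^ (-(1 / (p - 1))) / x ^ (p / (p - 1))) ^ ((p - 1) / p) →
      ∀ N : ℝ, 0 ≤ N →
        (∀ f : ℝ → ℝ, MemLp f (ENNReal.ofReal p) volume →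
          weakNorm volume p
              (fun x => weps ε x ^ (1 / p) * hilbertT (fun y => f y * weps ε y ^ (-(1 / p))) x)
            ≤ ENNReal.ofReal N * eLpNorm f (ENNReal.ofReal p) volume) →
        c / ε ≤ N ∧ L ≤ C * N ∧ c / ε ≤ L ∧ L ≤ C / ε := by
  have hp1 : (1:ℝ) < p := lt_of_lt_of_le one_lt_two hp
  have hp0 : (0:ℝ) < p := lt_trans one_pos hp1
  have hpm1 : (0:ℝ) < p - 1 := by linarith
  have hpm1' : (1:ℝ) ≤ p - 1 := by linarith
  set K : ℝ := (p - 1) ^ ((p - 1) / p) with hKdef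
  have hK1 : 1 ≤ K := Real.one_le_rpow hpm1' (by positivity)
  have hK0 : 0 < K := lt_of_lt_of_le one_pos hK1
  refine ⟨1/4, 4 * K, by norm_num, by positivity, ?_⟩
  intro ε hε hε1 L hL N hN0 hyp
  have hεinv : (0:ℝ) < ε⁻¹ := inv_pos.mpr hε
  -- ### Part 1 : the value of L
  set δ : ℝ := ε / (p - 1) with hδdef
  have hδ0 : 0 < δ := by positivity
  have hδ1 : δ ≤ 1 := by rw [hδdef, div_le_one hpm1]; linarith
  have hA : (∫ x in Set.Ioc (0:ℝ) 1, weps ε x ^ (1 / p)) = ε⁻¹ ^ (1 / p) := by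
    rw [setIntegral_congr_fun measurableSet_Ioc
      (g := fun _ => ε⁻¹ ^ (1 / p)) (fun x hx => by
        rw [weps_of_abs_le' (by rw [abs_of_pos hx.1]; exact hx.2)])]
    rw [setIntegral_const]
    simp [Real.volume_Ioc]
  have hB : (∫ x in Set.Ioi (2:ℝ), weps ε x ^ (-(1 / (p - 1))) / x ^ (p / (p - 1)))
      = 2 ^ (-δ) / δ := by
    rw [setIntegral_congr_fun measurableSet_Ioi
      (g := fun x => x ^ (-1 - δ)) (fun x hx => by
        have hx2 : (2:ℝ) < x := hx
        have hx0 : (0:ℝ) < x := by linarith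
        have hpne : p - 1 ≠ 0 := ne_of_gt hpm1
        rw [weps_of_gt' (by linarith), ← Real.rpow_mul hx0.le, ← Real.rpow_sub hx0]
        congr 1
        rw [hδdef]
        field_simp
        ring)]
    rw [int_Ioi_two' (by linarith), show (-1 - δ) + 1 = -δ by ring, neg_neg]
  have hLval : L = ε⁻¹ ^ (1/p) * (2 ^ (-δ)/δ) ^ ((p-1)/p) := by
    rw [hL, hA, hB]
  have hsum1 : 1/p + (p-1)/p = 1 := by field_simp; ring
  have hLub : L ≤ K / ε := by
    rw [hLval]
    have h2 : (2:ℝ) ^ (-δ) ≤ 1 :=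
      Real.rpow_le_one_of_one_le_of_nonpos one_le_two (by linarith)
    have h1 : (2 ^ (-δ)/δ) ^ ((p-1)/p) ≤ ((p-1) * ε⁻¹) ^ ((p-1)/p) := by
      apply Real.rpow_le_rpow (by positivity) ?_ (by positivity)
      have heq : (1:ℝ)/δ = (p-1) * ε⁻¹ := by
        rw [hδdef]; field_simp
      calc 2 ^ (-δ)/δ ≤ 1/δ := by gcongr
        _ = (p-1) * ε⁻¹ := heq
    calc ε⁻¹ ^ (1/p) * (2 ^ (-δ)/δ) ^ ((p-1)/p)
        ≤ ε⁻¹ ^ (1/p) * ((p-1) * ε⁻¹) ^ ((p-1)/p) := by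
          exact mul_le_mul_of_nonneg_left h1 (by positivity)
      _ = K * (ε⁻¹ ^ (1/p) * ε⁻¹ ^ ((p-1)/p)) := by
          rw [Real.mul_rpow (by linarith) (by positivity)]; ring
      _ = K * ε⁻¹ := by rw [← Real.rpow_add hεinv, hsum1, Real.rpow_one]
      _ = K / ε := by rw [div_eq_mul_inv]
  have hLlb : 1/(2*ε) ≤ L := by
    rw [hLval]
    have h2 : (1:ℝ)/2 ≤ 2 ^ (-δ) := by
      have h := Real.rpow_le_rpow_of_exponent_le one_le_two (neg_le_neg hδ1)
      rwa [Real.rpow_neg_one, ← one_div] at h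
    have hδε : δ ≤ ε := by
      rw [hδdef, div_le_iff₀ hpm1]; nlinarith
    have h3 : (2*ε)⁻¹ ≤ 2 ^ (-δ)/δ := by
      have e1 : (2*ε)⁻¹ = (1/2)/ε := by field_simp
      calc (2*ε)⁻¹ = (1/2)/ε := e1
        _ ≤ (1/2)/δ := by gcongr
        _ ≤ 2 ^ (-δ)/δ := by gcongr
    have h4 : (2*ε)⁻¹ ≤ ε⁻¹ := by gcongr; linarith
    calc 1/(2*ε) = ((2*ε)⁻¹) ^ (1/p) * ((2*ε)⁻¹) ^ ((p-1)/p) := by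
          rw [← Real.rpow_add (by positivity), hsum1, Real.rpow_one, one_div]
      _ ≤ ε⁻¹ ^ (1/p) * (2 ^ (-δ)/δ) ^ ((p-1)/p) := by
          exact mul_le_mul (Real.rpow_le_rpow (by positivity) h4 (by positivity))
            (Real.rpow_le_rpow (by positivity) h3 (by positivity)) (by positivity) (by positivity)
  -- ### Part 2 : lower bound for N
  set s : ℝ := 2 * ε / p with hsdef
  have hs0 : 0 < s := by positivity
  have hs1 : s ≤ 1 := by rw [hsdef, div_le_one hp0]; nlinarith
  set g : ℝ → ℝ := fun t => if 2 < t then t ^ (-s) else 0 with hgdef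
  set f : ℝ → ℝ := fun t => g t * weps ε t ^ (1/p) with hfdef
  have hfw : (fun y => f y * weps ε y ^ (-(1 / p))) = g := by
    funext t
    have hw := weps_pos' hε t
    simp only [hfdef]
    rw [mul_assoc, ← Real.rpow_add hw, add_neg_cancel, Real.rpow_zero, mul_one]
  have hgmeas : Measurable g := by
    rw [hgdef]
    exact Measurable.ite (measurableSet_lt measurable_const measurable_id)
      (measurable_rpow_const_aux _) measurable_const
  have hfmeas : Measurable f := by
    rw [hfdef]
    exact hgmeas.mul ((measurable_rpow_const_aux _).comp (weps_meas' ε))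
  have hFeq : ∀ t, |f t| ^ p = (if 2 < t then t ^ (-1-ε) else 0) := by
    intro t
    by_cases h : 2 < t
    · have ht0 : (0:ℝ) < t := by linarith
      simp only [hfdef, hgdef, if_pos h]
      rw [weps_of_gt' (by linarith), ← Real.rpow_mul ht0.le, ← Real.rpow_add ht0,
        abs_of_nonneg (Real.rpow_nonneg ht0.le _), ← Real.rpow_mul ht0.le]
      congr 1
      rw [hsdef]
      field_simp
      ring
    · simp only [hfdef, hgdef, if_neg h, zero_mul, abs_zero]
      exact Real.zero_rpow (ne_of_gt hp0)
  have hFind : (fun t : ℝ => if 2 < t then t ^ (-1-ε) else 0)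
      = (Set.Ioi (2:ℝ)).indicator (fun t => t ^ (-1-ε)) := by
    funext t; simp [Set.indicator, Set.mem_Ioi]
  have hFint : Integrable (fun t : ℝ => if 2 < t then t ^ (-1-ε) else 0) volume := by
    rw [hFind]
    exact (integrableOn_Ioi_rpow_of_lt (by linarith) (by norm_num)).integrable_indicator
      measurableSet_Ioi
  have hFval : (∫ t : ℝ, (if 2 < t then t ^ (-1-ε) else 0)) = 2 ^ (-ε) / ε := by
    rw [hFind, integral_indicator measurableSet_Ioi, int_Ioi_two' (by linarith),
      show (-1 - ε) + 1 = -ε by ring, neg_neg]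
  have hFabs : (fun t => |f t| ^ p) = fun t : ℝ => if 2 < t then t ^ (-1-ε) else 0 :=
    funext hFeq
  have heLp : eLpNorm f (ENNReal.ofReal p) volume = ENNReal.ofReal (2 ^ (-ε) / ε) ^ (1/p) := by
    rw [eLpNorm_eq_lintegral_rpow_enorm_toReal
      (by simp [ENNReal.ofReal_eq_zero]; linarith) ENNReal.ofReal_ne_top]
    rw [ENNReal.toReal_ofReal hp0.le]
    rw [one_div]
    congr 1
    calc (∫⁻ x, ‖f x‖ₑ ^ p) = ∫⁻ x, ENNReal.ofReal (|f x| ^ p) := by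
          apply lintegral_congr
          intro x
          rw [Real.enorm_eq_ofReal_abs, ENNReal.ofReal_rpow_of_nonneg (abs_nonneg _) hp0.le]
      _ = ENNReal.ofReal (∫ x, |f x| ^ p) := by
          rw [ofReal_integral_eq_lintegral_ofReal (hFabs ▸ hFint)
            (Filter.Eventually.of_forall fun x => Real.rpow_nonneg (abs_nonneg _) p)]
      _ = ENNReal.ofReal (2 ^ (-ε) / ε) := by
          rw [show (∫ x, |f x| ^ p) = ∫ t : ℝ, (if 2 < t then t ^ (-1-ε) else 0) from by
            rw [← hFabs], hFval]
  have heLp_le : eLpNorm f (ENNReal.ofReal p) volume ≤ ENNReal.ofReal (ε⁻¹ ^ (1/p)) := by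
    rw [heLp, ← ENNReal.ofReal_rpow_of_nonneg (by positivity) (by positivity)]
    apply ENNReal.rpow_le_rpow _ (by positivity)
    apply ENNReal.ofReal_le_ofReal
    have h2 : (2:ℝ) ^ (-ε) ≤ 1 :=
      Real.rpow_le_one_of_one_le_of_nonpos one_le_two (by linarith)
    rw [inv_eq_one_div]
    gcongr
  have hMem : MemLp f (ENNReal.ofReal p) volume :=
    ⟨hfmeas.aestronglyMeasurable, by
      rw [heLp]
      exact ENNReal.rpow_lt_top_of_nonneg (by positivity) ENNReal.ofReal_ne_top⟩
  -- the Hilbert transform of g on (0,1)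
  have hHil : ∀ x ∈ Set.Ioo (0:ℝ) 1, 2 ^ (-s) / s ≤ |hilbertT g x| := by
    intro x hx
    have hx0 : (0:ℝ) < x := hx.1
    have hx1 : x < 1 := hx.2
    set I : ℝ := ∫ t in Set.Ioi (2:ℝ), t ^ (-s) / (x - t) with hIdef
    have hbase : IntegrableOn (fun t : ℝ => t ^ (-1-s)) (Set.Ioi 2) volume :=
      integrableOn_Ioi_rpow_of_lt (by linarith) (by norm_num)
    have hint2 : IntegrableOn (fun t : ℝ => t ^ (-s) / (t - x)) (Set.Ioi 2) volume := by
      apply Integrable.mono' (hbase.const_mul 2)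
      · exact ((measurable_rpow_const_aux (-s)).div (measurable_id.sub_const x)).aestronglyMeasurable
      · filter_upwards [ae_restrict_mem measurableSet_Ioi] with t ht
        have h2t : (2:ℝ) < t := ht
        have ht0 : (0:ℝ) < t := by linarith
        have htx : 0 < t - x := by linarith
        rw [Real.norm_eq_abs, abs_of_nonneg (by positivity)]
        have hts : t ^ (-1 - s) = t ^ (-s) / t := by
          rw [show (-1 - s : ℝ) = -s - 1 by ring, Real.rpow_sub_one (ne_of_gt ht0)]
        calc t ^ (-s) / (t - x) ≤ t ^ (-s) / (t/2) := by
              gcongr <;> linarith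
          _ = 2 * t ^ (-1-s) := by
              rw [hts]; field_simp
    have htrunc : ∀ r ∈ Set.Ioo (0:ℝ) 1,
        (∫ t in {t | r < |x - t|}, g t / (x - t)) = I := by
      intro r hr
      have hind : (fun t => g t / (x - t))
          = (Set.Ioi (2:ℝ)).indicator (fun t => t ^ (-s) / (x - t)) := by
        funext t
        simp only [hgdef, Set.indicator, Set.mem_Ioi]
        split
        · rfl
        · rw [zero_div]
      rw [hind, setIntegral_indicator measurableSet_Ioi,
        Set.inter_eq_right.mpr (fun t ht => by
          have h2t : (2:ℝ) < t := ht
          have habs : |x - t| = t - x := by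
            rw [abs_sub_comm, abs_of_pos (by linarith)]
          simp only [Set.mem_setOf_eq, habs]
          linarith [hr.2])]
    have hHval : hilbertT g x = I := by
      apply Filter.Tendsto.limUnder_eq
      apply Filter.Tendsto.congr' _ tendsto_const_nhds
      filter_upwards [Ioo_mem_nhdsGT_of_mem (Set.left_mem_Ico.mpr one_pos)] with r hr
      exact (htrunc r hr).symm
    have hneg : -I = ∫ t in Set.Ioi (2:ℝ), t ^ (-s) / (t - x) := by
      rw [hIdef, ← integral_neg]
      apply setIntegral_congr_fun measurableSet_Ioi
      intro t ht
      show -(t ^ (-s) / (x - t)) = t ^ (-s) / (t - x)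
      rw [show x - t = -(t - x) by ring, div_neg, neg_neg]
    have hmono : (∫ t in Set.Ioi (2:ℝ), t ^ (-1-s)) ≤ ∫ t in Set.Ioi (2:ℝ), t ^ (-s) / (t - x) := by
      apply setIntegral_mono_on hbase hint2 measurableSet_Ioi
      intro t ht
      have h2t : (2:ℝ) < t := ht
      have ht0 : (0:ℝ) < t := by linarith
      have hts : t ^ (-1 - s) = t ^ (-s) / t := by
        rw [show (-1 - s : ℝ) = -s - 1 by ring, Real.rpow_sub_one (ne_of_gt ht0)]
      rw [hts]
      gcongr <;> linarith
    have hval : (∫ t in Set.Ioi (2:ℝ), t ^ (-1-s)) = 2 ^ (-s) / s := by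
      rw [int_Ioi_two' (by linarith), show (-1 - s) + 1 = -s by ring, neg_neg]
    have h1 : 2 ^ (-s)/s ≤ -I := by
      rw [hneg, ← hval]; exact hmono
    rw [hHval]
    exact le_trans h1 (neg_le_abs I)
  -- lower bound on the weak norm
  set T : ℝ → ℝ := fun x => weps ε x ^ (1/p) * hilbertT g x with hTdef
  set α : ℝ := ε⁻¹ ^ (1/p) * (2 ^ (-s) / s) / 2 with hαdef
  have h2spos : (0:ℝ) < 2 ^ (-s) / s := by positivity
  have hα0 : 0 < α := by positivity
  have hTlb : ∀ x ∈ Set.Ioo (0:ℝ) 1, α < |T x| := by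
    intro x hx
    have hxabs : |x| ≤ 1 := by rw [abs_of_pos hx.1]; linarith [hx.2]
    have hTx : |T x| = ε⁻¹ ^ (1/p) * |hilbertT g x| := by
      rw [hTdef]
      simp only
      rw [weps_of_abs_le' hxabs, abs_mul, abs_of_nonneg (by positivity)]
    rw [hTx, hαdef]
    have h := hHil x hx
    have hpow : (0:ℝ) < ε⁻¹ ^ (1/p) := by positivity
    calc ε⁻¹ ^ (1/p) * (2 ^ (-s) / s) / 2 < ε⁻¹ ^ (1/p) * (2 ^ (-s) / s) :=
          div_lt_self (by positivity) one_lt_two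
      _ ≤ ε⁻¹ ^ (1/p) * |hilbertT g x| := mul_le_mul_of_nonneg_left h (le_of_lt hpow)
  have hweak : ENNReal.ofReal α ≤ weakNorm volume p T := by
    have h1 : ENNReal.ofReal α * volume {x | α < |T x|} ^ (1/p) ≤ weakNorm volume p T := by
      unfold weakNorm
      exact le_iSup₂ (f := fun (a : ℝ) (_ : 0 < a) =>
        ENNReal.ofReal a * volume {x | a < |T x|} ^ (1/p)) α hα0
    refine le_trans ?_ h1
    have hvol : (1:ℝ≥0∞) ≤ volume {x | α < |T x|} := by
      have hm : volume (Set.Ioo (0:ℝ) 1) ≤ volume {x | α < |T x|} :=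
        measure_mono (fun x hx => hTlb x hx)
      rwa [Real.volume_Ioo, sub_zero, ENNReal.ofReal_one] at hm
    calc ENNReal.ofReal α = ENNReal.ofReal α * 1 ^ (1/p) := by
          rw [ENNReal.one_rpow, mul_one]
      _ ≤ ENNReal.ofReal α * volume {x | α < |T x|} ^ (1/p) :=
          mul_le_mul_right (ENNReal.rpow_le_rpow hvol (by positivity)) _
  have hchain := hyp f hMem
  rw [hfw] at hchain
  have hENN : ENNReal.ofReal α ≤ ENNReal.ofReal (N * ε⁻¹ ^ (1/p)) := by
    rw [ENNReal.ofReal_mul hN0]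
    exact le_trans hweak (le_trans hchain (mul_le_mul_right heLp_le _))
  have hαle : α ≤ N * ε⁻¹ ^ (1/p) :=
    (ENNReal.ofReal_le_ofReal_iff (by positivity)).mp hENN
  have hNlb : 1 / (4 * ε) ≤ N := by
    have hpow : (0:ℝ) < ε⁻¹ ^ (1/p) := by positivity
    have hcancel : 2 ^ (-s) / s / 2 ≤ N := by
      have h' : ((2 ^ (-s) / s) / 2) * ε⁻¹ ^ (1/p) ≤ N * ε⁻¹ ^ (1/p) := by
        calc ((2 ^ (-s)/s)/2) * ε⁻¹ ^ (1/p) = α := by rw [hαdef]; ring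
          _ ≤ N * ε⁻¹ ^ (1/p) := hαle
      exact (mul_le_mul_iff_of_pos_right hpow).mp h'
    have h2s : (1:ℝ)/2 ≤ 2 ^ (-s) := by
      have h := Real.rpow_le_rpow_of_exponent_le one_le_two (neg_le_neg hs1)
      rwa [Real.rpow_neg_one, ← one_div] at h
    have h3 : 1/(4*s) ≤ 2 ^ (-s)/s/2 := by
      have e1 : (1:ℝ)/(4*s) = (1/2)/s/2 := by field_simp; ring
      rw [e1]
      gcongr
    have h4 : 1/(4*ε) ≤ 1/(4*s) := by
      have hsε : s ≤ ε := by
        rw [hsdef, div_le_iff₀ hp0]; nlinarith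
      gcongr
    linarith
  refine ⟨?_, ?_, ?_, ?_⟩
  · calc (1/4)/ε = 1/(4*ε) := by rw [div_div]
      _ ≤ N := hNlb
  · calc L ≤ K/ε := hLub
      _ = (4*K) * (1/(4*ε)) := by field_simp
      _ ≤ (4*K) * N := by
          exact mul_le_mul_of_nonneg_left hNlb (by positivity)
  · calc (1/4)/ε ≤ 1/(2*ε) := by
          rw [div_div]
          gcongr
          · linarith
      _ ≤ L := hLlb
  · calc L ≤ K/ε := hLub
      _ ≤ (4*K)/ε := by gcongr; linarith
end
end

section
/- Let $\mathcal{S}$ be a $\frac{7}{8}$-sparse family of dyadic subcubes of a cube $R$. Then there exists an absolute constant $c > 0$ such that for every integer $k \ge 1$, $|\{x \in R : \sum_{Q' \in \mathcal{S}, Q' \subseteq R} \chi_{Q'}(x) > 2^k\}| \le e^{-c 2^k} |R|$; i.e., the overlap function of a sparse family has exponential distributional decay. -/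
open MeasureTheory ENNReal Set

noncomputable section

namespace Stmt15Aux

variable {d : ℕ} {a : Rd d} {l : ℝ}

/-- 1D dyadic interval nesting: if two dyadic intervals share a point and the first is
at a finer (or equal) generation, the first is contained in the second. -/
lemma ico_nested (hl : 0 < l) {b t : ℝ} {k k' m m' : ℕ} (hk : k' ≤ k)
    (h1 : t ∈ Set.Ico (b + l * m / 2 ^ k) (b + l * (m + 1) / 2 ^ k))
    (h2 : t ∈ Set.Ico (b + l * m' / 2 ^ k') (b + l * (m' + 1) / 2 ^ k')) :
    Set.Ico (b + l * m / 2 ^ k) (b + l * (m + 1) / 2 ^ k) ⊆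
      Set.Ico (b + l * m' / 2 ^ k') (b + l * (m' + 1) / 2 ^ k') := by
  obtain ⟨h1l, h1r⟩ := h1
  obtain ⟨h2l, h2r⟩ := h2
  set e : ℕ := 2 ^ (k - k') with he
  have hek : (2 : ℝ) ^ k = 2 ^ k' * e := by
    rw [he]; push_cast; rw [← pow_add]; congr 1; omega
  have hepos : (0 : ℝ) < e := by rw [he]; positivity
  have h2k' : (0 : ℝ) < 2 ^ k' := by positivity
  have key1 : (m' : ℝ) * e < m + 1 := by
    have h : l * m' / 2 ^ k' < l * (m + 1) / 2 ^ k := by linarith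
    rw [hek, div_lt_div_iff₀ h2k' (by positivity)] at h
    nlinarith [mul_pos hl h2k']
  have key2 : (m : ℝ) < (m' + 1) * e := by
    have h : l * m / 2 ^ k < l * (m' + 1) / 2 ^ k' := by linarith
    rw [hek, div_lt_div_iff₀ (by positivity) h2k'] at h
    nlinarith [mul_pos hl h2k']
  have k1 : m' * e ≤ m := by
    have : m' * e < m + 1 := by exact_mod_cast key1
    omega
  have k2 : m + 1 ≤ (m' + 1) * e := by
    have : m < (m' + 1) * e := by exact_mod_cast key2
    omega
  intro y hy
  obtain ⟨hyl, hyr⟩ := hy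
  have hc1 : (m' : ℝ) * e ≤ m := by exact_mod_cast k1
  have hc2 : (m : ℝ) + 1 ≤ ((m' : ℝ) + 1) * e := by exact_mod_cast k2
  have heq1 : l * m' / 2 ^ k' = l * ((m' : ℝ) * e) / 2 ^ k := by
    rw [hek]; field_simp
  have heq2 : l * (m' + 1) / 2 ^ k' = l * (((m' : ℝ) + 1) * e) / 2 ^ k := by
    rw [hek]; field_simp
  constructor
  · have : l * ((m' : ℝ) * e) / 2 ^ k ≤ l * m / 2 ^ k := by gcongr
    rw [heq1]; linarith
  · have : l * ((m : ℝ) + 1) / 2 ^ k ≤ l * (((m' : ℝ) + 1) * e) / 2 ^ k := by gcongr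
    rw [heq2]; linarith

lemma dyadic_nested (hl : 0 < l) {Q Q' : Set (Rd d)}
    (hQ : Q ∈ dyadicSubcubesOf a l) (hQ' : Q' ∈ dyadicSubcubesOf a l)
    {x : Rd d} (hx : x ∈ Q) (hx' : x ∈ Q') : Q ⊆ Q' ∨ Q' ⊆ Q := by
  obtain ⟨k, m, hm, rfl⟩ := hQ
  obtain ⟨k', m', hm', rfl⟩ := hQ'
  rw [Set.mem_univ_pi] at hx hx'
  rcases le_total k' k with h | h
  · exact Or.inl (Set.pi_mono fun i _ => ico_nested hl h (hx i) (hx' i))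
  · exact Or.inr (Set.pi_mono fun i _ => ico_nested hl h (hx' i) (hx i))

lemma dyadic_subset_base (hl : 0 < l) {Q : Set (Rd d)} (hQ : Q ∈ dyadicSubcubesOf a l) :
    Q ⊆ Set.univ.pi fun i => Set.Ico (a i) (a i + l) := by
  obtain ⟨k, m, hm, rfl⟩ := hQ
  refine Set.pi_mono fun i _ => Set.Ico_subset_Ico ?_ ?_
  · have : (0 : ℝ) ≤ l * m i / 2 ^ k := by positivity
    linarith
  · have h1 : (m i : ℝ) + 1 ≤ 2 ^ k := by exact_mod_cast hm i
    have h2 : l * ((m i : ℝ) + 1) / 2 ^ k ≤ l := by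
      rw [div_le_iff₀ (by positivity)]
      nlinarith
    linarith

lemma dyadic_nonempty (hl : 0 < l) {Q : Set (Rd d)} (hQ : Q ∈ dyadicSubcubesOf a l) :
    Q.Nonempty := by
  obtain ⟨k, m, hm, rfl⟩ := hQ
  refine ⟨fun i => a i + l * m i / 2 ^ k, ?_⟩
  rw [Set.mem_univ_pi]
  intro i
  refine ⟨le_refl _, ?_⟩
  have : l * (m i : ℝ) / 2 ^ k < l * ((m i : ℝ) + 1) / 2 ^ k := by gcongr <;> linarith
  linarith

lemma dyadic_measurable {Q : Set (Rd d)} (hQ : Q ∈ dyadicSubcubesOf a l) :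
    MeasurableSet Q := by
  obtain ⟨k, m, hm, rfl⟩ := hQ
  exact MeasurableSet.univ_pi fun i => measurableSet_Ico

lemma dyadic_countable : (dyadicSubcubesOf a l).Countable := by
  have h : dyadicSubcubesOf a l ⊆ Set.range (fun p : ℕ × (Fin d → ℕ) =>
      Set.univ.pi fun i => Set.Ico (a i + l * p.2 i / 2 ^ p.1) (a i + l * (p.2 i + 1) / 2 ^ p.1)) := by
    rintro Q ⟨k, m, hm, rfl⟩
    exact ⟨(k, m), rfl⟩
  exact (Set.countable_range _).mono h

/-- The set of dyadic supercubes of a dyadic cube is finite. -/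
lemma ancestors_finite (hl : 0 < l) {Q : Set (Rd d)} (hQ : Q ∈ dyadicSubcubesOf a l) :
    {Q'' ∈ dyadicSubcubesOf a l | Q ⊆ Q''}.Finite := by
  obtain ⟨k, m, hm, rfl⟩ := hQ
  set g : ℕ → Set (Rd d) := fun j => Set.univ.pi fun i =>
    Set.Ico (a i + l * (m i / 2 ^ (k - j) : ℕ) / 2 ^ j)
      (a i + l * ((m i / 2 ^ (k - j) : ℕ) + 1) / 2 ^ j) with hg
  apply Set.Finite.subset ((Set.finite_Iic k).image g)
  rintro Q'' ⟨hQ''dy, hsub⟩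
  -- the corner point of Q
  set x₀ : Rd d := fun i => a i + l * m i / 2 ^ k with hx₀
  have hx₀Q : x₀ ∈ Set.univ.pi fun i =>
      Set.Ico (a i + l * m i / 2 ^ k) (a i + l * (m i + 1) / 2 ^ k) := by
    rw [Set.mem_univ_pi]
    intro i
    refine ⟨le_refl _, ?_⟩
    have : l * (m i : ℝ) / 2 ^ k < l * ((m i : ℝ) + 1) / 2 ^ k := by gcongr <;> linarith
    simpa [hx₀] using this
  -- x₀ belongs to every ancestor candidate g j, j ≤ k
  have hx₀g : ∀ j ≤ k, x₀ ∈ g j := by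
    intro j hj
    rw [hg, Set.mem_univ_pi]
    intro i
    set e : ℕ := 2 ^ (k - j) with he
    have hek : (2 : ℝ) ^ k = 2 ^ j * e := by
      rw [he]; push_cast; rw [← pow_add]; congr 1; omega
    have hepos : 0 < e := by rw [he]; positivity
    have hdm : (m i / e) * e ≤ m i := Nat.div_mul_le_self _ _
    have hdm2 : m i < (m i / e + 1) * e := by
      rw [add_mul, one_mul]; exact Nat.lt_div_mul_add hepos
    have hc1 : ((m i / e : ℕ) : ℝ) * e ≤ m i := by exact_mod_cast hdm
    have hc2 : (m i : ℝ) + 1 ≤ (((m i / e : ℕ) : ℝ) + 1) * e := by exact_mod_cast hdm2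
    have heq1 : l * ((m i / e : ℕ) : ℝ) / 2 ^ j = l * (((m i / e : ℕ) : ℝ) * e) / 2 ^ k := by
      rw [hek]; field_simp
    have heq2 : l * (((m i / e : ℕ) : ℝ) + 1) / 2 ^ j
        = l * ((((m i / e : ℕ) : ℝ) + 1) * e) / 2 ^ k := by
      rw [hek]; field_simp
    constructor
    · have : l * (((m i / e : ℕ) : ℝ) * e) / 2 ^ k ≤ l * m i / 2 ^ k := by gcongr
      rw [heq1]; simp only [hx₀]; linarith
    · have h3 : l * ((m i : ℝ)) / 2 ^ k < l * ((((m i / e : ℕ) : ℝ) + 1) * e) / 2 ^ k := by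
        gcongr <;> linarith
      rw [heq2]; simp only [hx₀]; linarith
  -- g j is a valid dyadic cube for j ≤ k
  obtain ⟨k'', m'', hm'', rfl⟩ := hQ''dy
  have hx₀Q'' := hsub hx₀Q
  rw [Set.mem_univ_pi] at hx₀Q hx₀Q''
  rcases le_or_gt k'' k with hkk | hkk
  · -- Q'' = g k''
    refine ⟨k'', hkk, ?_⟩
    have hx₀gk := hx₀g k'' hkk
    rw [hg, Set.mem_univ_pi] at hx₀gk
    apply Set.Subset.antisymm
    · exact Set.pi_mono fun i _ => ico_nested hl (le_refl k'') (hx₀gk i) (hx₀Q'' i)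
    · exact Set.pi_mono fun i _ => ico_nested hl (le_refl k'') (hx₀Q'' i) (hx₀gk i)
  · -- Q'' ⊆ Q, hence Q'' = Q = g k
    have hQ''Q : (Set.univ.pi fun i => Set.Ico (a i + l * m'' i / 2 ^ k'')
        (a i + l * (m'' i + 1) / 2 ^ k'')) ⊆
        Set.univ.pi fun i => Set.Ico (a i + l * m i / 2 ^ k) (a i + l * (m i + 1) / 2 ^ k) :=
      Set.pi_mono fun i _ => ico_nested hl hkk.le (hx₀Q'' i) (hx₀Q i)
    have heqQ : (Set.univ.pi fun i => Set.Ico (a i + l * m'' i / 2 ^ k'')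
        (a i + l * (m'' i + 1) / 2 ^ k''))
        = Set.univ.pi fun i => Set.Ico (a i + l * m i / 2 ^ k) (a i + l * (m i + 1) / 2 ^ k) :=
      Set.Subset.antisymm hQ''Q hsub
    refine ⟨k, le_refl k, ?_⟩
    rw [heqQ, hg]
    simp

end Stmt15Aux

/-- Exponential decay of the overlap function of a `7/8`-sparse family of dyadic
subcubes of a cube `R`. -/
theorem stmt15 :
    ∃ c > 0, ∀ (d : ℕ) (a : Rd d) (l : ℝ), 0 < l →
      ∀ S ⊆ dyadicSubcubesOf a l, IsSparse (7/8) S →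
      ∀ k : ℕ, 1 ≤ k →
        volume {x ∈ (Set.univ.pi fun i => Set.Ico (a i) (a i + l)) |
            (2 : ℝ≥0∞) ^ k < ∑' Q' : S, (Q' : Set (Rd d)).indicator (fun _ => (1 : ℝ≥0∞)) x}
          ≤ ENNReal.ofReal (Real.exp (-c * 2 ^ k)) *
              volume (Set.univ.pi fun i => Set.Ico (a i) (a i + l)) := by
  classical
  refine ⟨1, one_pos, ?_⟩
  intro d a l hl S hSsub hSp k hk
  open Stmt15Aux in
  set R : Set (Rd d) := Set.univ.pi fun i => Set.Ico (a i) (a i + l) with hR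
  set F : Set (Rd d) → Set (Set (Rd d)) := fun Q => {Q'' ∈ S | Q ⊆ Q''} with hF
  set T : ℕ → Set (Set (Rd d)) := fun n => {Q ∈ S | n ≤ (F Q).ncard} with hT
  have hFfin : ∀ Q ∈ S, (F Q).Finite := fun Q hQ =>
    (Stmt15Aux.ancestors_finite hl (hSsub hQ)).subset (fun Z hZ => ⟨hSsub hZ.1, hZ.2⟩)
  have hTS : ∀ n, T n ⊆ S := fun n Q hQ => hQ.1
  have hScnt : S.Countable := Stmt15Aux.dyadic_countable.mono hSsub
  have hnest : ∀ Q ∈ S, ∀ Q' ∈ S, ∀ x, x ∈ Q → x ∈ Q' → Q ⊆ Q' ∨ Q' ⊆ Q :=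
    fun Q hQ Q' hQ' x hx hx' =>
      Stmt15Aux.dyadic_nested hl (hSsub hQ) (hSsub hQ') hx hx'
  -- every cube of T (n+2) has a strict superset in T (n+1)
  have hstrict : ∀ n, ∀ Q ∈ T (n + 2), ∃ P ∈ T (n + 1), Q ⊂ P := by
    intro n Q hQ
    obtain ⟨hQS, hQn⟩ := hQ
    have hfin := hFfin Q hQS
    have hQF : Q ∈ F Q := ⟨hQS, subset_rfl⟩
    have hdiff : (F Q \ {Q}).ncard + 1 = (F Q).ncard :=
      Set.ncard_diff_singleton_add_one hQF hfin
    have hfind : (F Q \ {Q}).Finite := hfin.diff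
    have hne : (F Q \ {Q}).Nonempty := by
      rw [← Set.ncard_pos hfind]; omega
    obtain ⟨P, hPmem, hPmin⟩ := hfind.toFinset.exists_minimal (by
      simpa [Set.Finite.toFinset_nonempty] using hne)
    rw [Set.Finite.mem_toFinset] at hPmem
    obtain ⟨⟨hPS, hQP⟩, hPne⟩ := hPmem
    have hPneQ : P ≠ Q := by simpa using hPne
    have hQx := Stmt15Aux.dyadic_nonempty hl (hSsub hQS)
    obtain ⟨x, hx⟩ := hQx
    have hsup : F Q \ {Q} ⊆ F P := by
      rintro Z ⟨⟨hZS, hQZ⟩, hZne⟩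
      refine ⟨hZS, ?_⟩
      rcases hnest P hPS Z hZS x (hQP hx) (hQZ hx) with h | h
      · exact h
      · by_cases hZP : Z = P
        · exact hZP.symm.subset
        · exact absurd (Set.Subset.antisymm h
            (hPmin (show Z ∈ hfind.toFinset by rw [Set.Finite.mem_toFinset]; exact ⟨⟨hZS, hQZ⟩, hZne⟩) h)) hZP
    have hcard : n + 1 ≤ (F P).ncard := by
      have := Set.ncard_le_ncard hsup (hFfin P hPS)
      omega
    exact ⟨P, ⟨hPS, hcard⟩, hQP.ssubset_of_ne (Ne.symm hPneQ)⟩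
  -- every cube of T n lies below a maximal cube of T n
  have hmaxcover : ∀ n, ∀ Q ∈ T n, ∃ P, (P ∈ T n ∧ ∀ Z ∈ T n, P ⊆ Z → Z = P) ∧ Q ⊆ P := by
    intro n Q hQ
    have hfin : (F Q ∩ T n).Finite := ((hFfin Q hQ.1).inter_of_left _)
    have hne : (F Q ∩ T n).Nonempty := ⟨Q, ⟨hQ.1, subset_rfl⟩, hQ⟩
    obtain ⟨P, hPmem, hPmax⟩ := hfin.toFinset.exists_maximal (by
      simpa [Set.Finite.toFinset_nonempty] using hne)
    rw [Set.Finite.mem_toFinset] at hPmem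
    obtain ⟨⟨hPS, hQP⟩, hPT⟩ := hPmem
    refine ⟨P, ⟨hPT, ?_⟩, hQP⟩
    intro Z hZT hPZ
    have hZmem : Z ∈ hfin.toFinset := by
      rw [Set.Finite.mem_toFinset]; exact ⟨⟨hZT.1, hQP.trans hPZ⟩, hZT⟩
    by_contra hne'
    exact hne' (Set.Subset.antisymm (hPmax hZmem hPZ) hPZ)
  -- geometric decay step
  have h78 : ENNReal.ofReal (1 - 7/8) = ENNReal.ofReal (1/8) := by norm_num
  have hstep : ∀ n, volume (⋃₀ T (n + 2)) ≤ ENNReal.ofReal (1/8) * volume (⋃₀ T (n + 1)) := by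
    intro n
    set M : Set (Set (Rd d)) := {P ∈ T (n + 1) | ∀ Z ∈ T (n + 1), P ⊆ Z → Z = P} with hM
    have hMT : M ⊆ T (n + 1) := fun P hP => hP.1
    have hMcnt : M.Countable := (hScnt.mono (hTS (n + 1))).mono hMT
    have hMdisj : M.Pairwise Disjoint := by
      intro P hP P' hP' hne
      by_contra hdis
      obtain ⟨x, hxP, hxP'⟩ := Set.not_disjoint_iff.mp hdis
      rcases hnest P (hTS _ hP.1) P' (hTS _ hP'.1) x hxP hxP' with h | h
      · exact hne (hP.2 P' hP'.1 h).symm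
      · exact hne (hP'.2 P hP.1 h)
    have hcover : ⋃₀ T (n + 2) ⊆ ⋃ P ∈ M, ⋃ Q' ∈ {Q' ∈ S | Q' ⊂ P}, Q' := by
      rintro x ⟨Q, hQ, hxQ⟩
      obtain ⟨P₀, hP₀, hQP₀⟩ := hstrict n Q hQ
      obtain ⟨P, hPmax, hP₀P⟩ := hmaxcover (n + 1) P₀ hP₀
      refine Set.mem_biUnion hPmax ?_
      exact Set.mem_biUnion ⟨hTS _ hQ, lt_of_lt_of_le hQP₀ hP₀P⟩ hxQ
    calc volume (⋃₀ T (n + 2))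
        ≤ volume (⋃ P ∈ M, ⋃ Q' ∈ {Q' ∈ S | Q' ⊂ P}, Q') := measure_mono hcover
      _ ≤ ∑' P : M, volume (⋃ Q' ∈ {Q' ∈ S | Q' ⊂ (P : Set (Rd d))}, Q') :=
          measure_biUnion_le volume hMcnt _
      _ ≤ ∑' P : M, ENNReal.ofReal (1/8) * volume (P : Set (Rd d)) := by
          refine ENNReal.tsum_le_tsum fun P => ?_
          have := hSp P (hTS _ (hMT P.2))
          rwa [h78] at this
      _ = ENNReal.ofReal (1/8) * ∑' P : M, volume (P : Set (Rd d)) := ENNReal.tsum_mul_left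
      _ = ENNReal.ofReal (1/8) * volume (⋃₀ M) := by
          rw [measure_sUnion hMcnt hMdisj
            (fun P hP => Stmt15Aux.dyadic_measurable (hSsub (hTS _ (hMT hP))))]
      _ ≤ ENNReal.ofReal (1/8) * volume (⋃₀ T (n + 1)) :=
          mul_le_mul_right (measure_mono (Set.sUnion_subset_sUnion hMT)) _
  -- iterate
  have hbase : volume (⋃₀ T 1) ≤ volume R := by
    refine measure_mono ?_
    rintro x ⟨Q, hQ, hx⟩
    exact Stmt15Aux.dyadic_subset_base hl (hSsub (hTS 1 hQ)) hx
  have hiter : ∀ n, volume (⋃₀ T (n + 1)) ≤ ENNReal.ofReal (1/8) ^ n * volume R := by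
    intro n
    induction n with
    | zero => simpa using hbase
    | succ n ih =>
        calc volume (⋃₀ T (n + 2)) ≤ ENNReal.ofReal (1/8) * volume (⋃₀ T (n + 1)) := hstep n
          _ ≤ ENNReal.ofReal (1/8) * (ENNReal.ofReal (1/8) ^ n * volume R) :=
              mul_le_mul_right ih _
          _ = ENNReal.ofReal (1/8) ^ (n + 1) * volume R := by ring
  -- the level set is covered by ⋃₀ T (2^k + 1)
  have hsubT : {x ∈ R | (2 : ℝ≥0∞) ^ k <
      ∑' Q' : S, (Q' : Set (Rd d)).indicator (fun _ => (1 : ℝ≥0∞)) x} ⊆ ⋃₀ T (2 ^ k + 1) := by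
    rintro x ⟨hxR, hx⟩
    rw [ENNReal.tsum_eq_iSup_sum, lt_iSup_iff] at hx
    obtain ⟨s, hs⟩ := hx
    have hsum : ∑ Q' ∈ s, (Q' : Set (Rd d)).indicator (fun _ => (1 : ℝ≥0∞)) x
        = ((s.filter (fun Q' : S => x ∈ (Q' : Set (Rd d)))).card : ℝ≥0∞) := by
      rw [← Finset.sum_boole]
      exact Finset.sum_congr rfl fun Q' _ => by simp [Set.indicator_apply]
    rw [hsum] at hs
    set t := s.filter (fun Q' : S => x ∈ (Q' : Set (Rd d))) with ht
    have hcard : 2 ^ k < t.card := by exact_mod_cast hs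
    set u : Finset (Set (Rd d)) := t.image Subtype.val with hu
    have hucard : u.card = t.card := Finset.card_image_of_injective t Subtype.val_injective
    have humem : ∀ Z ∈ u, Z ∈ S ∧ x ∈ Z := by
      intro Z hZ
      rw [hu, Finset.mem_image] at hZ
      obtain ⟨Q', hQ't, rfl⟩ := hZ
      rw [ht, Finset.mem_filter] at hQ't
      exact ⟨Q'.2, hQ't.2⟩
    have hune : u.Nonempty := by
      rw [← Finset.card_pos, hucard]
      exact lt_of_le_of_lt (Nat.zero_le _) hcard
    obtain ⟨Qm, hQmu, hQmmin⟩ := u.exists_minimal hune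
    obtain ⟨hQmS, hxQm⟩ := humem Qm hQmu
    have hmin : ∀ Z ∈ u, Qm ⊆ Z := by
      intro Z hZ
      obtain ⟨hZS, hxZ⟩ := humem Z hZ
      rcases hnest Qm hQmS Z hZS x hxQm hxZ with h | h
      · exact h
      · by_cases hZQ : Z = Qm
        · exact hZQ.symm.subset
        · exact hQmmin hZ h
    have husub : (u : Set (Set (Rd d))) ⊆ F Qm := fun Z hZ =>
      ⟨(humem Z hZ).1, hmin Z hZ⟩
    have hFcard : 2 ^ k + 1 ≤ (F Qm).ncard := by
      have h1 := Set.ncard_le_ncard husub (hFfin Qm hQmS)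
      rw [Set.ncard_coe_finset, hucard] at h1
      omega
    exact ⟨Qm, ⟨hQmS, hFcard⟩, hxQm⟩
  -- conclusion
  calc volume {x ∈ R | (2 : ℝ≥0∞) ^ k <
        ∑' Q' : S, (Q' : Set (Rd d)).indicator (fun _ => (1 : ℝ≥0∞)) x}
      ≤ volume (⋃₀ T (2 ^ k + 1)) := measure_mono hsubT
    _ ≤ ENNReal.ofReal (1/8) ^ (2 ^ k) * volume R := hiter (2 ^ k)
    _ ≤ ENNReal.ofReal (Real.exp (-1 * 2 ^ k)) * volume R := by
        refine mul_le_mul_left ?_ _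
        rw [← ENNReal.ofReal_pow (by norm_num : (0:ℝ) ≤ 1/8)]
        refine ENNReal.ofReal_le_ofReal ?_
        have h1 : (1/8 : ℝ) ≤ Real.exp (-1) := by
          rw [Real.exp_neg, ← one_div]
          have h8 : Real.exp 1 ≤ 8 := Real.exp_one_lt_d9.le.trans (by norm_num)
          have := Real.exp_pos 1
          gcongr
        calc (1/8 : ℝ) ^ (2 ^ k) ≤ Real.exp (-1) ^ (2 ^ k) :=
              pow_le_pow_left₀ (by norm_num) h1 _
          _ = Real.exp (-1 * 2 ^ k) := by
              rw [← Real.exp_nat_mul]; congr 1; push_cast; ring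
end
end

section
/- Let $\mathscr{D}$ be a dyadic lattice, $\mathcal{S} \subset \mathscr{D}$ an $\eta$-sparse family, and $m \ge 2$ an integer. Then $\mathcal{S}$ can be written as a disjoint union $\mathcal{S} = \bigcup_{j=1}^m \mathcal{S}_j$ where each $\mathcal{S}_j$ is $\frac{m}{m + (1/\eta) - 1}$-sparse. -/
open MeasureTheory ENNReal Set

noncomputable section

/-! basic cube lemmas -/

lemma vol_box {d : ℕ} (c : Rd d) (s : ℝ) :
    volume (Set.univ.pi fun i => Set.Ico (c i) (c i + s)) = ENNReal.ofReal s ^ d := by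
  rw [volume_pi_pi]
  simp [Real.volume_Ico]

lemma isCube_nonempty {d : ℕ} {Q : Set (Rd d)} (h : IsCube Q) : Q.Nonempty := by
  obtain ⟨a, l, hl, rfl⟩ := h
  exact ⟨a, by simp only [Set.mem_univ_pi]; exact fun i => ⟨le_refl _, by linarith⟩⟩

lemma isCube_measurable {d : ℕ} {Q : Set (Rd d)} (h : IsCube Q) : MeasurableSet Q := by
  obtain ⟨a, l, hl, rfl⟩ := h
  exact MeasurableSet.univ_pi fun i => measurableSet_Ico

lemma isCube_vol_pos {d : ℕ} {Q : Set (Rd d)} (h : IsCube Q) : 0 < volume Q := by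
  obtain ⟨a, l, hl, rfl⟩ := h
  rw [vol_box]
  exact ENNReal.pow_pos (ENNReal.ofReal_pos.2 hl) d

lemma isCube_vol_ne_top {d : ℕ} {Q : Set (Rd d)} (h : IsCube Q) : volume Q ≠ ⊤ := by
  obtain ⟨a, l, hl, rfl⟩ := h
  rw [vol_box]
  exact ENNReal.pow_ne_top ENNReal.ofReal_ne_top

lemma isCube_interior_nonempty {d : ℕ} {Q : Set (Rd d)} (h : IsCube Q) :
    (interior Q).Nonempty := by
  obtain ⟨a, l, hl, rfl⟩ := h
  have hopen : IsOpen (Set.univ.pi fun i => Set.Ioo (a i) (a i + l)) :=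
    isOpen_set_pi Set.finite_univ (fun i _ => isOpen_Ioo)
  have hsub : (Set.univ.pi fun i => Set.Ioo (a i) (a i + l)) ⊆
      (Set.univ.pi fun i => Set.Ico (a i) (a i + l)) :=
    Set.pi_mono fun i _ => Set.Ioo_subset_Ico_self
  refine ⟨fun i => a i + l / 2, ?_⟩
  have : (fun i => a i + l / 2) ∈ (Set.univ.pi fun i => Set.Ioo (a i) (a i + l)) := by
    simp only [Set.mem_univ_pi]
    exact fun i => ⟨by linarith, by linarith⟩
  exact interior_maximal hsub hopen this

lemma dyadic_Ico_subset {b l : ℝ} (hl : 0 < l) {k k' : ℕ} (hk : k ≤ k') {m m' : ℕ} {x : ℝ}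
    (h1 : x ∈ Set.Ico (b + l * m / 2 ^ k) (b + l * (m + 1) / 2 ^ k))
    (h2 : x ∈ Set.Ico (b + l * m' / 2 ^ k') (b + l * (m' + 1) / 2 ^ k')) :
    Set.Ico (b + l * m' / 2 ^ k') (b + l * (m' + 1) / 2 ^ k') ⊆
      Set.Ico (b + l * m / 2 ^ k) (b + l * (m + 1) / 2 ^ k) := by
  obtain ⟨h1l, h1r⟩ := h1
  obtain ⟨h2l, h2r⟩ := h2
  have hps : (2:ℝ) ^ k' = 2 ^ (k' - k) * 2 ^ k := by
    rw [← pow_add]; congr 1; omega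
  have h2kpos : (0:ℝ) < 2 ^ k := by positivity
  have h2k'pos : (0:ℝ) < 2 ^ k' := by positivity
  -- first raw inequality : l*m/2^k < l*(m'+1)/2^k'
  have r1 : l * (m:ℝ) / 2 ^ k < l * ((m':ℝ) + 1) / 2 ^ k' := by linarith
  rw [div_lt_div_iff₀ h2kpos h2k'pos, mul_assoc, mul_assoc] at r1
  have r1' : (m:ℝ) * 2 ^ k' < ((m':ℝ) + 1) * 2 ^ k := lt_of_mul_lt_mul_left r1 hl.le
  rw [hps, ← mul_assoc] at r1'
  have fact1R : (m:ℝ) * 2 ^ (k' - k) < (m':ℝ) + 1 := lt_of_mul_lt_mul_right r1' h2kpos.le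
  have fact1 : (m:ℝ) * 2 ^ (k' - k) ≤ (m':ℝ) := by
    have : m * 2 ^ (k' - k) < m' + 1 := by exact_mod_cast fact1R
    exact_mod_cast Nat.lt_succ_iff.mp this
  -- second raw inequality : l*m'/2^k' < l*(m+1)/2^k
  have r2 : l * (m':ℝ) / 2 ^ k' < l * ((m:ℝ) + 1) / 2 ^ k := by linarith
  rw [div_lt_div_iff₀ h2k'pos h2kpos, mul_assoc, mul_assoc] at r2
  have r2' : (m':ℝ) * 2 ^ k < ((m:ℝ) + 1) * 2 ^ k' := lt_of_mul_lt_mul_left r2 hl.le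
  rw [hps, ← mul_assoc] at r2'
  have fact2R : (m':ℝ) < ((m:ℝ) + 1) * 2 ^ (k' - k) := by
    have := lt_of_mul_lt_mul_right (by linarith [r2'] : (m':ℝ) * 2 ^ k <
      ((m:ℝ) + 1) * 2 ^ (k' - k) * 2 ^ k) h2kpos.le
    exact this
  have fact2 : (m':ℝ) + 1 ≤ ((m:ℝ) + 1) * 2 ^ (k' - k) := by
    have h' : m' < (m + 1) * 2 ^ (k' - k) := by exact_mod_cast fact2R
    exact_mod_cast Nat.succ_le_of_lt h'
  apply Set.Ico_subset_Ico
  · -- b + l*m/2^k ≤ b + l*m'/2^k'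
    have e1 : l * (m:ℝ) / 2 ^ k ≤ l * (m':ℝ) / 2 ^ k' := by
      rw [div_le_div_iff₀ h2kpos h2k'pos, hps]
      nlinarith [mul_le_mul_of_nonneg_right (mul_le_mul_of_nonneg_left fact1 hl.le) h2kpos.le]
    linarith
  · have e2 : l * ((m':ℝ) + 1) / 2 ^ k' ≤ l * ((m:ℝ) + 1) / 2 ^ k := by
      rw [div_le_div_iff₀ h2k'pos h2kpos, hps]
      nlinarith [mul_le_mul_of_nonneg_right (mul_le_mul_of_nonneg_left fact2 hl.le) h2kpos.le]
    linarith

lemma vol_subcube {d : ℕ} (a : Rd d) (l : ℝ) (k : ℕ) (mm : Fin d → ℕ) :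
    volume (Set.univ.pi fun i => Set.Ico (a i + l * mm i / 2 ^ k) (a i + l * (mm i + 1) / 2 ^ k))
      = ENNReal.ofReal (l / 2 ^ k) ^ d := by
  have he : (fun i : Fin d => Set.Ico (a i + l * mm i / 2 ^ k) (a i + l * (mm i + 1) / 2 ^ k))
      = fun i => Set.Ico (a i + l * mm i / 2 ^ k) ((a i + l * mm i / 2 ^ k) + l / 2 ^ k) := by
    funext i; congr 1; ring
  rw [he, vol_box]

lemma subcube_isCube {d : ℕ} {a : Rd d} {l : ℝ} (hl : 0 < l) {R : Set (Rd d)}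
    (hR : R ∈ dyadicSubcubesOf a l) : IsCube R := by
  obtain ⟨k, mm, -, rfl⟩ := hR
  refine ⟨fun i => a i + l * mm i / 2 ^ k, l / 2 ^ k, by positivity, ?_⟩
  have he : (fun i : Fin d => Set.Ico (a i + l * mm i / 2 ^ k) (a i + l * (mm i + 1) / 2 ^ k))
      = fun i => Set.Ico (a i + l * mm i / 2 ^ k) ((a i + l * mm i / 2 ^ k) + l / 2 ^ k) := by
    funext i
    rw [show a i + l * (mm i + 1) / 2 ^ k = (a i + l * mm i / 2 ^ k) + l / 2 ^ k from by ring]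
  rw [he]

lemma dyadic_comparable {d : ℕ} {a : Rd d} {l : ℝ} (hl : 0 < l) {R R' : Set (Rd d)}
    (hR : R ∈ dyadicSubcubesOf a l) (hR' : R' ∈ dyadicSubcubesOf a l)
    (hne : (R ∩ R').Nonempty) : R ⊆ R' ∨ R' ⊆ R := by
  obtain ⟨k, mm, -, rfl⟩ := hR
  obtain ⟨k', mm', -, rfl⟩ := hR'
  obtain ⟨x, hx1, hx2⟩ := hne
  rw [Set.mem_univ_pi] at hx1 hx2
  rcases le_total k k' with hk | hk
  · right
    intro y hy
    rw [Set.mem_univ_pi] at hy ⊢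
    exact fun i => dyadic_Ico_subset hl hk (hx1 i) (hx2 i) (hy i)
  · left
    intro y hy
    rw [Set.mem_univ_pi] at hy ⊢
    exact fun i => dyadic_Ico_subset hl hk (hx2 i) (hx1 i) (hy i)

lemma cubes_comparable {d : ℕ} (𝒟 : DyadicLattice d) {Q Q' : Set (Rd d)}
    (hQ : Q ∈ 𝒟.cubes) (hQ' : Q' ∈ 𝒟.cubes) (hne : (Q ∩ Q').Nonempty) :
    Q ⊆ Q' ∨ Q' ⊆ Q := by
  obtain ⟨a, l, hl, -, hQd, hQ'd⟩ := 𝒟.common_ancestor Q hQ Q' hQ'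
  exact dyadic_comparable hl hQd hQ'd hne

lemma cube_zero {Q : Set (Rd 0)} (h : IsCube Q) : Q = Set.univ := by
  obtain ⟨a, l, hl, rfl⟩ := h
  ext x
  simp only [Set.mem_univ_pi, Set.mem_univ, iff_true]
  exact fun i => i.elim0

lemma cube_halving {d : ℕ} (𝒟 : DyadicLattice d) {Q Q' : Set (Rd d)}
    (hQ : Q ∈ 𝒟.cubes) (hQ' : Q' ∈ 𝒟.cubes) (hss : Q ⊂ Q') :
    2 * volume Q ≤ volume Q' := by
  rcases Nat.eq_zero_or_pos d with hd | hd
  · exfalso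
    subst hd
    exact hss.ne ((cube_zero (𝒟.isCube Q hQ)).trans (cube_zero (𝒟.isCube Q' hQ')).symm)
  obtain ⟨a, l, hl, -, hQd, hQ'd⟩ := 𝒟.common_ancestor Q hQ Q' hQ'
  have hQc := subcube_isCube hl hQd
  have hQ'c := subcube_isCube hl hQ'd
  obtain ⟨k, mm, -, hQe⟩ := hQd
  obtain ⟨k', mm', -, hQ'e⟩ := hQ'd
  -- show k' < k
  have hkk : k' < k := by
    by_contra hcon
    push_neg at hcon
    obtain ⟨x, hx⟩ := isCube_nonempty hQc
    have hx' : x ∈ Q' := hss.1 hx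
    have hsub : Q' ⊆ Q := by
      subst hQe hQ'e
      rw [Set.mem_univ_pi] at hx hx'
      intro y hy
      rw [Set.mem_univ_pi] at hy ⊢
      exact fun i => dyadic_Ico_subset hl hcon (hx i) (hx' i) (hy i)
    exact hss.ne (le_antisymm hss.1 hsub)
  have hvQ : volume Q = ENNReal.ofReal (l / 2 ^ k) ^ d := by rw [hQe, vol_subcube]
  have hvQ' : volume Q' = ENNReal.ofReal (l / 2 ^ k') ^ d := by rw [hQ'e, vol_subcube]
  rw [hvQ, hvQ']
  have key : 2 * ENNReal.ofReal (l / 2 ^ k) ≤ ENNReal.ofReal (l / 2 ^ k') := by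
    rw [show (2:ℝ≥0∞) = ENNReal.ofReal 2 by norm_num, ← ENNReal.ofReal_mul (by norm_num)]
    apply ENNReal.ofReal_le_ofReal
    have h2 : (2:ℝ) * 2 ^ k' ≤ 2 ^ k := by
      calc (2:ℝ) * 2 ^ k' = 2 ^ (k' + 1) := by ring
        _ ≤ 2 ^ k := pow_le_pow_right₀ one_le_two (by omega)
    rw [show 2 * (l / 2 ^ k) = 2 * l / 2 ^ k from by ring,
      div_le_div_iff₀ (by positivity) (by positivity)]
    nlinarith [mul_le_mul_of_nonneg_left h2 hl.le]
  calc 2 * ENNReal.ofReal (l / 2 ^ k) ^ d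
      ≤ 2 ^ d * ENNReal.ofReal (l / 2 ^ k) ^ d := by
        gcongr
        exact_mod_cast (pow_le_pow_right₀ one_le_two hd : (2:ℝ≥0∞) ^ 1 ≤ 2 ^ d)
    _ = (2 * ENNReal.ofReal (l / 2 ^ k)) ^ d := by rw [mul_pow]
    _ ≤ ENNReal.ofReal (l / 2 ^ k') ^ d := by gcongr

lemma between_finite {d : ℕ} (𝒟 : DyadicLattice d) {P R : Set (Rd d)}
    (hP : P ∈ 𝒟.cubes) (hR : volume R ≠ ⊤) :
    {X | X ∈ 𝒟.cubes ∧ P ⊆ X ∧ X ⊆ R}.Finite := by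
  set C := {X | X ∈ 𝒟.cubes ∧ P ⊆ X ∧ X ⊆ R} with hC
  have hPne : P.Nonempty := isCube_nonempty (𝒟.isCube P hP)
  have hP0 : volume P ≠ 0 := (isCube_vol_pos (𝒟.isCube P hP)).ne'
  have hPt : volume P ≠ ⊤ := isCube_vol_ne_top (𝒟.isCube P hP)
  -- choose N with volume R < 2^N * volume P
  obtain ⟨N, hN⟩ : ∃ N : ℕ, volume R < 2 ^ N * volume P := by
    obtain ⟨n, hn⟩ := ENNReal.exists_nat_gt (ENNReal.div_lt_top hR hP0).ne
    refine ⟨n, ?_⟩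
    have h1 : volume R < n * volume P := by
      rwa [ENNReal.div_lt_iff (Or.inl hP0) (Or.inl hPt)] at hn
    refine h1.trans_le (mul_le_mul_left ?_ _)
    exact_mod_cast Nat.le_of_lt (Nat.lt_two_pow_self (n := n))
  -- the counting function
  set g : Set (Rd d) → ℕ := fun X => sInf {n | volume X < 2 ^ (n + 1) * volume P} with hg
  have gmem : ∀ X ∈ C, volume X < 2 ^ (g X + 1) * volume P := by
    intro X hX
    have hne : {n | volume X < 2 ^ (n + 1) * volume P}.Nonempty := by
      refine ⟨N, ?_⟩
      calc volume X ≤ volume R := measure_mono hX.2.2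
        _ < 2 ^ N * volume P := hN
        _ ≤ 2 ^ (N + 1) * volume P := by gcongr <;> [exact one_le_two; omega]
    exact Nat.sInf_mem hne
  have glb : ∀ X ∈ C, 2 ^ (g X) * volume P ≤ volume X := by
    intro X hX
    rcases Nat.eq_zero_or_pos (g X) with h0 | hpos
    · rw [h0, pow_zero, one_mul]
      exact measure_mono hX.2.1
    · have : g X - 1 ∉ {n | volume X < 2 ^ (n + 1) * volume P} :=
        Nat.notMem_of_lt_sInf (show g X - 1 < g X from Nat.sub_lt hpos one_pos)
      simp only [Set.mem_setOf_eq, not_lt] at this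
      rwa [show g X - 1 + 1 = g X from by omega] at this
  -- powers cancel
  have cancel : ∀ a b : ℕ, (2:ℝ≥0∞) ^ a * volume P < 2 ^ b * volume P → a < b := by
    intro a b hab
    by_contra hba
    push_neg at hba
    exact absurd (mul_le_mul_left (pow_le_pow_right₀ one_le_two hba) (volume P)) hab.not_ge
  -- g is injective on C
  have ginj : Set.InjOn g C := by
    intro X hX X' hX' hgeq
    by_contra hne
    have hcomp : X ⊆ X' ∨ X' ⊆ X :=
      cubes_comparable 𝒟 hX.1 hX'.1 ⟨hPne.some, hX.2.1 hPne.some_mem, hX'.2.1 hPne.some_mem⟩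
    have key : ∀ Y Y' : Set (Rd d), Y ∈ C → Y' ∈ C → Y ⊂ Y' → g Y < g Y' := by
      intro Y Y' hY hY' hss
      have h2 : 2 * volume Y ≤ volume Y' := cube_halving 𝒟 hY.1 hY'.1 hss
      have : (2:ℝ≥0∞) ^ (g Y + 1) * volume P ≤ volume Y' := by
        calc (2:ℝ≥0∞) ^ (g Y + 1) * volume P = 2 * (2 ^ (g Y) * volume P) := by ring
          _ ≤ 2 * volume Y := by exact mul_le_mul_right (glb Y hY) 2
          _ ≤ volume Y' := h2
      have hlt : (2:ℝ≥0∞) ^ (g Y + 1) * volume P < 2 ^ (g Y' + 1) * volume P :=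
        lt_of_le_of_lt this (gmem Y' hY')
      have := cancel _ _ hlt
      omega
    rcases hcomp with h | h
    · exact absurd (key X X' hX hX' (ssubset_of_subset_of_ne h hne)) (by omega)
    · exact absurd (key X' X hX' hX (ssubset_of_subset_of_ne h (Ne.symm hne))) (by omega)
  have himg : g '' C ⊆ Set.Iio N := by
    rintro n ⟨X, hX, rfl⟩
    have : (2:ℝ≥0∞) ^ (g X) * volume P < 2 ^ N * volume P :=
      lt_of_le_of_lt (glb X hX) (lt_of_le_of_lt (measure_mono hX.2.2) hN)
    exact cancel _ _ this
  exact Set.Finite.of_finite_image ((Set.finite_Iio N).subset himg) ginj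

/-! counting and coloring -/

def Dn {d : ℕ} (S : Set (Set (Rd d))) (P R : Set (Rd d)) : ℕ :=
  {X | X ∈ S ∧ P ⊂ X ∧ X ⊆ R}.ncard

def sibRel {d : ℕ} (S : Set (Set (Rd d))) (Q Q' : Set (Rd d)) : Prop :=
  Q = Q' ∨ (Q ∈ S ∧ Q' ∈ S ∧ ∃ R ∈ S, Q ⊆ R ∧ Q' ⊆ R)

noncomputable def repC {d : ℕ} (S : Set (Set (Rd d))) (Q : Set (Rd d)) : Set (Rd d) :=
  Quot.out (Quot.mk (sibRel S) Q)

open Classical in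
noncomputable def hgt {d : ℕ} (S : Set (Set (Rd d))) (Q : Set (Rd d)) : ℤ :=
  if hq : ∃ R, R ∈ S ∧ Q ⊆ R ∧ repC S Q ⊆ R then
    (Dn S Q hq.choose : ℤ) - (Dn S (repC S Q) hq.choose : ℤ)
  else 0

section Coloring

variable {d : ℕ} {𝒟 : DyadicLattice d} {S : Set (Set (Rd d))}

lemma S_nonempty (hS𝒟 : S ⊆ 𝒟.cubes) {Q : Set (Rd d)} (hQ : Q ∈ S) : Q.Nonempty :=
  isCube_nonempty (𝒟.isCube Q (hS𝒟 hQ))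

lemma S_comp (hS𝒟 : S ⊆ 𝒟.cubes) {Q Q' : Set (Rd d)} (hQ : Q ∈ S) (hQ' : Q' ∈ S)
    (hne : (Q ∩ Q').Nonempty) : Q ⊆ Q' ∨ Q' ⊆ Q :=
  cubes_comparable 𝒟 (hS𝒟 hQ) (hS𝒟 hQ') hne

lemma Dn_finite (hS𝒟 : S ⊆ 𝒟.cubes) {P R : Set (Rd d)} (hP : P ∈ S) (hR : R ∈ S) :
    {X | X ∈ S ∧ P ⊂ X ∧ X ⊆ R}.Finite :=
  (between_finite 𝒟 (hS𝒟 hP) (isCube_vol_ne_top (𝒟.isCube R (hS𝒟 hR)))).subset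
    (fun X hX => ⟨hS𝒟 hX.1, hX.2.1.le, hX.2.2⟩)

lemma Dn_finite' (hS𝒟 : S ⊆ 𝒟.cubes) {P R : Set (Rd d)} (hP : P ∈ S) (hR : R ∈ S) :
    {X | X ∈ S ∧ P ⊆ X ∧ X ⊂ R}.Finite :=
  (between_finite 𝒟 (hS𝒟 hP) (isCube_vol_ne_top (𝒟.isCube R (hS𝒟 hR)))).subset
    (fun X hX => ⟨hS𝒟 hX.1, hX.2.1, hX.2.2.le⟩)

lemma sib_equiv (hS𝒟 : S ⊆ 𝒟.cubes) : Equivalence (sibRel S) := by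
  constructor
  · exact fun _ => Or.inl rfl
  · rintro a b (rfl | ⟨ha, hb, R, hR, h1, h2⟩)
    · exact Or.inl rfl
    · exact Or.inr ⟨hb, ha, R, hR, h2, h1⟩
  · rintro a b c (rfl | ⟨ha, hb, R1, hR1, h1a, h1b⟩) h2
    · exact h2
    rcases h2 with rfl | ⟨-, hc, R2, hR2, h2b, h2c⟩
    · exact Or.inr ⟨ha, hb, R1, hR1, h1a, h1b⟩
    have hbne : b.Nonempty := S_nonempty hS𝒟 hb
    rcases S_comp hS𝒟 hR1 hR2 ⟨hbne.some, h1b hbne.some_mem, h2b hbne.some_mem⟩ with h | h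
    · exact Or.inr ⟨ha, hc, R2, hR2, h1a.trans h, h2c⟩
    · exact Or.inr ⟨ha, hc, R1, hR1, h1a, h2c.trans h⟩

lemma repC_sib (hS𝒟 : S ⊆ 𝒟.cubes) (Q : Set (Rd d)) : sibRel S (repC S Q) Q :=
  ((sib_equiv (𝒟 := 𝒟) hS𝒟).eqvGen_iff).mp (Quot.eq.mp (Quot.out_eq (Quot.mk (sibRel S) Q)))

lemma repC_eq_of_sib {Q Q' : Set (Rd d)} (h : sibRel S Q Q') : repC S Q = repC S Q' := by
  unfold repC
  rw [Quot.sound h]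

lemma repC_mem (hS𝒟 : S ⊆ 𝒟.cubes) {Q : Set (Rd d)} (hQ : Q ∈ S) : repC S Q ∈ S := by
  rcases repC_sib (𝒟 := 𝒟) hS𝒟 Q with h | ⟨h, -⟩
  · rwa [h]
  · exact h

lemma rep_ub (hS𝒟 : S ⊆ 𝒟.cubes) {Q : Set (Rd d)} (hQ : Q ∈ S) :
    ∃ R, R ∈ S ∧ Q ⊆ R ∧ repC S Q ⊆ R := by
  rcases repC_sib (𝒟 := 𝒟) hS𝒟 Q with h | ⟨-, -, R, hR, h1, h2⟩
  · exact ⟨Q, hQ, subset_rfl, h.le⟩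
  · exact ⟨R, hR, h2, h1⟩

lemma Dn_split (hS𝒟 : S ⊆ 𝒟.cubes) {P R R' : Set (Rd d)} (hP : P ∈ S) (hR : R ∈ S) (hR' : R' ∈ S)
    (hPR : P ⊆ R) (hRR' : R ⊆ R') :
    Dn S P R' = Dn S P R + Dn S R R' := by
  have hPne : P.Nonempty := S_nonempty hS𝒟 hP
  have hsplit : {X | X ∈ S ∧ P ⊂ X ∧ X ⊆ R'} =
      {X | X ∈ S ∧ P ⊂ X ∧ X ⊆ R} ∪ {X | X ∈ S ∧ R ⊂ X ∧ X ⊆ R'} := by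
    ext X
    constructor
    · rintro ⟨hXS, hPX, hXR'⟩
      rcases S_comp hS𝒟 hXS hR ⟨hPne.some, hPX.1 hPne.some_mem, hPR hPne.some_mem⟩ with h | h
      · exact Or.inl ⟨hXS, hPX, h⟩
      · rcases eq_or_ne R X with rfl | hne
        · exact Or.inl ⟨hXS, hPX, subset_rfl⟩
        · exact Or.inr ⟨hXS, ssubset_of_subset_of_ne h hne, hXR'⟩
    · rintro (⟨hXS, hPX, hXR⟩ | ⟨hXS, hRX, hXR'⟩)
      · exact ⟨hXS, hPX, hXR.trans hRR'⟩
      · exact ⟨hXS, lt_of_le_of_lt hPR hRX, hXR'⟩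
  have hdisj : Disjoint {X | X ∈ S ∧ P ⊂ X ∧ X ⊆ R} {X | X ∈ S ∧ R ⊂ X ∧ X ⊆ R'} := by
    rw [Set.disjoint_left]
    rintro X ⟨-, -, hXR⟩ ⟨-, hRX, -⟩
    exact hRX.not_ge hXR
  unfold Dn
  rw [hsplit, Set.ncard_union_eq hdisj (Dn_finite hS𝒟 hP hR) (Dn_finite hS𝒟 hR hR')]

lemma hgt_spec (hS𝒟 : S ⊆ 𝒟.cubes) {Q R : Set (Rd d)} (hQ : Q ∈ S) (hR : R ∈ S) (hQR : Q ⊆ R)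
    (hrR : repC S Q ⊆ R) :
    hgt S Q = (Dn S Q R : ℤ) - Dn S (repC S Q) R := by
  have hex : ∃ R, R ∈ S ∧ Q ⊆ R ∧ repC S Q ⊆ R := ⟨R, hR, hQR, hrR⟩
  unfold hgt
  rw [dif_pos hex]
  obtain ⟨hR0S, hQR0, hrR0⟩ := hex.choose_spec
  set R0 := hex.choose
  have hrepS : repC S Q ∈ S := repC_mem hS𝒟 hQ
  have key : ∀ A B : Set (Rd d), A ∈ S → B ∈ S → Q ⊆ A → repC S Q ⊆ A → A ⊆ B →
      Q ⊆ B → repC S Q ⊆ B →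
      (Dn S Q A : ℤ) - Dn S (repC S Q) A = (Dn S Q B : ℤ) - Dn S (repC S Q) B := by
    intro A B hA hB hQA hrA hAB hQB hrB
    rw [Dn_split hS𝒟 hQ hA hB hQA hAB, Dn_split hS𝒟 hrepS hA hB hrA hAB]
    push_cast
    ring
  have hQne : Q.Nonempty := S_nonempty hS𝒟 hQ
  rcases S_comp hS𝒟 hR0S hR ⟨hQne.some, hQR0 hQne.some_mem, hQR hQne.some_mem⟩ with h | h
  · exact key R0 R hR0S hR hQR0 hrR0 h hQR hrR
  · exact (key R R0 hR hR0S hQR hrR h hQR0 hrR0).symm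

lemma hgt_step (hS𝒟 : S ⊆ 𝒟.cubes) {Q Q' : Set (Rd d)} (hQ' : Q' ∈ S) (hQ : Q ∈ S) (hss : Q' ⊂ Q) :
    hgt S Q' = hgt S Q + (Dn S Q' Q : ℤ) := by
  have hrep : repC S Q' = repC S Q :=
    repC_eq_of_sib (Or.inr ⟨hQ', hQ, Q, hQ, hss.le, subset_rfl⟩)
  obtain ⟨R1, hR1, hQR1, hrR1⟩ := rep_ub (𝒟 := 𝒟) hS𝒟 hQ
  have h1 : hgt S Q = (Dn S Q R1 : ℤ) - Dn S (repC S Q) R1 := hgt_spec hS𝒟 hQ hR1 hQR1 hrR1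
  have h2 : hgt S Q' = (Dn S Q' R1 : ℤ) - Dn S (repC S Q') R1 :=
    hgt_spec hS𝒟 hQ' hR1 (hss.le.trans hQR1) (by rw [hrep]; exact hrR1)
  have h3 : Dn S Q' R1 = Dn S Q' Q + Dn S Q R1 := Dn_split hS𝒟 hQ' hQ hR1 hss.le hQR1
  rw [h2, h3, hrep, h1]
  push_cast
  ring

end Coloring

section Rank

variable {d : ℕ} {𝒟 : DyadicLattice d} {S : Set (Set (Rd d))}

lemma chain_least {s : Set (Set (Rd d))} (hfin : s.Finite) (hne : s.Nonempty)
    (hchain : ∀ X ∈ s, ∀ Y ∈ s, X ⊆ Y ∨ Y ⊆ X) : ∃ X ∈ s, ∀ Y ∈ s, X ⊆ Y := by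
  obtain ⟨X, hXs, hmin⟩ := Set.Finite.exists_minimalFor id s hfin hne
  exact ⟨X, hXs, fun Y hY => (hchain X hXs Y hY).elim id
    (fun h => (hmin hY h : X ⊆ Y))⟩

lemma rank_exists (hS𝒟 : S ⊆ 𝒟.cubes) {Q : Set (Rd d)} (hQ : Q ∈ S) :
    ∀ n : ℕ, ∀ P, P ∈ S → P ⊂ Q → Dn S P Q = n →
    ∀ k, 1 ≤ k → k ≤ n → ∃ X, X ∈ S ∧ P ⊆ X ∧ X ⊂ Q ∧ Dn S X Q = k := by
  intro n
  induction n using Nat.strong_induction_on with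
  | _ n IH =>
  intro P hP hPQ hDn k hk1 hkn
  rcases eq_or_lt_of_le hkn with he | hlt
  · exact ⟨P, hP, subset_rfl, hPQ, by omega⟩
  have hPne : P.Nonempty := S_nonempty hS𝒟 hP
  set B := {X | X ∈ S ∧ P ⊂ X ∧ X ⊆ Q} with hB
  have hfin : B.Finite := Dn_finite hS𝒟 hP hQ
  have hQB : Q ∈ B := ⟨hQ, hPQ, subset_rfl⟩
  have hcard : B.ncard = n := hDn
  have hne : (B \ {Q}).Nonempty := by
    rw [Set.nonempty_iff_ne_empty]
    intro h
    rw [Set.diff_eq_empty] at h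
    have := Set.ncard_le_ncard h (Set.finite_singleton Q)
    rw [Set.ncard_singleton] at this
    omega
  have hch : ∀ X ∈ B \ {Q}, ∀ Y ∈ B \ {Q}, X ⊆ Y ∨ Y ⊆ X := by
    intro X hX Y hY
    obtain ⟨⟨hXS, hPX, -⟩, -⟩ := hX
    obtain ⟨⟨hYS, hPY, -⟩, -⟩ := hY
    exact S_comp hS𝒟 hXS hYS ⟨hPne.some, hPX.le hPne.some_mem, hPY.le hPne.some_mem⟩
  obtain ⟨Y, hYB, hYle⟩ := chain_least (hfin.subset Set.diff_subset) hne hch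
  obtain ⟨⟨hYS, hPY, hYQ⟩, hYneQ⟩ := hYB
  have hYneQ' : Y ≠ Q := by simpa using hYneQ
  have hYQ' : Y ⊂ Q := ssubset_of_subset_of_ne hYQ hYneQ'
  have hBY : {X | X ∈ S ∧ Y ⊂ X ∧ X ⊆ Q} = B \ {Y} := by
    ext X
    constructor
    · rintro ⟨hXS, hYX, hXQ⟩
      exact ⟨⟨hXS, lt_trans hPY hYX, hXQ⟩, by simp [hYX.ne']⟩
    · rintro ⟨⟨hXS, hPX, hXQ⟩, hXY⟩
      have hXY' : X ≠ Y := by simpa using hXY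
      rcases eq_or_ne X Q with rfl | hXQ'
      · exact ⟨hXS, hYQ', hXQ⟩
      · have : Y ⊆ X := hYle X ⟨⟨hXS, hPX, hXQ⟩, by simp [hXQ']⟩
        exact ⟨hXS, ssubset_of_subset_of_ne this hXY'.symm, hXQ⟩
  have hDnY : Dn S Y Q = n - 1 := by
    unfold Dn
    rw [hBY, Set.ncard_diff_singleton_of_mem (show Y ∈ B from ⟨hYS, hPY, hYQ⟩), hcard]
  obtain ⟨X, hXS, hYX, hXQ, hXk⟩ :=
    IH (n - 1) (by omega) Y hYS hYQ' hDnY k hk1 (by omega)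
  exact ⟨X, hXS, hPY.le.trans hYX, hXQ, hXk⟩

end Rank

section MeasureBound

variable {d : ℕ} {𝒟 : DyadicLattice d} {S : Set (Set (Rd d))}

lemma layer_bound (hS𝒟 : S ⊆ 𝒟.cubes) {η : ℝ} (hS : IsSparse η S) {Q : Set (Rd d)}
    (hQ : Q ∈ S) :
    ∀ k : ℕ, 1 ≤ k →
      volume (⋃ P ∈ {P | P ∈ S ∧ P ⊂ Q ∧ Dn S P Q = k}, P) ≤
        ENNReal.ofReal (1 - η) ^ k * volume Q := by
  set G : ℕ → Set (Set (Rd d)) := fun k => {P | P ∈ S ∧ P ⊂ Q ∧ Dn S P Q = k} with hG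
  have hGdis : ∀ k, (G k).PairwiseDisjoint id := by
    intro k P hP P' hP' hne
    rw [Function.onFun, Set.disjoint_iff_inter_eq_empty]
    by_contra hcon
    rw [← Ne, ← Set.nonempty_iff_ne_empty] at hcon
    have key : ∀ A B : Set (Rd d), A ∈ G k → B ∈ G k → A ⊂ B → False := by
      intro A B hA hB hAB
      have hsub : {X | X ∈ S ∧ B ⊂ X ∧ X ⊆ Q} ⊂ {X | X ∈ S ∧ A ⊂ X ∧ X ⊆ Q} := by
        constructor
        · rintro X ⟨hXS, hBX, hXQ⟩
          exact ⟨hXS, lt_trans hAB hBX, hXQ⟩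
        · intro hsub'
          have hBmem : B ∈ {X | X ∈ S ∧ A ⊂ X ∧ X ⊆ Q} := ⟨hB.1, hAB, hB.2.1.le⟩
          exact lt_irrefl B (hsub' hBmem).2.1
      have := Set.ncard_lt_ncard hsub (Dn_finite hS𝒟 hA.1 hQ)
      have h1 : Dn S B Q = k := hB.2.2
      have h2 : Dn S A Q = k := hA.2.2
      unfold Dn at h1 h2
      omega
    rcases S_comp hS𝒟 hP.1 hP'.1 hcon with h | h
    · exact key P P' hP hP' (ssubset_of_subset_of_ne h hne)
    · exact key P' P hP' hP (ssubset_of_subset_of_ne h (Ne.symm hne))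
  have hGcnt : ∀ k, (G k).Countable := by
    intro k
    exact (hGdis k).countable_of_nonempty_interior
      (fun t ht => isCube_interior_nonempty (𝒟.isCube t (hS𝒟 ht.1)))
  have hGvol : ∀ k, volume (⋃ P ∈ G k, P) = ∑' P : (G k), volume (P : Set (Rd d)) := by
    intro k
    exact measure_biUnion (hGcnt k) (hGdis k)
      (fun P hP => isCube_measurable (𝒟.isCube P (hS𝒟 hP.1)))
  intro k hk
  induction k, hk using Nat.le_induction with
  | base =>
    have hsub : (⋃ P ∈ G 1, P) ⊆ ⋃ Q' ∈ {Q' | Q' ∈ S ∧ Q' ⊂ Q}, Q' :=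
      Set.biUnion_subset_biUnion_left (fun P hP => ⟨hP.1, hP.2.1⟩)
    calc volume (⋃ P ∈ G 1, P) ≤ volume (⋃ Q' ∈ {Q' | Q' ∈ S ∧ Q' ⊂ Q}, Q') :=
          measure_mono hsub
      _ ≤ ENNReal.ofReal (1 - η) * volume Q := hS Q hQ
      _ = ENNReal.ofReal (1 - η) ^ 1 * volume Q := by rw [pow_one]
  | succ k hk IH =>
    have cover : (⋃ P ∈ G (k + 1), P) ⊆
        ⋃ X ∈ G k, (⋃ Y ∈ {Y | Y ∈ S ∧ Y ⊂ X}, Y) := by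
      intro x hx
      rw [Set.mem_iUnion₂] at hx
      obtain ⟨P, hPG, hxP⟩ := hx
      obtain ⟨X, hXS, hPX, hXQ, hXk⟩ :=
        rank_exists hS𝒟 hQ (k + 1) P hPG.1 hPG.2.1 hPG.2.2 k (by omega) (by omega)
      have hPXne : P ≠ X := by
        intro h
        rw [h] at hPG
        have := hPG.2.2
        omega
      rw [Set.mem_iUnion₂]
      exact ⟨X, ⟨hXS, hXQ, hXk⟩,
        Set.mem_biUnion (show P ∈ {Y | Y ∈ S ∧ Y ⊂ X} from
          ⟨hPG.1, ssubset_of_subset_of_ne hPX hPXne⟩) hxP⟩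
    calc volume (⋃ P ∈ G (k + 1), P)
        ≤ volume (⋃ X ∈ G k, (⋃ Y ∈ {Y | Y ∈ S ∧ Y ⊂ X}, Y)) := measure_mono cover
      _ ≤ ∑' X : (G k), volume (⋃ Y ∈ {Y | Y ∈ S ∧ Y ⊂ (X : Set (Rd d))}, Y) :=
          measure_biUnion_le volume (hGcnt k) _
      _ ≤ ∑' X : (G k), ENNReal.ofReal (1 - η) * volume (X : Set (Rd d)) :=
          ENNReal.tsum_le_tsum (fun X => hS X.1 X.2.1)
      _ = ENNReal.ofReal (1 - η) * ∑' X : (G k), volume (X : Set (Rd d)) :=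
          ENNReal.tsum_mul_left
      _ = ENNReal.ofReal (1 - η) * volume (⋃ P ∈ G k, P) := by rw [hGvol k]
      _ ≤ ENNReal.ofReal (1 - η) * (ENNReal.ofReal (1 - η) ^ k * volume Q) :=
          mul_le_mul_right IH _
      _ = ENNReal.ofReal (1 - η) ^ (k + 1) * volume Q := by ring

end MeasureBound

lemma sparse_num {η : ℝ} (hη0 : 0 < η) (hη1 : η < 1) {m : ℕ} (hm : 2 ≤ m) :
    (1 - η) ^ m ≤ 1 - (m : ℝ) / (m + 1 / η - 1) := by
  have hmR : (2:ℝ) ≤ (m:ℝ) := by exact_mod_cast hm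
  have h1η : 1 < 1 / η := by
    rw [lt_div_iff₀ hη0]; linarith
  have hD : 0 < (m:ℝ) + 1 / η - 1 := by linarith
  have hden : 0 < 1 + η * ((m:ℝ) - 1) := by nlinarith
  have hrw : 1 - (m:ℝ) / ((m:ℝ) + 1 / η - 1) = (1 - η) / (1 + η * ((m:ℝ) - 1)) := by
    have hDη : (m:ℝ) * η + 1 - η ≠ 0 := by nlinarith
    rw [eq_div_iff hden.ne']
    field_simp [hη0.ne', hD.ne']
    ring
  obtain ⟨n, rfl⟩ : ∃ n, m = n + 1 := ⟨m - 1, by omega⟩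
  have hcast : 1 + η * ((((n+1):ℕ):ℝ) - 1) = 1 + (n:ℝ) * η := by push_cast; ring
  have hber : 1 + (n:ℝ) * η ≤ (1 + η) ^ n := one_add_mul_le_pow (by linarith) n
  have hmain : (1 - η) ^ n * (1 + η * ((((n+1):ℕ):ℝ) - 1)) ≤ 1 := by
    calc (1 - η) ^ n * (1 + η * ((((n+1):ℕ):ℝ) - 1))
        ≤ (1 - η) ^ n * (1 + η) ^ n := by
          rw [hcast]
          exact mul_le_mul_of_nonneg_left hber (pow_nonneg (by linarith) n)
      _ = ((1 - η) * (1 + η)) ^ n := (mul_pow _ _ _).symm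
      _ = (1 - η ^ 2) ^ n := by ring_nf
      _ ≤ 1 := pow_le_one₀ (by nlinarith) (by nlinarith)
  rw [hrw, le_div_iff₀ hden]
  calc (1 - η) ^ (n + 1) * (1 + η * ((((n+1):ℕ):ℝ) - 1))
      = (1 - η) * ((1 - η) ^ n * (1 + η * ((((n+1):ℕ):ℝ) - 1))) := by ring
    _ ≤ (1 - η) * 1 := mul_le_mul_of_nonneg_left hmain (by linarith)
    _ = 1 - η := mul_one _


/-- Lemma 2.2 (Lerner–Nazarov): an `η`-sparse family can be split into `m` families,
each of which is `m/(m + 1/η - 1)`-sparse. -/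
theorem stmt19 (d : ℕ) (𝒟 : DyadicLattice d) (S : Set (Set (Rd d)))
    (hS𝒟 : S ⊆ 𝒟.cubes) (η : ℝ) (hη0 : 0 < η) (hη1 : η < 1)
    (hS : IsSparse η S) (m : ℕ) (hm : 2 ≤ m) :
    ∃ T : Fin m → Set (Set (Rd d)),
      (∀ i j, i ≠ j → Disjoint (T i) (T j)) ∧
      (⋃ i, T i) = S ∧
      ∀ i, IsSparse ((m : ℝ) / (m + 1 / η - 1)) (T i) := by
  have hm0 : (0:ℤ) < (m:ℤ) := by exact_mod_cast Nat.lt_of_lt_of_le Nat.zero_lt_two hm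
  set T : Fin m → Set (Set (Rd d)) :=
    fun i => {Q | Q ∈ S ∧ hgt S Q % (m:ℤ) = (i:ℤ)} with hT
  refine ⟨T, ?_, ?_, ?_⟩
  · intro i j hij
    rw [Set.disjoint_left]
    rintro Q ⟨-, h1⟩ ⟨-, h2⟩
    exact hij (Fin.ext (by exact_mod_cast h1.symm.trans h2))
  · ext Q
    simp only [Set.mem_iUnion]
    constructor
    · rintro ⟨i, hQ, -⟩
      exact hQ
    · intro hQ
      have h0 : 0 ≤ hgt S Q % (m:ℤ) := Int.emod_nonneg _ hm0.ne'
      have hlt : hgt S Q % (m:ℤ) < m := Int.emod_lt_of_pos _ hm0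
      refine ⟨⟨(hgt S Q % (m:ℤ)).toNat, by omega⟩, hQ, ?_⟩
      show hgt S Q % (m:ℤ) = (((hgt S Q % (m:ℤ)).toNat : ℕ) : ℤ)
      omega
  · intro i Q hQT
    obtain ⟨hQS, hQi⟩ := hQT
    have hsub : (⋃ Q' ∈ {Q' | Q' ∈ T i ∧ Q' ⊂ Q}, Q') ⊆
        ⋃ P ∈ {P | P ∈ S ∧ P ⊂ Q ∧ Dn S P Q = m}, P := by
      intro x hx
      rw [Set.mem_iUnion₂] at hx
      obtain ⟨Q', ⟨⟨hQ'S, hQ'i⟩, hss⟩, hx⟩ := hx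
      have hstep := hgt_step hS𝒟 hQ'S hQS hss
      have hmodeq : Int.ModEq (m:ℤ) (hgt S Q') (hgt S Q) := hQ'i.trans hQi.symm
      have hdvd' : (m:ℤ) ∣ hgt S Q - hgt S Q' := hmodeq.dvd
      have hdvd : (m:ℤ) ∣ (Dn S Q' Q : ℤ) := by
        rw [hstep] at hdvd'
        have : hgt S Q - (hgt S Q + (Dn S Q' Q : ℤ)) = -(Dn S Q' Q : ℤ) := by ring
        rw [this] at hdvd'
        exact (Int.dvd_neg).mp hdvd'
      have hpos : 0 < Dn S Q' Q :=
        (Set.ncard_pos (Dn_finite hS𝒟 hQ'S hQS)).mpr ⟨Q, hQS, hss, subset_rfl⟩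
      have hDn : m ≤ Dn S Q' Q :=
        Nat.le_of_dvd hpos (by exact_mod_cast hdvd)
      obtain ⟨X, hXS, hQ'X, hXQ, hXm⟩ :=
        rank_exists hS𝒟 hQS (Dn S Q' Q) Q' hQ'S hss rfl m (by omega) hDn
      rw [Set.mem_iUnion₂]
      exact ⟨X, ⟨hXS, hXQ, hXm⟩, hQ'X hx⟩
    calc volume (⋃ Q' ∈ {Q' | Q' ∈ T i ∧ Q' ⊂ Q}, Q')
        ≤ volume (⋃ P ∈ {P | P ∈ S ∧ P ⊂ Q ∧ Dn S P Q = m}, P) := measure_mono hsub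
      _ ≤ ENNReal.ofReal (1 - η) ^ m * volume Q := layer_bound hS𝒟 hS hQS m (by omega)
      _ ≤ ENNReal.ofReal (1 - (m:ℝ) / ((m:ℝ) + 1 / η - 1)) * volume Q := by
          apply mul_le_mul_left
          rw [← ENNReal.ofReal_pow (by linarith)]
          exact ENNReal.ofReal_le_ofReal (sparse_num hη0 hη1 hm)
end
end
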